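/- arXiv:2412.08814 — 5 statements merged into one kernel-verified Lean document; each statement's English description precedes it below -/
import Mathlib

section
/- Let d ≥ 1, R ≥ 1, a > 0, ξ > 0, and ε > 0. Suppose g : [0,∞) → [0,∞) satisfies g(s) ≤ (1+s)^{-(a+ε)} for all s ≥ 0. Then there is a constant C = C(d,a,ε) > 0 (independent of R, ξ, x and g) such that for all x ∈ ℤ^d with |x| ≤ R/2, one has ∑_{u ∈ ℤ^d, u ≠ 0} |x + Ru|^{-(d-a)} · g(|x + Ru|/ξ) ≤ C ξ^a / R^d. -/
open scoped ENNReal NNReal BigOperators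

/-- The ℓ∞ norm of a lattice point `x ∈ ℤ^d`, as a real number. -/
noncomputable def linf {d : ℕ} (x : Fin d → ℤ) : ℝ :=
  ((Finset.univ.sup fun i => (x i).natAbs : ℕ) : ℝ)


lemma amgm {s r : ℝ} (hs : 0 ≤ s) (hs1 : s ≤ 1) (hr : 0 ≤ r) :
    r ^ s ≤ 1 - s + s * r := by
  have h := Real.geom_mean_le_arith_mean2_weighted (w₁ := s) (w₂ := 1 - s)
    (p₁ := r) (p₂ := 1) hs (by linarith) hr zero_le_one (by ring)
  rw [Real.one_rpow, mul_one, mul_one] at h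
  linarith

lemma tele_up {a : ℝ} (ha : 0 < a) (ha1 : a ≤ 1) {n : ℕ} (hn : 1 ≤ n) :
    a * (n : ℝ) ^ (a - 1) ≤ (n : ℝ) ^ a - ((n - 1 : ℕ) : ℝ) ^ a := by
  have hn0 : (0 : ℝ) < n := by exact_mod_cast hn
  have hcast : ((n - 1 : ℕ) : ℝ) = (n : ℝ) - 1 := by
    push_cast [hn]; ring
  set r : ℝ := ((n : ℝ) - 1) / n with hr
  have hr0 : 0 ≤ r := by
    apply div_nonneg _ hn0.le
    have : (1:ℝ) ≤ n := by exact_mod_cast hn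
    linarith
  have hrn : ((n - 1 : ℕ) : ℝ) = r * n := by
    rw [hcast, hr]; field_simp
  have h1 : ((n - 1 : ℕ) : ℝ) ^ a = r ^ a * (n : ℝ) ^ a := by
    rw [hrn, Real.mul_rpow hr0 hn0.le]
  have h2 : r ^ a ≤ 1 - a + a * r := amgm ha.le ha1 hr0
  have h3 : ((n - 1 : ℕ) : ℝ) ^ a ≤ (1 - a + a * r) * (n : ℝ) ^ a := by
    rw [h1]
    exact mul_le_mul_of_nonneg_right h2 (Real.rpow_nonneg hn0.le a)
  have h4 : (1 - a + a * r) * (n : ℝ) ^ a = (n:ℝ)^a - a * ((n:ℝ)^a / n) := by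
    rw [hr]; field_simp; ring
  have h5 : (n:ℝ) ^ a / n = (n:ℝ) ^ (a - 1) := by
    rw [Real.rpow_sub hn0, Real.rpow_one]
  rw [h4, h5] at h3
  linarith

lemma tele_down {s : ℝ} (hs : 0 < s) (hs1 : s ≤ 1) {n : ℕ} (hn : 1 ≤ n) :
    (s / 2) * (n : ℝ) ^ (-(1 + s)) ≤ (n : ℝ) ^ (-s) - ((n + 1 : ℕ) : ℝ) ^ (-s) := by
  have hn0 : (0 : ℝ) < n := by exact_mod_cast hn
  have hn1 : (0 : ℝ) < (n : ℝ) + 1 := by linarith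
  set r : ℝ := (n : ℝ) / ((n : ℝ) + 1) with hr
  have hr0 : 0 ≤ r := div_nonneg hn0.le hn1.le
  have h1 : ((n + 1 : ℕ) : ℝ) ^ (-s) = (n : ℝ) ^ (-s) * r ^ s := by
    push_cast
    rw [hr, Real.div_rpow hn0.le hn1.le, Real.rpow_neg hn0.le]
    rw [Real.rpow_neg hn1.le]
    field_simp
  have h2 : r ^ s ≤ 1 - s + s * r := amgm hs.le hs1 hr0
  have h3 : 1 - r = 1 / ((n:ℝ) + 1) := by rw [hr]; field_simp; ring
  have h4 : s * (1 - r) ≤ 1 - r ^ s := by linarith [h2]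
  have h5 : (1:ℝ) / (2 * n) ≤ 1 / ((n:ℝ)+1) := by
    apply div_le_div_of_nonneg_left one_pos.le (by linarith)
    have : (1:ℝ) ≤ n := by exact_mod_cast hn
    linarith
  have hnsp : 0 < (n:ℝ) ^ (-s) := Real.rpow_pos_of_pos hn0 _
  have h6 : (n : ℝ) ^ (-s) - ((n + 1 : ℕ) : ℝ) ^ (-s) = (n:ℝ)^(-s) * (1 - r ^ s) := by
    rw [h1]; ring
  have h7 : (n:ℝ)^(-s) * (s * (1 / (2 * n))) ≤ (n:ℝ)^(-s) * (1 - r ^ s) := by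
    apply mul_le_mul_of_nonneg_left _ hnsp.le
    calc s * (1 / (2*n)) ≤ s * (1/((n:ℝ)+1)) :=
          mul_le_mul_of_nonneg_left h5 hs.le
      _ = s * (1 - r) := by rw [h3]
      _ ≤ 1 - r ^ s := h4
  have h8 : (n:ℝ)^(-s) * (s * (1 / (2 * n))) = (s/2) * (n:ℝ) ^ (-(1+s)) := by
    have : (n:ℝ) ^ (-(1+s)) = (n:ℝ)^(-s) * (n:ℝ)⁻¹ := by
      rw [show -(1+s) = -s + (-1) by ring, Real.rpow_add hn0, Real.rpow_neg_one]
    rw [this]; field_simp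
  rw [h6, ← h8]
  exact h7
lemma part1 {a M : ℝ} (ha : 0 < a) {K : ℕ} (hKM : (K : ℝ) ≤ M) :
    ∑ i ∈ Finset.range K, ((i + 1 : ℕ) : ℝ) ^ (a - 1) ≤ (1 + 1 / a) * M ^ a := by
  have hM0 : 0 ≤ M := le_trans (by positivity) hKM
  rcases Nat.eq_zero_or_pos K with hK | hK
  · subst hK; simp; positivity
  have hM1 : (1 : ℝ) ≤ M := le_trans (by exact_mod_cast hK) hKM
  have hMa : (0:ℝ) ≤ M ^ a := Real.rpow_nonneg hM0 a
  rcases le_or_gt a 1 with ha1 | ha1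
  · -- a ≤ 1 : telescoping
    have hterm : ∀ i ∈ Finset.range K, ((i + 1 : ℕ) : ℝ) ^ (a - 1) ≤
        (1/a) * (((i+1:ℕ):ℝ) ^ a - ((i:ℕ):ℝ) ^ a) := by
      intro i _
      have h := tele_up ha ha1 (n := i + 1) (Nat.le_add_left 1 i)
      have hsimp : ((i + 1 - 1 : ℕ) : ℝ) = (i : ℕ) := by norm_num
      rw [hsimp] at h
      have hh : ((i+1:ℕ):ℝ)^(a-1) ≤ (((i+1:ℕ):ℝ)^a - ((i:ℕ):ℝ)^a)/a := by
        rw [le_div_iff₀ ha]; linarith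
      rw [one_div_mul_eq_div]
      exact hh
    calc ∑ i ∈ Finset.range K, ((i + 1 : ℕ) : ℝ) ^ (a - 1)
        ≤ ∑ i ∈ Finset.range K, (1/a) * (((i+1:ℕ):ℝ) ^ a - ((i:ℕ):ℝ) ^ a) :=
          Finset.sum_le_sum hterm
      _ = (1/a) * ∑ i ∈ Finset.range K, ((((i+1:ℕ)):ℝ) ^ a - ((i:ℕ):ℝ) ^ a) := by
          rw [Finset.mul_sum]
      _ = (1/a) * (((K:ℕ):ℝ) ^ a - ((0:ℕ):ℝ) ^ a) := by
          rw [Finset.sum_range_sub (f := fun i => ((i:ℕ):ℝ) ^ a)]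
      _ ≤ (1/a) * M ^ a := by
          have : ((0:ℕ):ℝ) ^ a = 0 := by
            simp [Real.zero_rpow ha.ne']
          rw [this, sub_zero]
          have : ((K:ℕ):ℝ) ^ a ≤ M ^ a := Real.rpow_le_rpow (by positivity) hKM ha.le
          have h1a : (0:ℝ) ≤ 1/a := by positivity
          exact mul_le_mul_of_nonneg_left this h1a
      _ ≤ (1 + 1/a) * M ^ a := by
          have h0 : (0:ℝ) ≤ M ^ a := hMa
          nlinarith [hMa, ha]
  · -- a > 1
    have hM0' : 0 < M := by linarith
    have hterm : ∀ i ∈ Finset.range K, ((i + 1 : ℕ) : ℝ) ^ (a - 1) ≤ M ^ (a - 1) := by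
      intro i hi
      apply Real.rpow_le_rpow (by positivity) _ (by linarith)
      have : (i + 1 : ℕ) ≤ K := Finset.mem_range.1 hi
      calc ((i+1:ℕ):ℝ) ≤ (K:ℝ) := by exact_mod_cast this
        _ ≤ M := hKM
    calc ∑ i ∈ Finset.range K, ((i + 1 : ℕ) : ℝ) ^ (a - 1)
        ≤ ∑ _i ∈ Finset.range K, M ^ (a-1) := Finset.sum_le_sum hterm
      _ = (K : ℝ) * M ^ (a-1) := by rw [Finset.sum_const, Finset.card_range]; ring
      _ ≤ M * M ^ (a-1) := by
          apply mul_le_mul_of_nonneg_right hKM (Real.rpow_nonneg hM0 _)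
      _ = M ^ a := by
          rw [← Real.rpow_one_add' (by positivity) (by intro h; linarith)]
          ring_nf
      _ ≤ (1 + 1/a) * M ^ a := by
          have h0 : (0:ℝ) ≤ (1/a) * M ^ a := by positivity
          linarith

lemma part2 {s : ℝ} (hs : 0 < s) (hs1 : s ≤ 1) (K : ℕ) :
    ∑' n : ℕ, ((n + K + 1 : ℕ) : ℝ) ^ (-(1 + s)) ≤ (2 / s) * ((K + 1 : ℕ) : ℝ) ^ (-s) := by
  have h0 : Summable (fun m : ℕ => (m:ℝ) ^ (-(1+s))) :=
    Real.summable_nat_rpow.2 (by linarith)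
  have h1 := (summable_nat_add_iff (f := fun m : ℕ => (m:ℝ) ^ (-(1+s))) (K+1)).2 h0
  have hsum : Summable (fun n : ℕ => ((n + K + 1 : ℕ):ℝ) ^ (-(1+s))) := by
    refine h1.congr fun n => ?_
    norm_num [add_assoc]
  refine Summable.tsum_le_of_sum_range_le hsum ?_
  intro N
  have hterm : ∀ i ∈ Finset.range N, ((i + K + 1 : ℕ) : ℝ) ^ (-(1 + s)) ≤
      (2/s) * (((i + K + 1 : ℕ):ℝ) ^ (-s) - ((i + K + 2 : ℕ):ℝ) ^ (-s)) := by
    intro i _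
    have h := tele_down hs hs1 (n := i + K + 1) (Nat.le_add_left 1 _)
    have hco : ((i + K + 1 + 1 : ℕ) : ℝ) = ((i + K + 2 : ℕ) : ℝ) := by push_cast; ring
    rw [hco] at h
    have h2s : (0:ℝ) < 2/s := by positivity
    calc ((i + K + 1 : ℕ) : ℝ) ^ (-(1 + s))
        = (2/s) * ((s/2) * ((i + K + 1 : ℕ) : ℝ) ^ (-(1 + s))) := by
          field_simp
      _ ≤ (2/s) * (((i + K + 1 : ℕ):ℝ) ^ (-s) - ((i + K + 2 : ℕ):ℝ) ^ (-s)) :=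
          mul_le_mul_of_nonneg_left h h2s.le
  calc ∑ i ∈ Finset.range N, ((i + K + 1 : ℕ) : ℝ) ^ (-(1 + s))
      ≤ ∑ i ∈ Finset.range N,
          (2/s) * (((i + K + 1 : ℕ):ℝ) ^ (-s) - ((i + K + 2 : ℕ):ℝ) ^ (-s)) :=
        Finset.sum_le_sum hterm
    _ = (2/s) * ∑ i ∈ Finset.range N,
          ((fun j => ((j + K + 1 : ℕ):ℝ) ^ (-s)) i - (fun j => ((j + K + 1 : ℕ):ℝ) ^ (-s)) (i+1)) := by
        rw [Finset.mul_sum]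
        congr 1; funext i
        congr 3
        push_cast; ring
    _ = (2/s) * (((0 + K + 1 : ℕ):ℝ) ^ (-s) - ((N + K + 1 : ℕ):ℝ) ^ (-s)) := by
        rw [Finset.sum_range_sub' (f := fun j => ((j + K + 1 : ℕ):ℝ) ^ (-s))]
    _ ≤ (2/s) * ((K + 1 : ℕ):ℝ) ^ (-s) := by
        have h1 : (0:ℝ) ≤ ((N + K + 1 : ℕ):ℝ) ^ (-s) := by positivity
        have h2 : (0:ℝ) ≤ 2/s := by positivity
        have : ((0 + K + 1 : ℕ):ℝ) = ((K+1:ℕ):ℝ) := by norm_num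
        rw [this]
        nlinarith
lemma oneDim {a ε M : ℝ} (ha : 0 < a) (hε : 0 < ε) (hM : 0 < M) :
    Summable (fun n : ℕ => (n : ℝ) ^ (a - 1) * min 1 ((M / n) ^ (a + ε))) ∧
    ∑' n : ℕ, (n : ℝ) ^ (a - 1) * min 1 ((M / n) ^ (a + ε)) ≤
      (1 + 1 / a + 2 / min ε 1) * M ^ a := by
  set ε' := min ε 1 with hε'def
  have hε'0 : 0 < ε' := lt_min hε one_pos
  have hε'1 : ε' ≤ 1 := min_le_right _ _
  have hε'ε : ε' ≤ ε := min_le_left _ _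
  set φ : ℕ → ℝ := fun n => (n : ℝ) ^ (a - 1) * min 1 ((M / n) ^ (a + ε)) with hφdef
  set ψ : ℕ → ℝ := fun n => M ^ (a + ε') * (n : ℝ) ^ (-(1 + ε')) with hψdef
  have hφ0 : ∀ n : ℕ, 0 ≤ φ n := fun n =>
    mul_nonneg (Real.rpow_nonneg (Nat.cast_nonneg n) _)
      (le_min zero_le_one (Real.rpow_nonneg (by positivity) _))
  have hdom : ∀ n : ℕ, φ n ≤ ψ n := by
    intro n
    rcases Nat.eq_zero_or_pos n with h0 | h1
    · subst h0
      have hane : a + ε ≠ 0 := ne_of_gt (by positivity)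
      have hφz : φ 0 = 0 := by
        simp [hφdef, Real.zero_rpow hane]
      have hψz : ψ 0 = 0 := by
        have hne : -(1+ε') ≠ 0 := ne_of_lt (by linarith)
        simp only [hψdef, Nat.cast_zero]
        rw [Real.zero_rpow hne, mul_zero]
      rw [hφz, hψz]
    · have hn0 : (0:ℝ) < n := by exact_mod_cast h1
      have hmin : min 1 ((M / n) ^ (a + ε)) ≤ (M / n) ^ (a + ε') := by
        rcases le_or_gt (M / (n:ℝ)) 1 with h | h
        · exact (min_le_right _ _).trans
            (Real.rpow_le_rpow_of_exponent_ge (by positivity) h (by linarith))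
        · exact (min_le_left _ _).trans (Real.one_le_rpow h.le (by positivity))
      have e1 : (n:ℝ) ^ (a-1) / (n:ℝ) ^ (a+ε') = (n:ℝ) ^ (-(1+ε')) := by
        rw [← Real.rpow_sub hn0]; congr 1; ring
      calc φ n ≤ (n:ℝ) ^ (a-1) * (M / n) ^ (a + ε') :=
            mul_le_mul_of_nonneg_left hmin (Real.rpow_nonneg hn0.le _)
        _ = ψ n := by
            rw [hψdef]
            simp only []
            rw [Real.div_rpow hM.le hn0.le, ← e1]
            ring
  have hψsum : Summable ψ :=
    (Real.summable_nat_rpow.2 (by linarith : -(1+ε') < -1)).mul_left _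
  have hsum : Summable φ := Summable.of_nonneg_of_le hφ0 hdom hψsum
  refine ⟨hsum, ?_⟩
  set K := ⌊M⌋₊ with hK
  have hsplit := (Summable.sum_add_tsum_nat_add (f := φ) (K+1) hsum).symm
  rw [hsplit]
  have hφzero : φ 0 = 0 := by
    have hane : a + ε ≠ 0 := ne_of_gt (by positivity)
    simp [hφdef, Real.zero_rpow hane]
  have hhead : ∑ i ∈ Finset.range (K+1), φ i ≤ (1 + 1/a) * M ^ a := by
    rw [Finset.sum_range_succ' (f := φ), hφzero, add_zero]
    have hb : ∀ i ∈ Finset.range K, φ (i+1) ≤ ((i+1:ℕ):ℝ) ^ (a-1) := by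
      intro i _
      have := mul_le_mul_of_nonneg_left (min_le_left 1 ((M / ((i+1:ℕ):ℝ)) ^ (a+ε)))
        (Real.rpow_nonneg (Nat.cast_nonneg (i+1)) (a-1))
      simpa [hφdef] using this
    exact (Finset.sum_le_sum hb).trans (part1 ha (Nat.floor_le hM.le))
  have htail : ∑' n : ℕ, φ (n + (K+1)) ≤ (2/ε') * M ^ a := by
    have hts : Summable (fun n : ℕ => φ (n + (K+1))) := (summable_nat_add_iff (K+1)).2 hsum
    have hts' : Summable (fun n : ℕ => ψ (n + (K+1))) := (summable_nat_add_iff (K+1)).2 hψsum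
    have h1 : ∑' n : ℕ, φ (n + (K+1)) ≤ ∑' n : ℕ, ψ (n + (K+1)) :=
      Summable.tsum_le_tsum (fun n => hdom _) hts hts'
    have h2 : ∑' n : ℕ, ψ (n + (K+1)) = M ^ (a+ε') * ∑' n : ℕ, ((n + K + 1 : ℕ):ℝ) ^ (-(1+ε')) := by
      rw [← tsum_mul_left]
      apply tsum_congr
      intro n
      have : n + (K + 1) = n + K + 1 := by omega
      rw [hψdef]
      simp only [this]
    have h3 : M ^ (a+ε') * ∑' n : ℕ, ((n + K + 1 : ℕ):ℝ) ^ (-(1+ε')) ≤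
        M ^ (a+ε') * ((2/ε') * ((K+1:ℕ):ℝ) ^ (-ε')) :=
      mul_le_mul_of_nonneg_left (part2 hε'0 hε'1 K) (Real.rpow_nonneg hM.le _)
    have h4 : M ^ (a+ε') * ((2/ε') * ((K+1:ℕ):ℝ) ^ (-ε')) ≤ (2/ε') * M ^ a := by
      have hKM : M ≤ ((K+1:ℕ):ℝ) := by
        push_cast
        exact (Nat.lt_floor_add_one M).le
      have hK1 : (0:ℝ) < ((K+1:ℕ):ℝ) := by positivity
      have e5 : M ^ (a+ε') = M ^ a * M ^ ε' := Real.rpow_add hM _ _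
      have e6 : ((K+1:ℕ):ℝ) ^ (-ε') = (((K+1:ℕ):ℝ) ^ ε')⁻¹ := Real.rpow_neg hK1.le _
      have h7 : M ^ ε' ≤ ((K+1:ℕ):ℝ) ^ ε' := Real.rpow_le_rpow hM.le hKM hε'0.le
      have h8 : M ^ ε' * (((K+1:ℕ):ℝ) ^ ε')⁻¹ ≤ 1 := by
        rw [← div_eq_mul_inv, div_le_one (by positivity)]
        exact h7
      calc M ^ (a+ε') * ((2/ε') * ((K+1:ℕ):ℝ) ^ (-ε'))
          = (2/ε') * M ^ a * (M ^ ε' * (((K+1:ℕ):ℝ) ^ ε')⁻¹) := by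
            rw [e5, e6]; ring
        _ ≤ (2/ε') * M ^ a * 1 := by
            apply mul_le_mul_of_nonneg_left h8
            positivity
        _ = (2/ε') * M ^ a := by ring
    linarith
  have hMa : (0:ℝ) ≤ M ^ a := Real.rpow_nonneg hM.le a
  have : (1 + 1/a + 2/ε') * M ^ a = (1 + 1/a) * M ^ a + (2/ε') * M ^ a := by ring
  rw [this]
  exact add_le_add hhead htail

lemma shell_card {d : ℕ} (hd : 1 ≤ d) {n : ℕ} (hn : 1 ≤ n) :
    (((Fintype.piFinset fun _ : Fin d => Finset.Icc (-(n:ℤ)) (n:ℤ)) \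
       (Fintype.piFinset fun _ : Fin d => Finset.Icc (-((n-1:ℕ):ℤ)) ((n-1:ℕ):ℤ))).card : ℝ)
      ≤ 2 * d * 3^(d-1) * (n:ℝ)^(d-1) := by
  set B := Fintype.piFinset fun _ : Fin d => Finset.Icc (-(n:ℤ)) (n:ℤ) with hB
  set S := Fintype.piFinset fun _ : Fin d => Finset.Icc (-((n-1:ℕ):ℤ)) ((n-1:ℕ):ℤ) with hS
  have hsub : S ⊆ B := by
    apply Fintype.piFinset_subset
    intro i
    apply Finset.Icc_subset_Icc
    · have : ((n-1:ℕ):ℤ) ≤ (n:ℤ) := by exact_mod_cast Nat.sub_le n 1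
      omega
    · exact_mod_cast Nat.sub_le n 1
  have hcardB : B.card = (2*n+1)^d := by
    rw [hB, Fintype.card_piFinset]
    have : (Finset.Icc (-(n:ℤ)) (n:ℤ)).card = 2*n+1 := by
      rw [Int.card_Icc]; omega
    simp [this]
  have hcardS : S.card = (2*(n-1)+1)^d := by
    rw [hS, Fintype.card_piFinset]
    have : (Finset.Icc (-((n-1:ℕ):ℤ)) ((n-1:ℕ):ℤ)).card = 2*(n-1)+1 := by
      rw [Int.card_Icc]; omega
    simp [this]
  have hle : S.card ≤ B.card := Finset.card_le_card hsub
  have hsdiff : (B \ S).card = B.card - S.card := Finset.card_sdiff_of_subset hsub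
  have hcast : ((B \ S).card : ℝ) = ((2*n+1:ℕ):ℝ)^d - ((2*(n-1)+1:ℕ):ℝ)^d := by
    rw [hsdiff, Nat.cast_sub hle, hcardB, hcardS]
    push_cast
    ring
  rw [hcast]
  set x : ℝ := ((2*n+1:ℕ):ℝ) with hx
  set y : ℝ := ((2*(n-1)+1:ℕ):ℝ) with hy
  have hy0 : 0 ≤ y := by positivity
  have hyx : y ≤ x := by
    rw [hx, hy]; exact_mod_cast by omega
  have hxy2 : x - y = 2 := by
    rw [hx, hy]
    have h1 : (2*(n-1)+1 : ℕ) = 2*n - 1 := by omega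
    rw [h1]
    have h2 : ((2*n-1 : ℕ):ℝ) = 2*(n:ℝ) - 1 := by
      have : (1:ℕ) ≤ 2*n := by omega
      push_cast [this]
      ring
    push_cast
    rw [h2]
    ring
  have hgeom := geom_sum₂_mul x y d
  have hterm : ∀ i ∈ Finset.range d, x^i * y^(d-1-i) ≤ x^(d-1) := by
    intro i hi
    have hid : i ≤ d - 1 := by
      have := Finset.mem_range.1 hi; omega
    calc x^i * y^(d-1-i) ≤ x^i * x^(d-1-i) := by
          apply mul_le_mul_of_nonneg_left (pow_le_pow_left₀ hy0 hyx _) (by positivity)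
      _ = x^(d-1) := by
          rw [← pow_add]
          congr 1
          omega
  have hsumle : ∑ i ∈ Finset.range d, x^i * y^(d-1-i) ≤ d * x^(d-1) := by
    calc ∑ i ∈ Finset.range d, x^i * y^(d-1-i) ≤ ∑ _i ∈ Finset.range d, x^(d-1) :=
          Finset.sum_le_sum hterm
      _ = d * x^(d-1) := by rw [Finset.sum_const, Finset.card_range]; simp
  have hxd : x^d - y^d ≤ 2 * d * x^(d-1) := by
    rw [← hgeom, hxy2]
    have hx0 : (0:ℝ) ≤ x^(d-1) := by positivity
    nlinarith [hsumle]
  have hx3n : x ≤ 3 * n := by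
    rw [hx]
    push_cast
    have : (1:ℝ) ≤ n := by exact_mod_cast hn
    linarith
  calc x^d - y^d ≤ 2 * d * x^(d-1) := hxd
    _ ≤ 2 * d * (3*(n:ℝ))^(d-1) := by
        apply mul_le_mul_of_nonneg_left (pow_le_pow_left₀ (by positivity) hx3n _) (by positivity)
    _ = 2 * d * 3^(d-1) * (n:ℝ)^(d-1) := by rw [mul_pow]; ring

lemma pointwise {d : ℕ} (hd : 1 ≤ d) {a ε : ℝ} (ha : 0 < a) (hε : 0 < ε)
    {R : ℕ} (hR : 1 ≤ R) {ξ : ℝ} (hξ : 0 < ξ)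
    {g : ℝ → ℝ} (hg0 : ∀ s, 0 ≤ s → 0 ≤ g s) (hg : ∀ s, 0 ≤ s → g s ≤ (1+s) ^ (-(a+ε)))
    {x : Fin d → ℤ} (hx : linf x ≤ (R:ℝ)/2)
    (u : Fin d → ℤ) (hu : u ≠ 0) :
    linf (x + R • u) ^ (-((d:ℝ) - a)) * g (linf (x + R • u) / ξ) ≤
      (2:ℝ) ^ (a + (d:ℝ)) *
        (((R:ℝ) * ((Finset.univ.sup fun i => (u i).natAbs : ℕ) : ℝ)) ^ (a - (d:ℝ)) *
          min 1 ((2*ξ/((R:ℝ) * ((Finset.univ.sup fun i => (u i).natAbs : ℕ) : ℝ))) ^ (a + ε))) := by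
  have hne : (Finset.univ : Finset (Fin d)).Nonempty := ⟨⟨0, hd⟩, Finset.mem_univ _⟩
  set n : ℕ := Finset.univ.sup fun i => (u i).natAbs with hndef
  have cast_abs : ∀ z : ℤ, ((z.natAbs : ℕ) : ℝ) = |(z:ℝ)| := fun z => by
    rw [Nat.cast_natAbs, Int.cast_abs]
  have hn1 : 1 ≤ n := by
    obtain ⟨j, hj⟩ := Function.ne_iff.1 hu
    have h1 : 1 ≤ (u j).natAbs := Int.natAbs_pos.2 hj
    have h2 : (u j).natAbs ≤ n := by
      rw [hndef]
      exact Finset.le_sup (f := fun i => (u i).natAbs) (Finset.mem_univ j)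
    exact le_trans h1 h2
  have hR0 : (0:ℝ) < R := by exact_mod_cast hR
  have hn0 : (0:ℝ) < n := by exact_mod_cast hn1
  have hn1' : (1:ℝ) ≤ n := by exact_mod_cast hn1
  have hRn : (0:ℝ) < (R:ℝ) * n := by positivity
  set t : ℝ := linf (x + R • u) with htdef
  have happ : ∀ i, ((x + R • u) i) = x i + (R:ℤ) * u i := by
    intro i
    simp [Pi.add_apply, Pi.smul_apply, nsmul_eq_mul]
  have hcomp_le : ∀ (y : Fin d → ℤ) i, |((y i : ℤ):ℝ)| ≤ linf y := by
    intro y i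
    rw [linf, ← cast_abs (y i)]
    exact_mod_cast Finset.le_sup (f := fun i => (y i).natAbs) (Finset.mem_univ i)
  have hxi : ∀ i, |((x i : ℤ):ℝ)| ≤ (R:ℝ)/2 := fun i => (hcomp_le x i).trans hx
  have hui : ∀ i, |((u i : ℤ):ℝ)| ≤ (n:ℝ) := by
    intro i
    have h' : (u i).natAbs ≤ n := by
      rw [hndef]
      exact Finset.le_sup (f := fun i => (u i).natAbs) (Finset.mem_univ i)
    rw [← cast_abs (u i)]
    exact_mod_cast h'
  -- lower bound on t
  obtain ⟨j, -, hj⟩ := Finset.exists_mem_eq_sup Finset.univ hne (fun i => (u i).natAbs)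
  have huj : |((u j : ℤ):ℝ)| = (n:ℝ) := by
    have h' : (u j).natAbs = n := by rw [hndef, hj]
    rw [← cast_abs (u j), h']
  have htlow : (R:ℝ) * n / 2 ≤ t := by
    have h1 : ((( (x + R • u) j).natAbs : ℕ) : ℝ) ≤ t := by
      rw [htdef, linf]
      exact_mod_cast Finset.le_sup (f := fun i => ((x + R • u) i).natAbs) (Finset.mem_univ j)
    have h2 : (((x + R • u) j).natAbs : ℝ) = |((x j : ℝ) + (R:ℝ) * (u j : ℝ))| := by
      rw [cast_abs, happ j]
      push_cast
      ring_nf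
    have h3 : |(R:ℝ) * (u j : ℝ)| - |(x j : ℝ)| ≤ |((x j : ℝ) + (R:ℝ) * (u j : ℝ))| := by
      have := abs_sub_abs_le_abs_sub ((R:ℝ) * (u j : ℝ)) (-(x j : ℝ))
      simp only [abs_neg, sub_neg_eq_add] at this
      calc |(R:ℝ) * (u j:ℝ)| - |(x j:ℝ)| ≤ |(R:ℝ) * (u j:ℝ) + (x j:ℝ)| := this
        _ = |((x j:ℝ) + (R:ℝ) * (u j:ℝ))| := by rw [add_comm]
    have h4 : |(R:ℝ) * (u j : ℝ)| = (R:ℝ) * n := by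
      rw [abs_mul, abs_of_nonneg hR0.le, huj]
    have h5 : |(x j : ℝ)| ≤ (R:ℝ)/2 := hxi j
    have h6 : (R:ℝ)/2 ≤ (R:ℝ) * n / 2 := by nlinarith
    nlinarith [h1, h2 ▸ h3]
  have ht0 : 0 < t := lt_of_lt_of_le (by positivity) htlow
  -- upper bound on t
  have hthigh : t ≤ 2 * ((R:ℝ) * n) := by
    obtain ⟨k, -, hk⟩ := Finset.exists_mem_eq_sup Finset.univ hne
      (fun i => ((x + R • u) i).natAbs)
    have h1 : t = |((x k : ℝ) + (R:ℝ) * (u k : ℝ))| := by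
      rw [htdef, linf, hk, cast_abs, happ k]
      push_cast
      ring_nf
    have h2 : |((x k : ℝ) + (R:ℝ) * (u k : ℝ))| ≤ |(x k:ℝ)| + (R:ℝ) * |(u k:ℝ)| := by
      calc |((x k : ℝ) + (R:ℝ) * (u k : ℝ))| ≤ |(x k:ℝ)| + |(R:ℝ) * (u k:ℝ)| := abs_add_le _ _
        _ = |(x k:ℝ)| + (R:ℝ) * |(u k:ℝ)| := by rw [abs_mul, abs_of_nonneg hR0.le]
    have h3 : (R:ℝ) * |(u k:ℝ)| ≤ (R:ℝ) * n := mul_le_mul_of_nonneg_left (hui k) hR0.le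
    have h4 : |(x k:ℝ)| ≤ (R:ℝ)/2 := hxi k
    rw [h1]
    nlinarith
  -- bound on g
  have hgt : g (t/ξ) ≤ min 1 ((2*ξ/((R:ℝ)*n)) ^ (a+ε)) := by
    have hs0 : 0 ≤ t/ξ := by positivity
    have hg1 : g (t/ξ) ≤ (1 + t/ξ) ^ (-(a+ε)) := hg _ hs0
    refine le_min ?_ ?_
    · exact hg1.trans (Real.rpow_le_one_of_one_le_of_nonpos (by linarith) (by linarith))
    · have h2 : (1 + t/ξ) ^ (-(a+ε)) ≤ (t/ξ) ^ (-(a+ε)) :=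
        Real.rpow_le_rpow_of_nonpos (by positivity) (by linarith) (by linarith)
      have h3 : (t/ξ) ^ (-(a+ε)) = (ξ/t) ^ (a+ε) := by
        rw [Real.rpow_neg (by positivity), ← Real.inv_rpow (by positivity), inv_div]
      have h4 : (ξ/t) ^ (a+ε) ≤ (2*ξ/((R:ℝ)*n)) ^ (a+ε) := by
        apply Real.rpow_le_rpow (by positivity) _ (by linarith)
        calc ξ/t ≤ ξ/((R:ℝ)*n/2) :=
              div_le_div_of_nonneg_left hξ.le (by positivity) htlow
          _ = 2*ξ/((R:ℝ)*n) := by field_simp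
      exact hg1.trans (h2.trans (h3 ▸ h4))
  -- bound on t power
  have htpow : t ^ (a - (d:ℝ)) ≤ (2:ℝ) ^ (a + (d:ℝ)) * ((R:ℝ)*n) ^ (a - (d:ℝ)) := by
    rcases le_or_gt a d with had | had
    · have h1 : t ^ (a - (d:ℝ)) ≤ ((R:ℝ)*n/2) ^ (a - (d:ℝ)) :=
        Real.rpow_le_rpow_of_nonpos (by positivity) htlow (by linarith)
      have h2 : ((R:ℝ)*n/2) ^ (a - (d:ℝ)) = ((R:ℝ)*n) ^ (a - (d:ℝ)) * (2:ℝ) ^ ((d:ℝ) - a) := by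
        rw [Real.div_rpow (by positivity) (by norm_num)]
        rw [div_eq_mul_inv, ← Real.rpow_neg (by norm_num), neg_sub]
      have h3 : (2:ℝ) ^ ((d:ℝ) - a) ≤ (2:ℝ) ^ (a + (d:ℝ)) :=
        Real.rpow_le_rpow_of_exponent_le (by norm_num) (by linarith)
      calc t ^ (a - (d:ℝ)) ≤ ((R:ℝ)*n) ^ (a - (d:ℝ)) * (2:ℝ) ^ ((d:ℝ) - a) := h2 ▸ h1
        _ ≤ ((R:ℝ)*n) ^ (a - (d:ℝ)) * (2:ℝ) ^ (a + (d:ℝ)) := by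
            apply mul_le_mul_of_nonneg_left h3 (by positivity)
        _ = (2:ℝ) ^ (a + (d:ℝ)) * ((R:ℝ)*n) ^ (a - (d:ℝ)) := by ring
    · have h1 : t ^ (a - (d:ℝ)) ≤ (2*((R:ℝ)*n)) ^ (a - (d:ℝ)) :=
        Real.rpow_le_rpow ht0.le hthigh (by linarith)
      have h2 : (2*((R:ℝ)*n)) ^ (a - (d:ℝ)) = (2:ℝ) ^ (a - (d:ℝ)) * ((R:ℝ)*n) ^ (a - (d:ℝ)) :=
        Real.mul_rpow (by norm_num) (by positivity)
      have h3 : (2:ℝ) ^ (a - (d:ℝ)) ≤ (2:ℝ) ^ (a + (d:ℝ)) := by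
        apply Real.rpow_le_rpow_of_exponent_le (by norm_num)
        have : (0:ℝ) ≤ d := Nat.cast_nonneg d
        linarith
      calc t ^ (a - (d:ℝ)) ≤ (2:ℝ) ^ (a - (d:ℝ)) * ((R:ℝ)*n) ^ (a - (d:ℝ)) := h2 ▸ h1
        _ ≤ (2:ℝ) ^ (a + (d:ℝ)) * ((R:ℝ)*n) ^ (a - (d:ℝ)) := by
            apply mul_le_mul_of_nonneg_right h3 (by positivity)
  -- combine
  have hexp : -((d:ℝ) - a) = a - (d:ℝ) := by ring
  rw [hexp]
  calc t ^ (a - (d:ℝ)) * g (t/ξ)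
      ≤ ((2:ℝ) ^ (a + (d:ℝ)) * ((R:ℝ)*n) ^ (a - (d:ℝ))) * min 1 ((2*ξ/((R:ℝ)*n)) ^ (a+ε)) := by
        apply mul_le_mul htpow hgt (hg0 _ (by positivity)) (by positivity)
    _ = (2:ℝ) ^ (a + (d:ℝ)) * (((R:ℝ)*n) ^ (a - (d:ℝ)) * min 1 ((2*ξ/((R:ℝ)*n)) ^ (a+ε))) := by
        ring

/-- Lemma `periodic_sum`: for `g(s) ≤ (1+s)^{-(a+ε)}`, the periodic sum
`∑_{u ≠ 0} |x+Ru|^{-(d-a)} g(|x+Ru|/ξ)` is at most `C ξ^a / R^d`,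
uniformly in `R ≥ 1`, `ξ > 0`, `g`, and `|x| ≤ R/2`. -/
theorem periodic_sum_bound (d : ℕ) (hd : 1 ≤ d) (a ε : ℝ) (ha : 0 < a) (hε : 0 < ε) :
    ∃ C : ℝ, 0 < C ∧
      ∀ (R : ℕ), 1 ≤ R → ∀ (ξ : ℝ), 0 < ξ →
        ∀ g : ℝ → ℝ, (∀ s, 0 ≤ s → 0 ≤ g s) →
          (∀ s, 0 ≤ s → g s ≤ (1 + s) ^ (-(a + ε))) →
          ∀ x : Fin d → ℤ, linf x ≤ (R : ℝ) / 2 →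
            (∑' u : {u : Fin d → ℤ // u ≠ 0},
                ENNReal.ofReal
                  (linf (x + R • u.1) ^ (-((d : ℝ) - a)) *
                    g (linf (x + R • u.1) / ξ))) ≤
              ENNReal.ofReal (C * ξ ^ a / (R : ℝ) ^ d) := by
  classical
  have hd0 : (1:ℝ) ≤ (d:ℝ) := by exact_mod_cast hd
  set A : ℝ := 2 * d * 3^(d-1) with hAdef
  set B : ℝ := 1 + 1/a + 2/(min ε 1) with hBdef
  have hmin0 : 0 < min ε 1 := lt_min hε one_pos
  have hA0 : 0 < A := by
    have h2 : (0:ℝ) < (3:ℝ)^(d-1) := by positivity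
    rw [hAdef]; nlinarith
  have hB0 : 0 < B := by
    have h1 : 0 < 1/a := by positivity
    have h2 : 0 < 2/(min ε 1) := by positivity
    rw [hBdef]; linarith
  have h2pow : (0:ℝ) < (2:ℝ) ^ (2*a + (d:ℝ)) := Real.rpow_pos_of_pos two_pos _
  refine ⟨A * B * (2:ℝ) ^ (2*a + (d:ℝ)), by positivity, ?_⟩
  intro R hR ξ hξ g hg0 hg x hx
  have hR0 : (0:ℝ) < R := by exact_mod_cast hR
  set M : ℝ := 2*ξ/(R:ℝ) with hMdef
  have hM0 : 0 < M := by rw [hMdef]; positivity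
  obtain ⟨hsumφ, hφle⟩ := oneDim ha hε hM0
  set φ : ℕ → ℝ := fun n => (n:ℝ)^(a-1) * min 1 ((M/(n:ℝ))^(a+ε)) with hφdef
  have hφ0 : ∀ n : ℕ, 0 ≤ φ n := fun n =>
    mul_nonneg (Real.rpow_nonneg (Nat.cast_nonneg n) _)
      (le_min zero_le_one (Real.rpow_nonneg (by positivity) _))
  set c0 : ℝ := A * (2:ℝ)^(a+(d:ℝ)) * (R:ℝ)^(a-(d:ℝ)) with hc0def
  have hc00 : 0 ≤ c0 := by
    rw [hc0def]
    have := Real.rpow_nonneg hR0.le (a-(d:ℝ))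
    have := Real.rpow_nonneg (by norm_num : (0:ℝ) ≤ 2) (a+(d:ℝ))
    positivity
  set q : {u : Fin d → ℤ // u ≠ 0} → ℕ := fun u => Finset.univ.sup fun i => (u.1 i).natAbs
    with hqdef
  set F : {u : Fin d → ℤ // u ≠ 0} → ℝ≥0∞ := fun u =>
    ENNReal.ofReal (linf (x + R • u.1) ^ (-((d:ℝ) - a)) * g (linf (x + R • u.1) / ξ)) with hFdef
  set G : ℕ → ℝ≥0∞ := fun n => ENNReal.ofReal (c0 * φ n) with hGdef
  have hstep1 : ∑' u, F u = ∑' (n : ℕ), ∑' (p : {w : {u : Fin d → ℤ // u ≠ 0} // q w = n}),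
      F ((Equiv.sigmaFiberEquiv q) ⟨n, p⟩) := by
    rw [← (Equiv.sigmaFiberEquiv q).tsum_eq F, ENNReal.tsum_sigma']
  have hinner : ∀ n : ℕ, (∑' (p : {w : {u : Fin d → ℤ // u ≠ 0} // q w = n}),
      F ((Equiv.sigmaFiberEquiv q) ⟨n, p⟩)) ≤ G n := by
    intro n
    rcases Nat.eq_zero_or_pos n with hn | hn
    · subst hn
      have hempty : IsEmpty {w : {u : Fin d → ℤ // u ≠ 0} // q w = 0} := by
        constructor
        rintro ⟨⟨w, hw⟩, hq0⟩
        apply hw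
        funext i
        have hq0' : (Finset.univ.sup fun i => (w i).natAbs) = 0 := hq0
        have h1 : (w i).natAbs ≤ Finset.univ.sup fun i => (w i).natAbs :=
          Finset.le_sup (f := fun i => (w i).natAbs) (Finset.mem_univ i)
        have h2 : (w i).natAbs = 0 := by omega
        simpa using Int.natAbs_eq_zero.1 h2
      rw [tsum_eq_sum (s := (∅ : Finset _)) (fun b _ => (hempty.false b).elim),
        Finset.sum_empty]
      exact zero_le'
    · have hn1 : 1 ≤ n := hn
      have hn0 : (0:ℝ) < n := by exact_mod_cast hn
      set cn : ℝ≥0∞ := ENNReal.ofReal ((2:ℝ)^(a+(d:ℝ)) *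
        (((R:ℝ)*(n:ℝ))^(a-(d:ℝ)) * min 1 ((2*ξ/((R:ℝ)*(n:ℝ)))^(a+ε)))) with hcndef
    -- each term bounded by cn
      have hterm : ∀ p : {w : {u : Fin d → ℤ // u ≠ 0} // q w = n},
          F ((Equiv.sigmaFiberEquiv q) ⟨n, p⟩) ≤ cn := by
        intro p
        have he : ((Equiv.sigmaFiberEquiv q) ⟨n, p⟩) = p.1 := rfl
        rw [he, hFdef, hcndef]
        apply ENNReal.ofReal_le_ofReal
        have hp := pointwise hd ha hε hR hξ hg0 hg hx p.1.1 p.1.2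
        have hqn : ((Finset.univ.sup fun i => (p.1.1 i).natAbs : ℕ) : ℝ) = (n:ℝ) := by
          have : (Finset.univ.sup fun i => (p.1.1 i).natAbs) = n := p.2
          exact_mod_cast congrArg (fun m : ℕ => (m:ℝ)) this
        rw [hqn] at hp
        exact hp
      have hcard : (∑' (_p : {w : {u : Fin d → ℤ // u ≠ 0} // q w = n}), cn) ≤
          ENNReal.ofReal (A * (n:ℝ)^(d-1)) * cn := by
        set Sn := (Fintype.piFinset fun _ : Fin d => Finset.Icc (-(n:ℤ)) (n:ℤ)) \
          (Fintype.piFinset fun _ : Fin d => Finset.Icc (-((n-1:ℕ):ℤ)) ((n-1:ℕ):ℤ)) with hSndef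
        have hmem : ∀ p : {w : {u : Fin d → ℤ // u ≠ 0} // q w = n}, p.1.1 ∈ Sn := by
          intro p
          have hqn : (Finset.univ.sup fun i => (p.1.1 i).natAbs) = n := p.2
          rw [hSndef, Finset.mem_sdiff]
          constructor
          · rw [Fintype.mem_piFinset]
            intro i
            rw [Finset.mem_Icc]
            have h1 : (p.1.1 i).natAbs ≤ Finset.univ.sup fun i => (p.1.1 i).natAbs :=
              Finset.le_sup (f := fun i => (p.1.1 i).natAbs) (Finset.mem_univ i)
            omega
          · intro hcon
            rw [Fintype.mem_piFinset] at hcon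
            obtain ⟨j, -, hj⟩ := Finset.exists_mem_eq_sup Finset.univ
              ⟨⟨0, hd⟩, Finset.mem_univ _⟩ (fun i => (p.1.1 i).natAbs)
            have h2 : (p.1.1 j).natAbs = n := by omega
            have h3 := hcon j
            rw [Finset.mem_Icc] at h3
            have h4 : ((n-1:ℕ):ℤ) = (n:ℤ) - 1 := by
              push_cast [hn1]
              ring
            omega
        have hinj : Function.Injective
            (fun p : {w : {u : Fin d → ℤ // u ≠ 0} // q w = n} =>
              (⟨p.1.1, hmem p⟩ : {v // v ∈ Sn})) := by
          intro p p' hpp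
          simp only [Subtype.mk.injEq] at hpp
          exact Subtype.ext (Subtype.ext hpp)
        calc (∑' (_p : {w : {u : Fin d → ℤ // u ≠ 0} // q w = n}), cn)
            ≤ ∑' (_v : {v // v ∈ Sn}), cn :=
              ENNReal.tsum_comp_le_tsum_of_injective hinj (fun _ => cn)
          _ = (Sn.card : ℝ≥0∞) * cn := by
              rw [tsum_fintype, Finset.sum_const, Finset.card_univ, Fintype.card_coe,
                nsmul_eq_mul]
          _ ≤ ENNReal.ofReal (A * (n:ℝ)^(d-1)) * cn := by
              apply mul_le_mul_left
              rw [← ENNReal.ofReal_natCast]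
              apply ENNReal.ofReal_le_ofReal
              have hsc := shell_card (d := d) hd hn1
              rw [hAdef]
              exact hsc
      have hG : ENNReal.ofReal (A * (n:ℝ)^(d-1)) * cn ≤ G n := by
        have hAn0 : (0:ℝ) ≤ A * (n:ℝ)^(d-1) := by
          apply mul_nonneg hA0.le (by positivity)
        rw [hcndef, hGdef, ← ENNReal.ofReal_mul hAn0]
        apply ENNReal.ofReal_le_ofReal
        have e1 : ((R:ℝ)*(n:ℝ))^(a-(d:ℝ)) = (R:ℝ)^(a-(d:ℝ)) * (n:ℝ)^(a-(d:ℝ)) :=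
          Real.mul_rpow hR0.le hn0.le
        have e2 : (n:ℝ)^(d-1) = (n:ℝ)^(((d:ℝ))-1) := by
          rw [← Real.rpow_natCast (n:ℝ) (d-1)]
          congr 1
          push_cast [hd]
          ring
        have e3 : (n:ℝ)^(a-1) = (n:ℝ)^(((d:ℝ))-1) * (n:ℝ)^(a-(d:ℝ)) := by
          rw [← Real.rpow_add hn0]; congr 1; ring
        have e4 : 2*ξ/((R:ℝ)*(n:ℝ)) = M/(n:ℝ) := by
          rw [hMdef]; field_simp
        apply le_of_eq
        rw [hφdef, hc0def]
        simp only []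
        rw [e4, e1, e2, e3]
        ring
      calc (∑' (p : {w : {u : Fin d → ℤ // u ≠ 0} // q w = n}),
            F ((Equiv.sigmaFiberEquiv q) ⟨n, p⟩))
          ≤ ∑' (_p : {w : {u : Fin d → ℤ // u ≠ 0} // q w = n}), cn :=
            ENNReal.tsum_le_tsum hterm
        _ ≤ ENNReal.ofReal (A * (n:ℝ)^(d-1)) * cn := hcard
        _ ≤ G n := hG
  have hsum2 : ∑' u, F u ≤ ∑' n, G n := by
    rw [hstep1]; exact ENNReal.tsum_le_tsum hinner
  have hsum3 : ∑' (n:ℕ), G n = ENNReal.ofReal (c0 * ∑' n, φ n) := by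
    rw [hGdef]
    rw [← ENNReal.ofReal_tsum_of_nonneg (fun n => mul_nonneg hc00 (hφ0 n)) (hsumφ.mul_left c0)]
    congr 1
    exact tsum_mul_left
  have hfinal : ENNReal.ofReal (c0 * ∑' n, φ n) ≤
      ENNReal.ofReal ((A*B*(2:ℝ)^(2*a+(d:ℝ))) * ξ^a / (R:ℝ)^d) := by
    apply ENNReal.ofReal_le_ofReal
    have h9 : c0 * ∑' n, φ n ≤ c0 * (B * M^a) := by
      apply mul_le_mul_of_nonneg_left _ hc00
      rw [hBdef]
      exact hφle
    refine h9.trans (le_of_eq ?_)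
    have e5 : M^a = (2:ℝ)^a * ξ^a / (R:ℝ)^a := by
      rw [hMdef, Real.div_rpow (by positivity) hR0.le, Real.mul_rpow (by norm_num) hξ.le]
    have e6 : (R:ℝ)^(a-(d:ℝ)) = (R:ℝ)^a * (R:ℝ)^(-(d:ℝ)) := by
      rw [sub_eq_add_neg, Real.rpow_add hR0]
    have e7 : (R:ℝ)^(-(d:ℝ)) = ((R:ℝ)^d)⁻¹ := by
      simp [Real.rpow_neg hR0.le, Real.rpow_natCast]
    have e8 : (2:ℝ)^(2*a+(d:ℝ)) = (2:ℝ)^(a+(d:ℝ)) * (2:ℝ)^a := by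
      rw [← Real.rpow_add two_pos]; congr 1; ring
    have hRa : (0:ℝ) < (R:ℝ)^a := Real.rpow_pos_of_pos hR0 a
    have hRd : (0:ℝ) < ((R:ℝ):ℝ)^d := by positivity
    rw [hc0def, e5, e6, e7, e8]
    field_simp
  exact hsum2.trans (hsum3.le.trans hfinal)
end

section
/- Let d ≥ 1, α ∈ (0,2], and suppose G : ℤ^d → [0,∞) satisfies G(x) ≤ K⟨x⟩^{-(d-α)} g(|x|/ξ) for all x ∈ ℤ^d, where ξ > 0, K > 0, and g : [0,∞) → [0,∞) satisfies g(u) ≤ (1+u)^{-(α+ε)} for some ε > 0. Then there is a constant C = C(d,α,ε,K) > 0 such that for every integer R ≥ 1 and every x ∈ ℤ^d with |x| ≤ R/2, the unwrapped function Γ_R(x) = ∑_{u∈ℤ^d} G(x+Ru) satisfies Γ_R(x) ≤ C(⟨x⟩^{-(d-α)} + ξ^α/R^d). -/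
open scoped ENNReal NNReal BigOperators

/-- `⟨x⟩ = max{|x|, 1}`. -/
noncomputable def jap {d : ℕ} (x : Fin d → ℤ) : ℝ := max (linf x) 1

namespace UnwrappedAux

/-! ### Elementary real inequalities -/

lemma half_le_log_one_add {x : ℝ} (h0 : 0 ≤ x) (h1 : x ≤ 1) :
    x / 2 ≤ Real.log (1 + x) := by
  rw [Real.le_log_iff_exp_le (by linarith)]
  have hE := Real.exp_pos (x / 2)
  have h2 : 1 - x / 2 ≤ (Real.exp (x / 2))⁻¹ := by
    have h3 := Real.add_one_le_exp (-(x / 2))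
    rw [Real.exp_neg] at h3
    linarith
  have h3 : Real.exp (x / 2) * (1 - x / 2) ≤ 1 := by
    calc Real.exp (x / 2) * (1 - x / 2)
        ≤ Real.exp (x / 2) * (Real.exp (x / 2))⁻¹ :=
          mul_le_mul_of_nonneg_left h2 hE.le
      _ = 1 := mul_inv_cancel₀ hE.ne'
  nlinarith

lemma one_add_le_rpow {β x : ℝ} (hβ : 0 < β) (h0 : 0 ≤ x) (h1 : x ≤ 1) :
    1 + β * (x / 2) ≤ (1 + x) ^ β := by
  have hx : (0:ℝ) < 1 + x := by linarith
  rw [Real.rpow_def_of_pos hx]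
  have h2 := half_le_log_one_add h0 h1
  have h3 := Real.add_one_le_exp (Real.log (1 + x) * β)
  have h4 : β * (x / 2) ≤ Real.log (1 + x) * β := by
    have := mul_le_mul_of_nonneg_left h2 hβ.le
    nlinarith
  linarith

lemma rpow_fact {n : ℕ} (hn : 1 ≤ n) (β : ℝ) :
    ((n:ℝ) + 1) ^ β = (n:ℝ) ^ β * (1 + 1 / (n:ℝ)) ^ β := by
  have hnpos : (0:ℝ) < n := by exact_mod_cast hn
  rw [← Real.mul_rpow hnpos.le (by positivity)]
  congr 1
  field_simp

lemma telescope_up {β : ℝ} (hβ : 0 < β) (n : ℕ) (hn : 1 ≤ n) :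
    (n:ℝ) ^ (β - 1) ≤ 2 / β * (((n:ℝ) + 1) ^ β - (n:ℝ) ^ β) := by
  have hn' : (1:ℝ) ≤ (n:ℝ) := by exact_mod_cast hn
  have hnpos : (0:ℝ) < n := by linarith
  have hx0 : (0:ℝ) ≤ 1 / (n:ℝ) := by positivity
  have hx1 : 1 / (n:ℝ) ≤ 1 := by rw [div_le_one hnpos]; exact hn'
  have key := one_add_le_rpow hβ hx0 hx1
  have hp : (0:ℝ) < (n:ℝ) ^ β := Real.rpow_pos_of_pos hnpos β
  have hsub : (n:ℝ) ^ (β - 1) = (n:ℝ) ^ β / n := by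
    rw [Real.rpow_sub hnpos, Real.rpow_one]
  have hmul : (n:ℝ) ^ β * (1 + β * (1 / (n:ℝ) / 2)) ≤ ((n:ℝ) + 1) ^ β := by
    rw [rpow_fact hn β]
    exact mul_le_mul_of_nonneg_left key hp.le
  have heq : (n:ℝ) ^ β * (1 + β * (1 / (n:ℝ) / 2)) =
      (n:ℝ) ^ β + β / 2 * ((n:ℝ) ^ β / n) := by
    field_simp
  rw [hsub]
  rw [heq] at hmul
  have h5 : β / 2 * ((n:ℝ) ^ β / n) ≤ ((n:ℝ) + 1) ^ β - (n:ℝ) ^ β := by linarith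
  have h6 : (n:ℝ) ^ β / n = 2 / β * (β / 2 * ((n:ℝ) ^ β / n)) := by
    field_simp
  rw [h6]
  exact mul_le_mul_of_nonneg_left h5 (by positivity)

lemma sum_L1 {α : ℝ} (hα : 0 < α) (M : ℕ) :
    ∑ n ∈ Finset.Icc 1 M, (n:ℝ) ^ (α - 1) ≤ 2 / α * ((M:ℝ) + 1) ^ α := by
  induction M with
  | zero =>
    rw [Finset.Icc_eq_empty (by omega), Finset.sum_empty]
    positivity
  | succ M ih =>
    rw [← Finset.insert_Icc_right_eq_Icc_add_one (by omega),
      Finset.sum_insert (by simp)]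
    have key := telescope_up hα (M + 1) (by omega)
    push_cast at key ih ⊢
    linarith

lemma telescope_down {δ : ℝ} (hδ : 0 < δ) (hδ1 : δ ≤ 1) (n : ℕ) (hn : 1 ≤ n) :
    (n:ℝ) ^ (-1 - δ) ≤ 4 / δ * ((n:ℝ) ^ (-δ) - ((n:ℝ) + 1) ^ (-δ)) := by
  have hn' : (1:ℝ) ≤ (n:ℝ) := by exact_mod_cast hn
  have hnpos : (0:ℝ) < n := by linarith
  have hx0 : (0:ℝ) ≤ 1 / (n:ℝ) := by positivity
  have hx0' : (0:ℝ) < 1 / (n:ℝ) := by positivity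
  have hx1 : 1 / (n:ℝ) ≤ 1 := by rw [div_le_one hnpos]; exact hn'
  set P : ℝ := (n:ℝ) ^ δ with hPdef
  set Q : ℝ := (1 + 1 / (n:ℝ)) ^ δ with hQdef
  have hP : 0 < P := Real.rpow_pos_of_pos hnpos δ
  have hQ1 : 1 + δ * (1 / (n:ℝ) / 2) ≤ Q := one_add_le_rpow hδ hx0 hx1
  have hQpos : (0:ℝ) < Q := by
    have : (0:ℝ) < 1 + δ * (1 / (n:ℝ) / 2) := by positivity
    linarith
  have hQ2 : Q ≤ 2 := by
    have h1 : Q ≤ (1 + 1 / (n:ℝ)) ^ (1:ℝ) :=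
      Real.rpow_le_rpow_of_exponent_le (by linarith) hδ1
    rw [Real.rpow_one] at h1
    linarith
  have heq1 : ((n:ℝ) + 1) ^ (-δ) = (P * Q)⁻¹ := by
    rw [Real.rpow_neg (by linarith), rpow_fact hn δ]
  have heq2 : (n:ℝ) ^ (-δ) = P⁻¹ := by rw [Real.rpow_neg hnpos.le]
  have heq3 : (n:ℝ) ^ (-1 - δ) = P⁻¹ * (1 / (n:ℝ)) := by
    rw [show (-1 - δ : ℝ) = -δ + (-1) by ring, Real.rpow_add hnpos,
      Real.rpow_neg hnpos.le, Real.rpow_neg hnpos.le, Real.rpow_one, one_div]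
  rw [heq1, heq2, heq3, mul_inv]
  -- goal : P⁻¹ * (1/n) ≤ 4/δ * (P⁻¹ - P⁻¹ * Q⁻¹)
  have hQinv : Q * Q⁻¹ = 1 := mul_inv_cancel₀ hQpos.ne'
  have hQinvpos : 0 < Q⁻¹ := inv_pos.mpr hQpos
  have h6 : δ * (1 / (n:ℝ)) ≤ 4 * (1 - Q⁻¹) := by
    have hB : (1:ℝ) ≤ 2 * Q⁻¹ := by nlinarith [hQinv, hQ2, hQinvpos]
    have hA : Q⁻¹ + δ * (1 / (n:ℝ) / 2) * Q⁻¹ ≤ 1 := by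
      nlinarith [mul_le_mul_of_nonneg_right hQ1 hQinvpos.le, hQinv]
    have hC := mul_le_mul_of_nonneg_left hB
      (by positivity : (0:ℝ) ≤ δ * (1 / (n:ℝ) / 2))
    nlinarith [hA, hC]
  have hPinv : (0:ℝ) ≤ P⁻¹ := by positivity
  have h7 := mul_le_mul_of_nonneg_left h6 hPinv
  rw [div_mul_eq_mul_div, le_div_iff₀ hδ]
  nlinarith [h7]

lemma sum_L2 {δ : ℝ} (hδ : 0 < δ) (hδ1 : δ ≤ 1) (m M : ℕ) (hm : 1 ≤ m) :
    ∑ n ∈ Finset.Icc m M, (n:ℝ) ^ (-1 - δ) ≤ 4 / δ * (m:ℝ) ^ (-δ) := by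
  rcases lt_or_ge M m with h | h
  · rw [Finset.Icc_eq_empty (by omega), Finset.sum_empty]
    positivity
  · have key : ∀ M', m ≤ M' →
        ∑ n ∈ Finset.Icc m M', (n:ℝ) ^ (-1 - δ) ≤
          4 / δ * ((m:ℝ) ^ (-δ) - ((M':ℝ) + 1) ^ (-δ)) := by
      intro M' hM'
      induction M', hM' using Nat.le_induction with
      | base =>
        rw [Finset.Icc_self, Finset.sum_singleton]
        exact telescope_down hδ hδ1 m hm
      | succ M' hM' ih =>
        rw [← Finset.insert_Icc_right_eq_Icc_add_one (by omega),
          Finset.sum_insert (by simp)]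
        have h2 := telescope_down hδ hδ1 (M' + 1) (by omega)
        push_cast at h2 ih ⊢
        linarith
    have h2 := key M h
    have h3 : (0:ℝ) ≤ 4 / δ * ((M:ℝ) + 1) ^ (-δ) := by positivity
    have h4 : 4 / δ * ((m:ℝ) ^ (-δ) - ((M:ℝ) + 1) ^ (-δ)) =
        4 / δ * (m:ℝ) ^ (-δ) - 4 / δ * ((M:ℝ) + 1) ^ (-δ) := by ring
    linarith [h2, h3, h4 ▸ h2]

/-- The key one-dimensional summation bound. -/
lemma key_sum {α ε δ : ℝ} (hα : 0 < α) (hα2 : α ≤ 2) (hε : 0 < ε) (hδ : 0 < δ)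
    (hδ1 : δ ≤ 1) (hδε : δ ≤ ε) {c : ℝ} (hc : 0 < c) (W : Finset ℕ)
    (hW : ∀ n ∈ W, 1 ≤ n) :
    ∑ n ∈ W, (n:ℝ) ^ (α - 1) * (1 + c * n) ^ (-(α + ε)) ≤
      (8 / α + 4 / δ) * c ^ (-α) := by
  classical
  have hcnonneg : (0:ℝ) ≤ c ^ (-α) := Real.rpow_nonneg hc.le _
  rw [← Finset.sum_filter_add_sum_filter_not W (fun n : ℕ => c * n ≤ 1)]
  set N₀ := Nat.floor (1 / c) with hN₀
  have hterm_nonneg : ∀ n : ℕ, (0:ℝ) ≤ (n:ℝ) ^ (α - 1) := fun n =>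
    Real.rpow_nonneg (Nat.cast_nonneg n) _
  have hpart1 : ∑ n ∈ W.filter (fun n : ℕ => c * n ≤ 1),
      (n:ℝ) ^ (α - 1) * (1 + c * n) ^ (-(α + ε)) ≤ 8 / α * c ^ (-α) := by
    rcases Finset.eq_empty_or_nonempty (W.filter (fun n : ℕ => c * n ≤ 1)) with he | hne
    · rw [he, Finset.sum_empty]; positivity
    · -- the filter is nonempty, so c ≤ 1
      obtain ⟨n₁, hn₁⟩ := hne
      rw [Finset.mem_filter] at hn₁
      have hn₁1 : 1 ≤ n₁ := hW n₁ hn₁.1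
      have hc1 : c ≤ 1 := by
        have : (1:ℝ) ≤ (n₁:ℝ) := by exact_mod_cast hn₁1
        nlinarith [hn₁.2]
      have hsub : W.filter (fun n : ℕ => c * n ≤ 1) ⊆ Finset.Icc 1 N₀ := by
        intro n hn
        rw [Finset.mem_filter] at hn
        rw [Finset.mem_Icc]
        refine ⟨hW n hn.1, Nat.le_floor ?_⟩
        rw [le_div_iff₀ hc]
        have := hn.2
        linarith [this, mul_comm c (n:ℝ)]
      have hstep : ∀ n ∈ W.filter (fun n : ℕ => c * n ≤ 1),
          (n:ℝ) ^ (α - 1) * (1 + c * n) ^ (-(α + ε)) ≤ (n:ℝ) ^ (α - 1) := by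
        intro n hn
        rw [Finset.mem_filter] at hn
        have h1 : (1 + c * (n:ℝ)) ^ (-(α + ε)) ≤ 1 :=
          Real.rpow_le_one_of_one_le_of_nonpos
            (by nlinarith [Nat.cast_nonneg (α := ℝ) n]) (by linarith)
        calc (n:ℝ) ^ (α - 1) * (1 + c * n) ^ (-(α + ε))
            ≤ (n:ℝ) ^ (α - 1) * 1 := mul_le_mul_of_nonneg_left h1 (hterm_nonneg n)
          _ = (n:ℝ) ^ (α - 1) := mul_one _
      have hfloor1 : (N₀:ℝ) ≤ 1 / c := Nat.floor_le (by positivity)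
      have hN2 : ((N₀:ℝ) + 1) ≤ 2 / c := by
        have h1c : (1:ℝ) ≤ 1 / c := by rw [le_div_iff₀ hc]; linarith
        have : (2:ℝ) / c = 1 / c + 1 / c := by ring
        linarith
      have hup : ((N₀:ℝ) + 1) ^ α ≤ 4 * c ^ (-α) := by
        have h1 : ((N₀:ℝ) + 1) ^ α ≤ (2 / c) ^ α :=
          Real.rpow_le_rpow (by positivity) hN2 hα.le
        have h2 : (2 / c) ^ α = 2 ^ α * c ^ (-α) := by
          rw [Real.div_rpow (by norm_num) hc.le, Real.rpow_neg hc.le, div_eq_mul_inv]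
        have h3 : (2:ℝ) ^ α ≤ 4 := by
          have := Real.rpow_le_rpow_of_exponent_le (x := 2) (by norm_num) hα2
          rw [show ((2:ℝ) ^ (2:ℝ)) = 4 by
            rw [show (2:ℝ) = ((2:ℕ):ℝ) by norm_num, Real.rpow_natCast]; norm_num] at this
          exact this
        calc ((N₀:ℝ) + 1) ^ α ≤ 2 ^ α * c ^ (-α) := by rw [← h2]; exact h1
          _ ≤ 4 * c ^ (-α) := mul_le_mul_of_nonneg_right h3 hcnonneg
      calc ∑ n ∈ W.filter (fun n : ℕ => c * n ≤ 1),
            (n:ℝ) ^ (α - 1) * (1 + c * n) ^ (-(α + ε))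
          ≤ ∑ n ∈ W.filter (fun n : ℕ => c * n ≤ 1), (n:ℝ) ^ (α - 1) :=
            Finset.sum_le_sum hstep
        _ ≤ ∑ n ∈ Finset.Icc 1 N₀, (n:ℝ) ^ (α - 1) :=
            Finset.sum_le_sum_of_subset_of_nonneg hsub (fun n _ _ => hterm_nonneg n)
        _ ≤ 2 / α * ((N₀:ℝ) + 1) ^ α := sum_L1 hα N₀
        _ ≤ 2 / α * (4 * c ^ (-α)) := by
            apply mul_le_mul_of_nonneg_left hup (by positivity)
        _ = 8 / α * c ^ (-α) := by ring
  have hpart2 : ∑ n ∈ W.filter (fun n : ℕ => ¬ c * n ≤ 1),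
      (n:ℝ) ^ (α - 1) * (1 + c * n) ^ (-(α + ε)) ≤ 4 / δ * c ^ (-α) := by
    have hterm : ∀ n ∈ W.filter (fun n : ℕ => ¬ c * n ≤ 1),
        (n:ℝ) ^ (α - 1) * (1 + c * n) ^ (-(α + ε)) ≤
          c ^ (-(α + δ)) * (n:ℝ) ^ (-1 - δ) := by
      intro n hn
      rw [Finset.mem_filter] at hn
      have hn1 : 1 ≤ n := hW n hn.1
      have hnpos : (0:ℝ) < n := by exact_mod_cast hn1
      have hcn : (1:ℝ) < c * n := lt_of_not_ge hn.2
      have hcnpos : (0:ℝ) < c * n := by linarith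
      have h1 : (1 + c * (n:ℝ)) ^ (-(α + ε)) ≤ (c * n) ^ (-(α + ε)) :=
        Real.rpow_le_rpow_of_nonpos hcnpos (by linarith) (by linarith)
      have h2 : ((c:ℝ) * n) ^ (-(α + ε)) ≤ (c * n) ^ (-(α + δ)) :=
        Real.rpow_le_rpow_of_exponent_le hcn.le (by linarith)
      have h3 : ((c:ℝ) * n) ^ (-(α + δ)) = c ^ (-(α + δ)) * (n:ℝ) ^ (-(α + δ)) :=
        Real.mul_rpow hc.le hnpos.le
      have h4 : (n:ℝ) ^ (α - 1) * ((n:ℝ) ^ (-(α + δ))) = (n:ℝ) ^ (-1 - δ) := by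
        rw [← Real.rpow_add hnpos]
        congr 1
        ring
      calc (n:ℝ) ^ (α - 1) * (1 + c * n) ^ (-(α + ε))
          ≤ (n:ℝ) ^ (α - 1) * ((c * n) ^ (-(α + δ))) :=
            mul_le_mul_of_nonneg_left (h1.trans h2) (hterm_nonneg n)
        _ = c ^ (-(α + δ)) * ((n:ℝ) ^ (α - 1) * (n:ℝ) ^ (-(α + δ))) := by
            rw [h3]; ring
        _ = c ^ (-(α + δ)) * (n:ℝ) ^ (-1 - δ) := by rw [h4]
    have hsub : W.filter (fun n : ℕ => ¬ c * n ≤ 1) ⊆ Finset.Icc (N₀ + 1) (W.sup id) := by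
      intro n hn
      rw [Finset.mem_filter] at hn
      rw [Finset.mem_Icc]
      constructor
      · have hcn : (1:ℝ) < c * n := lt_of_not_ge hn.2
        have : (1:ℝ) / c < n := by rw [div_lt_iff₀ hc]; linarith [mul_comm c (n:ℝ)]
        have := (Nat.floor_lt (by positivity)).mpr this
        omega
      · exact Finset.le_sup (f := id) hn.1
    have hL2 := sum_L2 hδ hδ1 (N₀ + 1) (W.sup id) (by omega)
    have hmono : ∑ n ∈ W.filter (fun n : ℕ => ¬ c * n ≤ 1), (n:ℝ) ^ (-1 - δ) ≤
        4 / δ * ((N₀:ℝ) + 1) ^ (-δ) := by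
      calc ∑ n ∈ W.filter (fun n : ℕ => ¬ c * n ≤ 1), (n:ℝ) ^ (-1 - δ)
          ≤ ∑ n ∈ Finset.Icc (N₀ + 1) (W.sup id), (n:ℝ) ^ (-1 - δ) :=
            Finset.sum_le_sum_of_subset_of_nonneg hsub
              (fun n _ _ => Real.rpow_nonneg (Nat.cast_nonneg n) _)
        _ ≤ 4 / δ * ((N₀ + 1 : ℕ):ℝ) ^ (-δ) := hL2
        _ = 4 / δ * ((N₀:ℝ) + 1) ^ (-δ) := by push_cast; ring_nf
    have hN₀c : ((N₀:ℝ) + 1) ^ (-δ) ≤ c ^ δ := by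
      have h1 : (1:ℝ) / c < (N₀:ℝ) + 1 := by
        have := Nat.lt_floor_add_one (1 / c)
        push_cast at this ⊢
        linarith
      have h2 : ((N₀:ℝ) + 1) ^ (-δ) ≤ (1 / c) ^ (-δ) :=
        Real.rpow_le_rpow_of_nonpos (by positivity) h1.le (by linarith)
      have h3 : ((1:ℝ) / c) ^ (-δ) = c ^ δ := by
        rw [one_div, Real.inv_rpow hc.le, Real.rpow_neg hc.le, inv_inv]
      rw [← h3]; exact h2
    calc ∑ n ∈ W.filter (fun n : ℕ => ¬ c * n ≤ 1),
          (n:ℝ) ^ (α - 1) * (1 + c * n) ^ (-(α + ε))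
        ≤ ∑ n ∈ W.filter (fun n : ℕ => ¬ c * n ≤ 1),
            c ^ (-(α + δ)) * (n:ℝ) ^ (-1 - δ) := Finset.sum_le_sum hterm
      _ = c ^ (-(α + δ)) * ∑ n ∈ W.filter (fun n : ℕ => ¬ c * n ≤ 1), (n:ℝ) ^ (-1 - δ) := by
          rw [Finset.mul_sum]
      _ ≤ c ^ (-(α + δ)) * (4 / δ * ((N₀:ℝ) + 1) ^ (-δ)) := by
          apply mul_le_mul_of_nonneg_left hmono (Real.rpow_nonneg hc.le _)
      _ ≤ c ^ (-(α + δ)) * (4 / δ * c ^ δ) := by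
          apply mul_le_mul_of_nonneg_left _ (Real.rpow_nonneg hc.le _)
          exact mul_le_mul_of_nonneg_left hN₀c (by positivity)
      _ = 4 / δ * (c ^ (-(α + δ)) * c ^ δ) := by ring
      _ = 4 / δ * c ^ (-α) := by
          rw [← Real.rpow_add hc]
          congr 2
          ring
  calc _ ≤ 8 / α * c ^ (-α) + 4 / δ * c ^ (-α) := add_le_add hpart1 hpart2
    _ = (8 / α + 4 / δ) * c ^ (-α) := by ring

/-! ### Lattice geometry -/

variable {d : ℕ}

/-- The ℓ∞ norm as a natural number. -/
def nn (u : Fin d → ℤ) : ℕ := Finset.univ.sup fun i => (u i).natAbs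

lemma linf_eq_nn (u : Fin d → ℤ) : linf u = ((nn u : ℕ) : ℝ) := rfl

lemma natAbs_le_nn (u : Fin d → ℤ) (i : Fin d) : (u i).natAbs ≤ nn u :=
  Finset.le_sup (f := fun j => (u j).natAbs) (Finset.mem_univ i)

lemma nn_zero_iff (u : Fin d → ℤ) : nn u = 0 ↔ u = 0 := by
  constructor
  · intro h
    funext i
    have h2 := natAbs_le_nn u i
    rw [h, Nat.le_zero, Int.natAbs_eq_zero] at h2
    simpa using h2
  · rintro rfl
    simp [nn]

/-- The box `[-n, n]^d` as a finset. -/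
noncomputable def box (d n : ℕ) : Finset (Fin d → ℤ) :=
  Fintype.piFinset fun _ => Finset.Icc (-(n:ℤ)) (n:ℤ)

lemma mem_box {n : ℕ} {u : Fin d → ℤ} : u ∈ box d n ↔ nn u ≤ n := by
  simp only [box, Fintype.mem_piFinset, Finset.mem_Icc, nn, Finset.sup_le_iff,
    Finset.mem_univ, true_implies]
  exact forall_congr' fun i => by omega

lemma card_box (n : ℕ) : (box d n).card = (2 * n + 1) ^ d := by
  rw [box, Fintype.card_piFinset]
  have h : (Finset.Icc (-(n:ℤ)) (n:ℤ)).card = 2 * n + 1 := by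
    rw [Int.card_Icc]; omega
  simp [h]

lemma nat_pow_sub_pow (b c k : ℕ) : (b + c) ^ k ≤ b ^ k + k * c * (b + c) ^ (k - 1) := by
  induction k with
  | zero => simp
  | succ k ih =>
    have hbk : b ^ k ≤ (b + c) ^ k := Nat.pow_le_pow_left (Nat.le_add_right b c) k
    have hmid : k * c * (b + c) ^ (k - 1) * (b + c) ≤ k * c * (b + c) ^ k := by
      cases k with
      | zero => simp
      | succ k' =>
        have : (b + c) ^ (k' + 1 - 1) * (b + c) = (b + c) ^ (k' + 1) := by
          rw [Nat.succ_sub_one, ← pow_succ]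
        calc (k' + 1) * c * (b + c) ^ (k' + 1 - 1) * (b + c)
            = (k' + 1) * c * ((b + c) ^ (k' + 1 - 1) * (b + c)) := by ring
          _ = (k' + 1) * c * (b + c) ^ (k' + 1) := by rw [this]
          _ ≤ (k' + 1) * c * (b + c) ^ (k' + 1) := le_refl _
    calc (b + c) ^ (k + 1) = (b + c) ^ k * (b + c) := by rw [pow_succ]
      _ ≤ (b ^ k + k * c * (b + c) ^ (k - 1)) * (b + c) :=
          Nat.mul_le_mul_right _ ih
      _ = b ^ k * b + b ^ k * c + k * c * (b + c) ^ (k - 1) * (b + c) := by ring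
      _ ≤ b ^ k * b + (b + c) ^ k * c + k * c * (b + c) ^ k := by
          have h1 : b ^ k * c ≤ (b + c) ^ k * c := Nat.mul_le_mul_right _ hbk
          omega
      _ = b ^ (k + 1) + (k + 1) * c * (b + c) ^ (k + 1 - 1) := by
          rw [Nat.succ_sub_one, pow_succ]
          ring

lemma card_shell (n : ℕ) (hn : 1 ≤ n) (S : Finset (Fin d → ℤ))
    (hS : ∀ u ∈ S, nn u = n) : S.card ≤ 2 * d * 3 ^ (d - 1) * n ^ (d - 1) := by
  have hsub : S ⊆ box d n \ box d (n - 1) := by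
    intro u hu
    have h1 := hS u hu
    rw [Finset.mem_sdiff, mem_box, mem_box]
    omega
  have hboxsub : box d (n - 1) ⊆ box d n := by
    intro u hu
    rw [mem_box] at hu ⊢
    omega
  have h2 := (Finset.card_le_card hsub).trans_eq (Finset.card_sdiff_of_subset hboxsub)
  rw [card_box, card_box] at h2
  have h3 : 2 * (n - 1) + 1 = 2 * n - 1 := by omega
  -- (2n+1)^d - (2n-1)^d ≤ d * 2 * (2n+1)^(d-1)
  have h4 : (2 * n + 1) ^ d ≤ (2 * n - 1) ^ d + d * 2 * (2 * n + 1) ^ (d - 1) := by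
    have := nat_pow_sub_pow (2 * n - 1) 2 d
    have heq : 2 * n - 1 + 2 = 2 * n + 1 := by omega
    rw [heq] at this
    exact this
  have h5 : (2 * n + 1) ^ (d - 1) ≤ (3 * n) ^ (d - 1) :=
    Nat.pow_le_pow_left (by omega) _
  calc S.card ≤ (2 * n + 1) ^ d - (2 * (n - 1) + 1) ^ d := h2
    _ ≤ d * 2 * (2 * n + 1) ^ (d - 1) := by
        rw [h3]
        omega
    _ ≤ d * 2 * (3 * n) ^ (d - 1) := Nat.mul_le_mul_left _ h5
    _ = 2 * d * 3 ^ (d - 1) * n ^ (d - 1) := by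
        rw [Nat.mul_pow]
        ring

lemma apply_add_smul (x u : Fin d → ℤ) (R : ℕ) (i : Fin d) :
    (x + R • u) i = x i + (R : ℤ) * u i := by
  simp [Pi.add_apply, Pi.smul_apply, nsmul_eq_mul]

lemma linf_nonneg (u : Fin d → ℤ) : 0 ≤ linf u := by
  rw [linf_eq_nn]; positivity

lemma abs_apply_le_linf (u : Fin d → ℤ) (i : Fin d) : |((u i : ℤ) : ℝ)| ≤ linf u := by
  rw [linf_eq_nn]
  have h := natAbs_le_nn u i
  have h2 : ((u i).natAbs : ℝ) = |((u i : ℤ) : ℝ)| := by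
    rw [Nat.cast_natAbs, Int.cast_abs]
  rw [← h2]
  exact_mod_cast h

lemma jap_ge_one (u : Fin d → ℤ) : 1 ≤ jap u := le_max_right _ _

lemma jap_pos (u : Fin d → ℤ) : 0 < jap u := lt_of_lt_of_le one_pos (jap_ge_one u)

/-- Geometry: lower bound for the unwrapped point. -/
lemma geom_lower (hd : 1 ≤ d) (R : ℕ) (hR : 1 ≤ R) (x u : Fin d → ℤ)
    (hx : linf x ≤ (R : ℝ) / 2) (hu : u ≠ 0) :
    (R : ℝ) * (nn u) / 2 ≤ linf (x + R • u) := by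
  have hne : Nonempty (Fin d) := ⟨⟨0, hd⟩⟩
  obtain ⟨i, -, hi⟩ := Finset.exists_mem_eq_sup (Finset.univ : Finset (Fin d))
    Finset.univ_nonempty (fun i => (u i).natAbs)
  have hn1 : 1 ≤ nn u := by
    rcases Nat.eq_zero_or_pos (nn u) with h | h
    · exact absurd ((nn_zero_iff u).mp h) hu
    · exact h
  have hR' : (1:ℝ) ≤ R := by exact_mod_cast hR
  have hn' : (1:ℝ) ≤ (nn u : ℝ) := by exact_mod_cast hn1
  have hlinf : |(((x + R • u) i : ℤ) : ℝ)| ≤ linf (x + R • u) :=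
    abs_apply_le_linf _ i
  have habs : (R:ℝ) * (nn u) - linf x ≤ |(((x + R • u) i : ℤ) : ℝ)| := by
    have h1 : ((x + R • u) i : ℤ) = x i + (R : ℤ) * u i := apply_add_smul x u R i
    have h2 : |((x i : ℤ):ℝ)| ≤ linf x := abs_apply_le_linf x i
    have h3 : |(((R:ℤ) * u i : ℤ) : ℝ)| = (R:ℝ) * (nn u) := by
      push_cast
      rw [abs_mul, abs_of_nonneg (by positivity : (0:ℝ) ≤ (R:ℝ))]
      congr 1
      have h5 : nn u = (u i).natAbs := hi
      rw [h5, Nat.cast_natAbs, Int.cast_abs]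
    have h4 : |(((R:ℤ) * u i : ℤ):ℝ)| - |((x i:ℤ):ℝ)| ≤ |(((x + R • u) i : ℤ):ℝ)| := by
      rw [h1]
      push_cast
      have := abs_sub_abs_le_abs_sub ((R:ℝ) * (u i : ℝ)) (-((x i : ℤ):ℝ))
      simp only [sub_neg_eq_add] at this
      calc |(R:ℝ) * (u i:ℝ)| - |((x i:ℤ):ℝ)| = |(R:ℝ) * (u i:ℝ)| - |(-((x i:ℤ):ℝ))| := by
            rw [abs_neg]
        _ ≤ |(R:ℝ) * (u i:ℝ) + ((x i:ℤ):ℝ)| := this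
        _ = |((x i:ℤ):ℝ) + (R:ℝ) * (u i:ℝ)| := by rw [add_comm]
    push_cast at h3 h4 ⊢
    linarith
  have hRn : (R:ℝ) ≤ (R:ℝ) * (nn u) := le_mul_of_one_le_right (by positivity) hn'
  linarith

/-- Geometry: upper bound for the unwrapped point. -/
lemma geom_upper (hd : 1 ≤ d) (R : ℕ) (hR : 1 ≤ R) (x u : Fin d → ℤ)
    (hx : linf x ≤ (R : ℝ) / 2) (hu : u ≠ 0) :
    jap (x + R • u) ≤ 2 * (R : ℝ) * (nn u) := by
  have hn1 : 1 ≤ nn u := by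
    rcases Nat.eq_zero_or_pos (nn u) with h | h
    · exact absurd ((nn_zero_iff u).mp h) hu
    · exact h
  have hR' : (1:ℝ) ≤ R := by exact_mod_cast hR
  have hn' : (1:ℝ) ≤ (nn u : ℝ) := by exact_mod_cast hn1
  have hnn : nn (x + R • u) ≤ nn x + R * nn u := by
    apply Finset.sup_le
    intro i _
    have h1 : ((x + R • u) i) = x i + (R:ℤ) * u i := apply_add_smul x u R i
    calc ((x + R • u) i).natAbs = (x i + (R:ℤ) * u i).natAbs := by rw [h1]
      _ ≤ (x i).natAbs + ((R:ℤ) * u i).natAbs := Int.natAbs_add_le _ _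
      _ = (x i).natAbs + R * (u i).natAbs := by
          rw [Int.natAbs_mul, Int.natAbs_natCast]
      _ ≤ nn x + R * nn u := by
          have := natAbs_le_nn x i
          have h2 := natAbs_le_nn u i
          have h3 : R * (u i).natAbs ≤ R * nn u := Nat.mul_le_mul_left R h2
          omega
  have hlinf : linf (x + R • u) ≤ linf x + (R:ℝ) * nn u := by
    rw [linf_eq_nn, linf_eq_nn]
    exact_mod_cast hnn
  have hRn : (R:ℝ) ≤ (R:ℝ) * (nn u) := le_mul_of_one_le_right (by positivity) hn'
  apply max_le
  · linarith
  · linarith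

end UnwrappedAux

set_option maxHeartbeats 1000000 in
/-- Upper bound for the unwrapped two-point function:
if `G(x) ≤ K ⟨x⟩^{-(d-α)} g(|x|/ξ)` with `g(u) ≤ (1+u)^{-(α+ε)}`, then
`Γ_R(x) = ∑_u G(x+Ru) ≤ C (⟨x⟩^{-(d-α)} + ξ^α/R^d)` for `|x| ≤ R/2`,
with `C = C(d,α,ε,K)` independent of `ξ, R, x, G, g`. -/
theorem unwrapped_upper_bound (d : ℕ) (hd : 1 ≤ d) (α ε K : ℝ)
    (hα : 0 < α) (hα2 : α ≤ 2) (hε : 0 < ε) (hK : 0 < K) :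
    ∃ C : ℝ, 0 < C ∧
      ∀ (ξ : ℝ), 0 < ξ →
        ∀ g : ℝ → ℝ, (∀ s, 0 ≤ s → 0 ≤ g s) →
          (∀ s, 0 ≤ s → g s ≤ (1 + s) ^ (-(α + ε))) →
          ∀ G : (Fin d → ℤ) → ℝ≥0,
            (∀ x : Fin d → ℤ, (G x : ℝ) ≤ K * jap x ^ (-((d : ℝ) - α)) * g (linf x / ξ)) →
            ∀ (R : ℕ), 1 ≤ R → ∀ x : Fin d → ℤ, linf x ≤ (R : ℝ) / 2 →
              (∑' u : Fin d → ℤ, (G (x + R • u) : ℝ≥0∞)) ≤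
                ENNReal.ofReal (C * (jap x ^ (-((d : ℝ) - α)) + ξ ^ α / (R : ℝ) ^ d)) := by
  classical
  set e : ℝ := -((d:ℝ) - α) with hedef
  set δ : ℝ := min ε 1 with hddef
  have hδ : 0 < δ := lt_min hε one_pos
  have hδ1 : δ ≤ 1 := min_le_right _ _
  have hδε : δ ≤ ε := min_le_left _ _
  set A : ℕ := 2 * d * 3 ^ (d - 1) with hAdef
  set B : ℝ := 8 / α + 4 / δ with hBdef
  have hB : 0 < B := add_pos (div_pos (by norm_num) hα) (div_pos (by norm_num) hδ)
  have hA : (0:ℝ) ≤ (A:ℝ) := Nat.cast_nonneg A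
  have hM : (0:ℝ) ≤ K * 2 ^ (d + 4) * A * B :=
    mul_nonneg (mul_nonneg (mul_nonneg hK.le (by positivity)) hA) hB.le
  refine ⟨K + K * 2 ^ (d + 4) * A * B, by linarith, ?_⟩
  intro ξ hξ g hg0 hgb G hG R hR x hx
  have hR' : (1:ℝ) ≤ (R:ℝ) := by exact_mod_cast hR
  have hRpos : (0:ℝ) < (R:ℝ) := by linarith
  set c : ℝ := (R:ℝ) / (2 * ξ) with hcdef
  have hc : 0 < c := by positivity
  set Φ : ℕ → ℝ := fun n => K * 2 ^ (d + 2) * ((R:ℝ) * n) ^ e * (1 + c * n) ^ (-(α + ε))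
    with hPhidef
  have h2four : (2:ℝ) ^ α ≤ 4 := by
    have h := Real.rpow_le_rpow_of_exponent_le (x := 2) one_le_two hα2
    rw [show ((2:ℝ) ^ (2:ℝ)) = 4 by
      rw [show (2:ℝ) = ((2:ℕ):ℝ) by norm_num, Real.rpow_natCast]; norm_num] at h
    exact h
  have hΦnonneg : ∀ n : ℕ, 0 ≤ Φ n := by
    intro n
    have h1 : (0:ℝ) ≤ ((R:ℝ) * n) ^ e := Real.rpow_nonneg (by positivity) _
    have h2 : (0:ℝ) ≤ (1 + c * n) ^ (-(α + ε)) :=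
      Real.rpow_nonneg (by positivity) _
    rw [hPhidef]
    exact mul_nonneg (mul_nonneg (mul_nonneg hK.le (by positivity)) h1) h2
  -- pointwise bound for u ≠ 0
  have hpoint : ∀ u : Fin d → ℤ, u ≠ 0 →
      ((G (x + R • u) : ℝ)) ≤ Φ (UnwrappedAux.nn u) := by
    intro u hu
    set n : ℕ := UnwrappedAux.nn u with hndef
    have hn1 : 1 ≤ n := by
      rcases Nat.eq_zero_or_pos n with h | h
      · exact absurd ((UnwrappedAux.nn_zero_iff u).mp h) hu
      · exact h
    have hn' : (1:ℝ) ≤ (n:ℝ) := by exact_mod_cast hn1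
    have hnn0 : (0:ℝ) ≤ (n:ℝ) := by linarith
    have hlow := UnwrappedAux.geom_lower hd R hR x u hx hu
    have hup := UnwrappedAux.geom_upper hd R hR x u hx hu
    set y : Fin d → ℤ := x + R • u with hydef
    have hRn1 : (1:ℝ) ≤ (R:ℝ) * n := by nlinarith
    have hRnpos : (0:ℝ) < (R:ℝ) * n := by linarith
    have hjpos := UnwrappedAux.jap_pos y
    have hlpos : (0:ℝ) ≤ linf y := UnwrappedAux.linf_nonneg y
    have hjlow : (R:ℝ) * n / 2 ≤ jap y := le_trans hlow (le_max_left _ _)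
    have hcn0 : (0:ℝ) ≤ c * n := mul_nonneg hc.le hnn0
    have hjap : jap y ^ e ≤ 2 ^ (d + 2) * ((R:ℝ) * n) ^ e := by
      rcases le_or_gt 0 e with he | he
      · have h1 : jap y ^ e ≤ (2 * ((R:ℝ) * n)) ^ e := by
          apply Real.rpow_le_rpow hjpos.le ?_ he
          calc jap y ≤ 2 * (R:ℝ) * n := hup
            _ = 2 * ((R:ℝ) * n) := by ring
        have h2 : ((2:ℝ) * ((R:ℝ) * n)) ^ e = 2 ^ e * ((R:ℝ) * n) ^ e :=
          Real.mul_rpow (by norm_num) (by positivity)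
        have h3 : (2:ℝ) ^ e ≤ 2 ^ (d + 2 : ℕ) := by
          have h4 : (2:ℝ) ^ e ≤ 2 ^ (((d + 2 : ℕ) : ℝ)) := by
            apply Real.rpow_le_rpow_of_exponent_le one_le_two
            push_cast
            rw [hedef]
            have hd0 : (0:ℝ) ≤ (d:ℝ) := Nat.cast_nonneg d
            linarith
          rwa [Real.rpow_natCast] at h4
        calc jap y ^ e ≤ 2 ^ e * ((R:ℝ) * n) ^ e := by rw [← h2]; exact h1
          _ ≤ 2 ^ (d + 2) * ((R:ℝ) * n) ^ e :=
            mul_le_mul_of_nonneg_right h3 (Real.rpow_nonneg (by positivity) _)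
      · have h1 : jap y ^ e ≤ ((R:ℝ) * n / 2) ^ e :=
          Real.rpow_le_rpow_of_nonpos (by positivity) hjlow he.le
        have h2 : ((R:ℝ) * n / 2) ^ e = ((R:ℝ) * n) ^ e / 2 ^ e :=
          Real.div_rpow (by positivity) (by norm_num) e
        have h3 : ((R:ℝ) * n) ^ e / 2 ^ e = ((R:ℝ) * n) ^ e * (2:ℝ) ^ (-e) := by
          rw [div_eq_mul_inv, Real.rpow_neg (by norm_num : (0:ℝ) ≤ 2) e]
        have h4 : (2:ℝ) ^ (-e) ≤ 2 ^ (d + 2 : ℕ) := by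
          have h5 : (2:ℝ) ^ (-e) ≤ 2 ^ (((d + 2 : ℕ) : ℝ)) := by
            apply Real.rpow_le_rpow_of_exponent_le one_le_two
            push_cast
            rw [hedef]
            have hd0 : (0:ℝ) ≤ (d:ℝ) := Nat.cast_nonneg d
            linarith
          rwa [Real.rpow_natCast] at h5
        calc jap y ^ e ≤ ((R:ℝ) * n) ^ e * (2:ℝ) ^ (-e) := by
              rw [← h3, ← h2]; exact h1
          _ ≤ ((R:ℝ) * n) ^ e * 2 ^ (d + 2) :=
            mul_le_mul_of_nonneg_left h4 (Real.rpow_nonneg (by positivity) _)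
          _ = 2 ^ (d + 2) * ((R:ℝ) * n) ^ e := by ring
    have hsy : (0:ℝ) ≤ linf y / ξ := div_nonneg hlpos hξ.le
    have hg1 : g (linf y / ξ) ≤ (1 + linf y / ξ) ^ (-(α + ε)) := hgb _ hsy
    have hcn : c * (n:ℝ) ≤ linf y / ξ := by
      have h1 : c * (n:ℝ) = ((R:ℝ) * n / 2) / ξ := by
        rw [hcdef]
        field_simp
      rw [h1]
      exact div_le_div_of_nonneg_right hlow hξ.le
    have hg2 : (1 + linf y / ξ) ^ (-(α + ε)) ≤ (1 + c * n) ^ (-(α + ε)) :=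
      Real.rpow_le_rpow_of_nonpos (by linarith) (by linarith) (by linarith)
    have hKj : (0:ℝ) ≤ K * jap y ^ e := mul_nonneg hK.le (Real.rpow_nonneg hjpos.le _)
    calc ((G y : ℝ)) ≤ K * jap y ^ e * g (linf y / ξ) := hG y
      _ ≤ K * jap y ^ e * (1 + c * n) ^ (-(α + ε)) :=
          mul_le_mul_of_nonneg_left (hg1.trans hg2) hKj
      _ ≤ K * (2 ^ (d + 2) * ((R:ℝ) * n) ^ e) * (1 + c * n) ^ (-(α + ε)) := by
          apply mul_le_mul_of_nonneg_right _ (Real.rpow_nonneg (by linarith) _)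
          exact mul_le_mul_of_nonneg_left hjap hK.le
      _ = Φ n := by rw [hPhidef]; ring
  -- the finite-sum real estimate
  have hreal : ∀ T : Finset (Fin d → ℤ),
      ∑ u ∈ T, ((G (x + R • u) : ℝ)) ≤
        (K + K * 2 ^ (d + 4) * A * B) * (jap x ^ e + ξ ^ α / (R:ℝ) ^ d) := by
    intro T
    set T' : Finset (Fin d → ℤ) := T.erase 0 with hT'def
    have hsplit : ∑ u ∈ T, ((G (x + R • u) : ℝ)) ≤
        (G x : ℝ) + ∑ u ∈ T', ((G (x + R • u) : ℝ)) := by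
      by_cases h0 : (0 : Fin d → ℤ) ∈ T
      · rw [← Finset.add_sum_erase T _ h0]
        simp only [smul_zero, add_zero]
        exact le_rfl
      · rw [hT'def, Finset.erase_eq_of_notMem h0]
        have hg0' : (0:ℝ) ≤ (G x : ℝ) := (G x).coe_nonneg
        linarith
    have hzero : (G x : ℝ) ≤ K * jap x ^ e := by
      have h1 := hG x
      have hsx : (0:ℝ) ≤ linf x / ξ := div_nonneg (UnwrappedAux.linf_nonneg x) hξ.le
      have h2 : g (linf x / ξ) ≤ 1 := by
        have h3 := hgb (linf x / ξ) hsx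
        have h4 : (1 + linf x / ξ) ^ (-(α + ε)) ≤ 1 :=
          Real.rpow_le_one_of_one_le_of_nonpos (by linarith) (by linarith)
        linarith
      have hKj : (0:ℝ) ≤ K * jap x ^ e :=
        mul_nonneg hK.le (Real.rpow_nonneg (UnwrappedAux.jap_pos x).le _)
      calc (G x : ℝ) ≤ K * jap x ^ e * g (linf x / ξ) := h1
        _ ≤ K * jap x ^ e * 1 := mul_le_mul_of_nonneg_left h2 hKj
        _ = K * jap x ^ e := mul_one _
    have hrest : ∑ u ∈ T', ((G (x + R • u) : ℝ)) ≤
        (K * 2 ^ (d + 4) * A * B) * (ξ ^ α / (R:ℝ) ^ d) := by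
      have h1 : ∑ u ∈ T', ((G (x + R • u) : ℝ)) ≤
          ∑ u ∈ T', Φ (UnwrappedAux.nn u) := by
        apply Finset.sum_le_sum
        intro u hu
        exact hpoint u (Finset.ne_of_mem_erase hu)
      have h2 := Finset.sum_comp (s := T') Φ UnwrappedAux.nn
      rw [h2] at h1
      set W : Finset ℕ := T'.image UnwrappedAux.nn with hWdef
      have hW1 : ∀ n ∈ W, 1 ≤ n := by
        intro n hn
        rw [hWdef, Finset.mem_image] at hn
        obtain ⟨u, hu, rfl⟩ := hn
        have hu0 : u ≠ 0 := Finset.ne_of_mem_erase hu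
        rcases Nat.eq_zero_or_pos (UnwrappedAux.nn u) with h | h
        · exact absurd ((UnwrappedAux.nn_zero_iff u).mp h) hu0
        · exact h
      have h3 : ∀ n ∈ W, ((T'.filter fun a => UnwrappedAux.nn a = n).card : ℝ) • Φ n ≤
          (A:ℝ) * (n:ℝ) ^ (d - 1 : ℕ) * Φ n := by
        intro n hn
        have hcard := UnwrappedAux.card_shell n (hW1 n hn)
          (T'.filter fun a => UnwrappedAux.nn a = n)
          (fun u hu => (Finset.mem_filter.mp hu).2)
        rw [smul_eq_mul]
        apply mul_le_mul_of_nonneg_right _ (hΦnonneg n)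
        calc (((T'.filter fun a => UnwrappedAux.nn a = n).card : ℕ) : ℝ)
            ≤ ((2 * d * 3 ^ (d - 1) * n ^ (d - 1) : ℕ) : ℝ) := by exact_mod_cast hcard
          _ = (A:ℝ) * (n:ℝ) ^ (d - 1 : ℕ) := by rw [hAdef]; push_cast; ring
      have h4 : ∀ n ∈ W, (A:ℝ) * (n:ℝ) ^ (d - 1 : ℕ) * Φ n =
          ((A:ℝ) * K * 2 ^ (d + 2) * (R:ℝ) ^ (α - (d:ℝ))) *
            ((n:ℝ) ^ (α - 1) * (1 + c * n) ^ (-(α + ε))) := by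
        intro n hn
        have hn1 : 1 ≤ n := hW1 n hn
        have hnpos : (0:ℝ) < (n:ℝ) := by exact_mod_cast hn1
        have e1 : ((R:ℝ) * n) ^ e = (R:ℝ) ^ e * (n:ℝ) ^ e :=
          Real.mul_rpow hRpos.le hnpos.le
        have e2 : ((n:ℝ)) ^ (d - 1 : ℕ) = (n:ℝ) ^ ((d:ℝ) - 1) := by
          rw [← Real.rpow_natCast (n:ℝ) (d - 1)]
          congr 1
          rw [Nat.cast_sub hd]
          norm_num
        have e3 : (n:ℝ) ^ ((d:ℝ) - 1) * (n:ℝ) ^ e = (n:ℝ) ^ (α - 1) := by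
          rw [← Real.rpow_add hnpos]
          congr 1
          rw [hedef]
          ring
        have e4 : (R:ℝ) ^ e = (R:ℝ) ^ (α - (d:ℝ)) := by
          rw [hedef]
          congr 1
          ring
        rw [hPhidef]
        simp only []
        rw [e1, e2, e4]
        calc (A:ℝ) * (n:ℝ) ^ ((d:ℝ) - 1) *
              (K * 2 ^ (d + 2) * ((R:ℝ) ^ (α - (d:ℝ)) * (n:ℝ) ^ e) * (1 + c * n) ^ (-(α + ε)))
            = ((A:ℝ) * K * 2 ^ (d + 2) * (R:ℝ) ^ (α - (d:ℝ))) *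
                (((n:ℝ) ^ ((d:ℝ) - 1) * (n:ℝ) ^ e) * (1 + c * n) ^ (-(α + ε))) := by ring
          _ = ((A:ℝ) * K * 2 ^ (d + 2) * (R:ℝ) ^ (α - (d:ℝ))) *
                ((n:ℝ) ^ (α - 1) * (1 + c * n) ^ (-(α + ε))) := by rw [e3]
      have h5 := UnwrappedAux.key_sum hα hα2 hε hδ hδ1 hδε hc W hW1
      have hconst : (0:ℝ) ≤ (A:ℝ) * K * 2 ^ (d + 2) * (R:ℝ) ^ (α - (d:ℝ)) :=
        mul_nonneg (mul_nonneg (mul_nonneg hA hK.le) (by positivity))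
          (Real.rpow_nonneg hRpos.le _)
      have h6 : ∑ n ∈ W, ((T'.filter fun a => UnwrappedAux.nn a = n).card) • Φ n ≤
          ((A:ℝ) * K * 2 ^ (d + 2) * (R:ℝ) ^ (α - (d:ℝ))) * ((8 / α + 4 / δ) * c ^ (-α)) := by
        calc ∑ n ∈ W, ((T'.filter fun a => UnwrappedAux.nn a = n).card) • Φ n
            ≤ ∑ n ∈ W, ((A:ℝ) * K * 2 ^ (d + 2) * (R:ℝ) ^ (α - (d:ℝ))) *
                ((n:ℝ) ^ (α - 1) * (1 + c * n) ^ (-(α + ε))) := by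
              apply Finset.sum_le_sum
              intro n hn
              have := (h3 n hn).trans_eq (h4 n hn)
              simpa using this
          _ = ((A:ℝ) * K * 2 ^ (d + 2) * (R:ℝ) ^ (α - (d:ℝ))) *
                ∑ n ∈ W, ((n:ℝ) ^ (α - 1) * (1 + c * n) ^ (-(α + ε))) := by
              rw [Finset.mul_sum]
          _ ≤ _ := mul_le_mul_of_nonneg_left h5 hconst
      have h7 : (R:ℝ) ^ (α - (d:ℝ)) * c ^ (-α) = 2 ^ α * (ξ ^ α / (R:ℝ) ^ d) := by
        have hRα : (0:ℝ) < (R:ℝ) ^ α := Real.rpow_pos_of_pos hRpos α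
        have hRd : (0:ℝ) < (R:ℝ) ^ ((d:ℝ)) := Real.rpow_pos_of_pos hRpos _
        have hξα : (0:ℝ) < ξ ^ α := Real.rpow_pos_of_pos hξ α
        have h2α : (0:ℝ) < (2:ℝ) ^ α := Real.rpow_pos_of_pos (by norm_num) α
        rw [hcdef, Real.rpow_sub hRpos, Real.rpow_neg (by positivity),
          Real.div_rpow hRpos.le (by positivity), Real.mul_rpow (by norm_num) hξ.le,
          ← Real.rpow_natCast (R:ℝ) d]
        field_simp
      have hξR : (0:ℝ) ≤ ξ ^ α / (R:ℝ) ^ d :=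
        div_nonneg (Real.rpow_nonneg hξ.le _) (by positivity)
      calc ∑ u ∈ T', ((G (x + R • u) : ℝ)) ≤
            ∑ n ∈ W, ((T'.filter fun a => UnwrappedAux.nn a = n).card) • Φ n := h1
        _ ≤ ((A:ℝ) * K * 2 ^ (d + 2) * (R:ℝ) ^ (α - (d:ℝ))) *
              ((8 / α + 4 / δ) * c ^ (-α)) := h6
        _ = ((A:ℝ) * K * 2 ^ (d + 2) * B) * ((R:ℝ) ^ (α - (d:ℝ)) * c ^ (-α)) := by
            rw [hBdef]; ring
        _ = ((A:ℝ) * K * 2 ^ (d + 2) * B) * (2 ^ α * (ξ ^ α / (R:ℝ) ^ d)) := by rw [h7]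
        _ ≤ ((A:ℝ) * K * 2 ^ (d + 2) * B) * (4 * (ξ ^ α / (R:ℝ) ^ d)) := by
            apply mul_le_mul_of_nonneg_left _
              (mul_nonneg (mul_nonneg (mul_nonneg hA hK.le) (by positivity)) hB.le)
            exact mul_le_mul_of_nonneg_right h2four hξR
        _ = (K * 2 ^ (d + 4) * A * B) * (ξ ^ α / (R:ℝ) ^ d) := by
            rw [show ((2:ℝ)) ^ (d + 4) = 2 ^ (d + 2) * 4 by ring]
            ring
    have hj : (0:ℝ) ≤ jap x ^ e := Real.rpow_nonneg (UnwrappedAux.jap_pos x).le _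
    have hξR : (0:ℝ) ≤ ξ ^ α / (R:ℝ) ^ d :=
      div_nonneg (Real.rpow_nonneg hξ.le _) (by positivity)
    calc ∑ u ∈ T, ((G (x + R • u) : ℝ)) ≤
          (G x : ℝ) + ∑ u ∈ T', ((G (x + R • u) : ℝ)) := hsplit
      _ ≤ K * jap x ^ e + (K * 2 ^ (d + 4) * A * B) * (ξ ^ α / (R:ℝ) ^ d) :=
          add_le_add hzero hrest
      _ ≤ (K + K * 2 ^ (d + 4) * A * B) * (jap x ^ e + ξ ^ α / (R:ℝ) ^ d) := by
          have hexp : (K + K * 2 ^ (d + 4) * (A:ℝ) * B) * (jap x ^ e + ξ ^ α / (R:ℝ) ^ d)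
              = K * jap x ^ e + (K * 2 ^ (d + 4) * (A:ℝ) * B) * (ξ ^ α / (R:ℝ) ^ d)
                + (K * (ξ ^ α / (R:ℝ) ^ d) + (K * 2 ^ (d + 4) * (A:ℝ) * B) * (jap x ^ e)) := by
            ring
          rw [hexp]
          have hn1 := mul_nonneg hK.le hξR
          have hn2 := mul_nonneg hM hj
          exact le_add_of_nonneg_right (add_nonneg hn1 hn2)
  rw [ENNReal.tsum_eq_iSup_sum]
  refine iSup_le fun T => ?_
  rw [← ENNReal.coe_finset_sum, ← ENNReal.ofReal_coe_nnreal]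
  apply ENNReal.ofReal_le_ofReal
  rw [NNReal.coe_sum]
  exact hreal T
end

section
/- Let d ≥ 1, α ∈ (0,2], and suppose G : ℤ^d → [0,∞) satisfies G(x) ≥ a⟨x⟩^{-(d-α)} for all x ∈ ℤ^d with |x| ≤ s_1 ξ, where a > 0, s_1 > 0, ξ > 0. Then there is a constant c = c(d,α,a,s_1) > 0 such that for every integer R ≥ 1 with ξ ≥ (3/(2 s_1)) R and every x ∈ ℤ^d with |x| ≤ R/2, the unwrapped function Γ_R(x) = ∑_{u∈ℤ^d} G(x+Ru) satisfies Γ_R(x) ≥ c(⟨x⟩^{-(d-α)} + ξ^α/R^d). -/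
open scoped ENNReal NNReal BigOperators

lemma coord_le_linf {d : ℕ} (x : Fin d → ℤ) (i : Fin d) :
    (((x i).natAbs : ℝ)) ≤ linf x := by
  unfold linf
  exact Nat.cast_le.mpr (Finset.le_sup (f := fun i => (x i).natAbs) (Finset.mem_univ i))

lemma linf_le_of_coords {d : ℕ} (hd : 1 ≤ d) (x : Fin d → ℤ) (C : ℝ)
    (h : ∀ i, (((x i).natAbs : ℝ)) ≤ C) : linf x ≤ C := by
  unfold linf
  obtain ⟨i, -, hi⟩ := Finset.exists_mem_eq_sup Finset.univ
    (Finset.univ_nonempty_iff.mpr ⟨⟨0, hd⟩⟩) (fun i => (x i).natAbs)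
  rw [hi]; exact h i

set_option maxHeartbeats 2000000 in
/-- Lower bound for the unwrapped two-point function:
if `G(x) ≥ a ⟨x⟩^{-(d-α)}` for `|x| ≤ s₁ ξ`, then for `ξ ≥ (3/(2s₁)) R`
and `|x| ≤ R/2` one has `Γ_R(x) = ∑_u G(x+Ru) ≥ c (⟨x⟩^{-(d-α)} + ξ^α/R^d)`,
with `c = c(d,α,a,s₁)` independent of `ξ, R, x, G`. -/
theorem unwrapped_lower_bound (d : ℕ) (hd : 1 ≤ d) (α a s₁ : ℝ)
    (hα : 0 < α) (hα2 : α ≤ 2) (ha : 0 < a) (hs₁ : 0 < s₁) :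
    ∃ c : ℝ, 0 < c ∧
      ∀ (ξ : ℝ), 0 < ξ →
        ∀ G : (Fin d → ℤ) → ℝ≥0,
          (∀ x : Fin d → ℤ, linf x ≤ s₁ * ξ →
            a * jap x ^ (-((d : ℝ) - α)) ≤ (G x : ℝ)) →
          ∀ (R : ℕ), 1 ≤ R → (3 / (2 * s₁)) * (R : ℝ) ≤ ξ →
            ∀ x : Fin d → ℤ, linf x ≤ (R : ℝ) / 2 →
              ENNReal.ofReal (c * (jap x ^ (-((d : ℝ) - α)) + ξ ^ α / (R : ℝ) ^ d)) ≤
                ∑' u : Fin d → ℤ, (G (x + R • u) : ℝ≥0∞) := by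
  have h6 : (0:ℝ) < 6 ^ d := by positivity
  set c₃ : ℝ := a * s₁ ^ α / (144 * 6 ^ d) with hc₃def
  have hc₃ : 0 < c₃ := by positivity
  refine ⟨min a c₃, lt_min ha hc₃, ?_⟩
  intro ξ hξ G hG R hR hξR x hx
  simp only [neg_sub] at hG ⊢
  set e : ℝ := α - (d : ℝ) with he
  have hRpos : (0:ℝ) < R := by exact_mod_cast hR
  have hR1 : (1:ℝ) ≤ R := by exact_mod_cast hR
  set P : ℝ := s₁ * ξ with hPdef
  have hPpos : 0 < P := by positivity
  have hP : (3/2 : ℝ) * R ≤ P := by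
    have := mul_le_mul_of_nonneg_left hξR hs₁.le
    calc (3/2:ℝ) * R = s₁ * (3 / (2*s₁) * R) := by field_simp
    _ ≤ s₁ * ξ := this
  have hPR : (3/2 : ℝ) ≤ P / R := (le_div_iff₀ hRpos).mpr (by linarith)
  set M : ℕ := ⌊P / R - 1/2⌋₊ with hMdef
  have hM1 : 1 ≤ M := Nat.le_floor (by push_cast; linarith)
  have hMle : (M:ℝ) ≤ P/R - 1/2 := Nat.floor_le (by linarith)
  have hMge : P/R - 3/2 < (M:ℝ) := by
    have := Nat.sub_one_lt_floor (P/R - 1/2)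
    calc P/R - 3/2 = (P/R - 1/2) - 1 := by ring
    _ < (⌊P/R - 1/2⌋₊ : ℝ) := this
  have hM1' : (1:ℝ) ≤ (M:ℝ) := by exact_mod_cast hM1
  have hRM : P/3 ≤ (R:ℝ) * M := by
    rcases le_or_gt (P/R) 3 with h | h
    · have hP3 : P ≤ 3 * R := by
        have := (div_le_iff₀ hRpos).mp h; linarith
      nlinarith
    · have h1 : P/(2*R) < (M:ℝ) := by
        have h2 : P/(2*(R:ℝ)) = (P/R)/2 := by ring
        rw [h2]; linarith
      have := (div_le_iff₀ (by positivity : (0:ℝ) < 2*R)).mp h1.le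
      nlinarith
  have hup : (R:ℝ) * M + R/2 ≤ P := by
    have h1 := mul_le_mul_of_nonneg_left hMle hRpos.le
    have h2 : (R:ℝ) * (P/R - 1/2) = P - R/2 := by field_simp
    rw [h2] at h1; linarith
  -- the box S
  set m : ℕ := (M + 2)/2 with hmdef
  have hm1 : 1 ≤ m := by omega
  have hmM : m ≤ M := by omega
  have h2m : M + 1 ≤ 2 * m := by omega
  set k : ℕ := M - m + 1 with hkdef
  have hkM : M ≤ 2 * k := by omega
  set S : Finset (Fin d → ℤ) := Fintype.piFinset fun _ : Fin d => Finset.Icc (m:ℤ) (M:ℤ)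
    with hSdef
  have hScard : S.card = k ^ d := by
    rw [hSdef, Fintype.card_piFinset]
    simp only [Int.card_Icc]
    rw [Finset.prod_const, Finset.card_univ, Fintype.card_fin]
    congr 1
    omega
  -- coordinate bounds for x
  have hxc : ∀ i, |((x i : ℝ))| ≤ (R:ℝ)/2 := by
    intro i
    have h1 := coord_le_linf x i
    have h2 : (((x i).natAbs : ℝ)) = |((x i : ℝ))| := by
      push_cast [Nat.cast_natAbs]; norm_num
    rw [h2] at h1; linarith
  -- coordinate bounds for x + R•u, u ∈ S
  have hyc : ∀ u ∈ S, ∀ i, (R:ℝ) * M / 2 ≤ (((x + R • u) i).natAbs : ℝ) ∧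
      (((x + R • u) i).natAbs : ℝ) ≤ P := by
    intro u hu i
    have hui : (m:ℤ) ≤ u i ∧ u i ≤ (M:ℤ) := by
      have := (Fintype.mem_piFinset.mp hu) i
      simpa using this
    have hyi : ((x + R • u) i : ℤ) = x i + (R:ℤ) * u i := by
      simp [Pi.add_apply, Pi.smul_apply]
    have hval : (((x + R • u) i).natAbs : ℝ) = |((x i : ℝ)) + (R:ℝ) * (u i : ℝ)| := by
      rw [hyi]; push_cast [Nat.cast_natAbs]; norm_num
    have hul : ((m:ℝ)) ≤ (u i : ℝ) := by exact_mod_cast hui.1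
    have huu : ((u i : ℝ)) ≤ (M:ℝ) := by exact_mod_cast hui.2
    have hmr : ((M:ℝ) + 1) / 2 ≤ (m:ℝ) := by
      have : ((M:ℝ)) + 1 ≤ 2 * m := by exact_mod_cast h2m
      linarith
    have habs := abs_le.mp (hxc i)
    constructor
    · rw [hval]
      have hpos : (R:ℝ) * M / 2 ≤ (x i : ℝ) + (R:ℝ) * (u i : ℝ) := by
        have h3 : (R:ℝ) * (((M:ℝ)+1)/2) ≤ (R:ℝ) * (u i : ℝ) :=
          mul_le_mul_of_nonneg_left (le_trans hmr hul) hRpos.le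
        nlinarith
      exact le_trans hpos (le_abs_self _)
    · rw [hval, abs_le]
      refine ⟨?_, ?_⟩
      · have h4 : (0:ℝ) ≤ (R:ℝ) * (u i : ℝ) := by
          have : (0:ℝ) ≤ (u i : ℝ) := le_trans (by positivity) hul
          positivity
        nlinarith
      · have h5 : (R:ℝ) * (u i : ℝ) ≤ (R:ℝ) * M :=
          mul_le_mul_of_nonneg_left huu hRpos.le
        linarith
  have hP1 : (1:ℝ) ≤ P := by linarith
  -- per-term lower bound on the box
  have hterm : ∀ u ∈ S, a * P ^ e / 144 ≤ ((G (x + R • u) : ℝ)) := by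
    intro u hu
    set y := x + R • u with hy
    have hlu : linf y ≤ P := linf_le_of_coords hd y P (fun i => (hyc u hu i).2)
    have hjapu : jap y ≤ P := max_le hlu hP1
    have hjapl : P / 6 ≤ jap y := by
      have h1 := (hyc u hu ⟨0, hd⟩).1
      have h2 := coord_le_linf y ⟨0, hd⟩
      have h3 : P / 6 ≤ linf y := by nlinarith
      exact le_trans h3 (le_max_left _ _)
    have hjpos : (0:ℝ) < jap y := lt_of_lt_of_le (by positivity) hjapl
    have key : P ^ e / 144 ≤ jap y ^ e := by
      rcases le_or_gt e 0 with hle | hlt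
      · have h1 := Real.rpow_le_rpow_of_nonpos hjpos hjapu hle
        have h2 : (0:ℝ) < jap y ^ e := Real.rpow_pos_of_pos hjpos e
        have h3 : (0:ℝ) < P ^ e := Real.rpow_pos_of_pos hPpos e
        nlinarith
      · have h1 : (P/6) ^ e ≤ jap y ^ e :=
          Real.rpow_le_rpow (by positivity) hjapl hlt.le
        have h2 : (P/6 : ℝ) ^ e = P ^ e / 6 ^ e := Real.div_rpow hPpos.le (by norm_num : (0:ℝ) ≤ 6) e
        have h3 : (6:ℝ) ^ e ≤ 6 ^ (2:ℝ) :=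
          Real.rpow_le_rpow_of_exponent_le (by norm_num) (by rw [he]; linarith)
        have h4 : (6:ℝ) ^ (2:ℝ) = 36 := by
          rw [show (2:ℝ) = ((2:ℕ):ℝ) by norm_num, Real.rpow_natCast]; norm_num
        have h5 : (0:ℝ) < 6 ^ e := Real.rpow_pos_of_pos (by norm_num) e
        have h6' : (0:ℝ) < P ^ e := Real.rpow_pos_of_pos hPpos e
        have h7 : P ^ e / 36 ≤ P ^ e / 6 ^ e := by
          apply div_le_div_of_nonneg_left h6'.le h5
          rw [← h4]; exact h3
        rw [← h2] at h7
        linarith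
    have hGy := hG y hlu
    have h8 : a * (P ^ e / 144) ≤ a * jap y ^ e :=
      mul_le_mul_of_nonneg_left key ha.le
    calc a * P ^ e / 144 = a * (P ^ e / 144) := by ring
    _ ≤ a * jap y ^ e := h8
    _ ≤ ((G y : ℝ)) := hGy
  -- lower bound on the sum over S
  have hk : P/(6*R) ≤ (k:ℝ) := by
    have hMk : (M:ℝ) ≤ 2*(k:ℝ) := by exact_mod_cast hkM
    rw [div_le_iff₀ (by positivity)]
    nlinarith
  have key2 : (P:ℝ)^(d:ℕ) * P^e = s₁^α * ξ^α := by
    rw [← Real.rpow_natCast P d, ← Real.rpow_add hPpos, he]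
    rw [show (d:ℝ) + (α - d) = α by ring]
    exact Real.mul_rpow hs₁.le hξ.le
  have hSsum : c₃ * (ξ^α/(R:ℝ)^d) ≤ ∑ u ∈ S, ((G (x + R•u) : ℝ)) := by
    have h1 := Finset.card_nsmul_le_sum S (fun u => ((G (x + R•u) : ℝ))) (a*P^e/144) hterm
    rw [nsmul_eq_mul] at h1
    have hqpos : (0:ℝ) ≤ a*P^e/144 := by
      have := Real.rpow_pos_of_pos hPpos e; positivity
    have h2 : (P/(6*R))^d * (a*P^e/144) ≤ (S.card:ℝ) * (a*P^e/144) := by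
      apply mul_le_mul_of_nonneg_right _ hqpos
      have : ((S.card : ℝ)) = ((k:ℝ))^d := by rw [hScard]; push_cast; ring
      rw [this]
      exact pow_le_pow_left₀ (by positivity) hk d
    have h3 : c₃ * (ξ^α/(R:ℝ)^d) = (P/(6*R))^d * (a*P^e/144) := by
      have expand : (P/(6*(R:ℝ)))^d * (a*P^e/144)
          = ((P:ℝ)^(d:ℕ) * P^e) * a / (144 * ((6:ℝ)^d * (R:ℝ)^d)) := by
        rw [div_pow, mul_pow]; ring
      rw [hc₃def, expand, key2]
      field_simp
    rw [h3]
    exact le_trans h2 h1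
  -- the term u = 0
  have hjx : (0:ℝ) < jap x := lt_of_lt_of_le one_pos (le_max_right _ _)
  have hA0 : (0:ℝ) ≤ jap x ^ e := (Real.rpow_pos_of_pos hjx e).le
  have hGx : a * jap x ^ e ≤ ((G x : ℝ)) := hG x (by linarith)
  have h0S : (0 : Fin d → ℤ) ∉ S := by
    intro h
    have h1 := (Fintype.mem_piFinset.mp h) ⟨0, hd⟩
    simp only [Pi.zero_apply, Finset.mem_Icc] at h1
    omega
  have hB0 : (0:ℝ) ≤ ξ^α/(R:ℝ)^d := by positivity
  set T : Finset (Fin d → ℤ) := insert (0 : Fin d → ℤ) S with hTdef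
  have hTsum : ∑ u ∈ T, ((G (x + R•u) : ℝ)) = ((G x : ℝ)) + ∑ u ∈ S, ((G (x+R•u) : ℝ)) := by
    rw [hTdef, Finset.sum_insert h0S]
    simp
  have hreal : min a c₃ * (jap x ^ e + ξ^α/(R:ℝ)^d) ≤ ∑ u ∈ T, ((G (x + R•u) : ℝ)) := by
    rw [hTsum]
    have h1 : min a c₃ * jap x ^ e ≤ a * jap x ^ e :=
      mul_le_mul_of_nonneg_right (min_le_left _ _) hA0
    have h2 : min a c₃ * (ξ^α/(R:ℝ)^d) ≤ c₃ * (ξ^α/(R:ℝ)^d) :=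
      mul_le_mul_of_nonneg_right (min_le_right _ _) hB0
    have h3 : min a c₃ * (jap x ^ e + ξ^α/(R:ℝ)^d)
        = min a c₃ * jap x ^ e + min a c₃ * (ξ^α/(R:ℝ)^d) := mul_add _ _ _
    linarith
  calc ENNReal.ofReal (min a c₃ * (jap x ^ e + ξ^α/(R:ℝ)^d))
      ≤ ENNReal.ofReal (∑ u ∈ T, ((G (x + R•u) : ℝ))) := ENNReal.ofReal_le_ofReal hreal
    _ = ∑ u ∈ T, ((G (x + R•u) : ℝ≥0∞)) := by
        rw [ENNReal.ofReal_sum_of_nonneg (fun i _ => (G _).coe_nonneg)]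
        simp [ENNReal.ofReal_coe_nnreal]
    _ ≤ ∑' u : Fin d → ℤ, ((G (x + R•u) : ℝ≥0∞)) := ENNReal.sum_le_tsum T
end

section
/- Let α > 0, d > 2α, ξ ∈ [1,∞), and K > 0. Suppose G : ℤ^d → [0,∞) satisfies G(x) ≤ K⟨x⟩^{-(d-α)}(1 + |x|/ξ)^{-2α} for all x ∈ ℤ^d. Then there is a constant C = C(d,α,K) > 0, independent of ξ, such that the convolution (G∗G)(x) = ∑_{y∈ℤ^d} G(x−y)G(y) satisfies (G∗G)(x) ≤ C⟨x⟩^{-(d-2α)}(1 + |x|/ξ)^{-3α} for all x ∈ ℤ^d. -/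
open scoped ENNReal NNReal BigOperators

namespace ConvAux
variable {d : ℕ}
def nn (y : Fin d → ℤ) : ℕ := Finset.univ.sup fun i => (y i).natAbs
def jn (y : Fin d → ℤ) : ℕ := max (nn y) 1
def kap (y : Fin d → ℤ) : ℕ := Nat.log 2 (jn y)
lemma one_le_jn (y : Fin d → ℤ) : 1 ≤ jn y := le_max_right _ _
lemma jn_ne_zero (y : Fin d → ℤ) : jn y ≠ 0 := Nat.one_le_iff_ne_zero.mp (one_le_jn y)
lemma nn_le_jn (y : Fin d → ℤ) : nn y ≤ jn y := le_max_left _ _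
lemma natAbs_le_nn (y : Fin d → ℤ) (i : Fin d) : (y i).natAbs ≤ nn y :=
  Finset.le_sup (f := fun i => (y i).natAbs) (Finset.mem_univ i)

lemma linf_eq (y : Fin d → ℤ) : linf y = (nn y : ℝ) := rfl

lemma jap_eq (y : Fin d → ℤ) : jap y = (jn y : ℝ) := by
  simp [jap, linf_eq, jn, Nat.cast_max]

lemma nn_add_le (a b : Fin d → ℤ) : nn (a + b) ≤ nn a + nn b := by
  apply Finset.sup_le
  intro i _
  calc ((a + b) i).natAbs = (a i + b i).natAbs := rfl
    _ ≤ (a i).natAbs + (b i).natAbs := Int.natAbs_add_le _ _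
    _ ≤ nn a + nn b := Nat.add_le_add (natAbs_le_nn a i) (natAbs_le_nn b i)

lemma nn_triangle (x y : Fin d → ℤ) : nn x ≤ nn (x - y) + nn y := by
  have := nn_add_le (x - y) y
  simpa using this

lemma jn_half (x y : Fin d → ℤ) (h : 2 * jn y ≤ jn x) : jn x ≤ 2 * jn (x - y) := by
  have h1 : 1 ≤ jn y := one_le_jn y
  have h2 : nn x = jn x := by
    have : 2 ≤ jn x := le_trans (by omega) h
    simp only [jn] at this ⊢
    omega
  have h3 := nn_triangle x y
  have h4 : nn y ≤ jn y := nn_le_jn y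
  have h5 : nn (x - y) ≤ jn (x - y) := nn_le_jn (x - y)
  omega

lemma nn_half (x y : Fin d → ℤ) (h : 2 * jn y ≤ jn x) : nn x ≤ 2 * nn (x - y) := by
  have h1 : 1 ≤ jn y := one_le_jn y
  have h2 : nn x = jn x := by
    have : 2 ≤ jn x := le_trans (by omega) h
    simp only [jn] at this ⊢
    omega
  have h3 := nn_triangle x y
  have h4 : nn y ≤ jn y := nn_le_jn y
  omega

lemma pow_kap_le (y : Fin d → ℤ) : 2 ^ kap y ≤ jn y :=
  Nat.pow_log_le_self 2 (jn_ne_zero y)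

lemma jn_lt_pow (y : Fin d → ℤ) : jn y < 2 ^ (kap y + 1) :=
  Nat.lt_pow_succ_log_self (by norm_num) _

/-- The cube of radius `M` as a finset. -/
noncomputable def cube (d M : ℕ) : Finset (Fin d → ℤ) :=
  Fintype.piFinset fun _ : Fin d => Finset.Icc (-(M : ℤ)) (M : ℤ)

lemma mem_cube {M : ℕ} {y : Fin d → ℤ} (h : ∀ i, (y i).natAbs ≤ M) : y ∈ cube d M := by
  simp only [cube, Fintype.mem_piFinset, Finset.mem_Icc]
  intro i
  have := h i
  omega

lemma card_cube (M : ℕ) : (cube d M).card = (2 * M + 1) ^ d := by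
  simp only [cube, Fintype.card_piFinset, Int.card_Icc]
  have : ((M : ℤ) + 1 - (-(M : ℤ))).toNat = 2 * M + 1 := by omega
  rw [show (M:ℤ) + 1 - (-(M:ℤ)) = (M:ℤ)+1+(M:ℤ) by ring] at this
  simp [this]

/-- Fiberwise bound: tsum over one fiber of `kap`. -/
lemma tsum_fiber_le (g : (Fin d → ℤ) → ℝ≥0∞) (k : ℕ) (c : ℝ≥0∞)
    (hg : ∀ y, kap y = k → g y ≤ c) (hg0 : ∀ y, kap y ≠ k → g y = 0) :
    ∑' y : Fin d → ℤ, g y ≤ ((2 : ℝ≥0∞) ^ (k + 3)) ^ d * c := by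
  have hsub : ∀ y : Fin d → ℤ, kap y = k → y ∈ cube d (2 ^ (k + 1)) := by
    intro y hy
    apply mem_cube
    intro i
    calc (y i).natAbs ≤ nn y := natAbs_le_nn y i
      _ ≤ jn y := nn_le_jn y
      _ ≤ 2 ^ (k + 1) := by have := jn_lt_pow y; rw [hy] at this; omega
  have h1 : ∑' y : Fin d → ℤ, g y = ∑ y ∈ cube d (2 ^ (k + 1)), g y := by
    apply tsum_eq_sum
    intro y hy
    apply hg0
    intro hk
    exact hy (hsub y hk)
  rw [h1]
  calc ∑ y ∈ cube d (2 ^ (k + 1)), g y ≤ (cube d (2 ^ (k + 1))).card • c := by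
        apply Finset.sum_le_card_nsmul
        intro y _
        by_cases hk : kap y = k
        · exact hg y hk
        · rw [hg0 y hk]; exact zero_le
    _ = ((cube d (2 ^ (k+1))).card : ℝ≥0∞) * c := by rw [nsmul_eq_mul]
    _ ≤ ((2 : ℝ≥0∞) ^ (k + 3)) ^ d * c := by
        apply mul_le_mul_left
        rw [card_cube]
        have hle : (2 * 2 ^ (k + 1) + 1 : ℕ) ^ d ≤ (2 ^ (k + 3) : ℕ) ^ d := by
          apply Nat.pow_le_pow_left
          have h3 : (2:ℕ) ^ (k+3) = 2 * 2 ^ (k+1) + 2 ^ (k+2) := by ring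
          have h2 : 1 ≤ (2:ℕ) ^ (k+2) := Nat.one_le_two_pow
          omega
        calc (((2 * 2 ^ (k + 1) + 1) ^ d : ℕ) : ℝ≥0∞) ≤ (((2 ^ (k + 3)) ^ d : ℕ) : ℝ≥0∞) := by
              exact_mod_cast Nat.cast_le.mpr hle
          _ = ((2 : ℝ≥0∞) ^ (k + 3)) ^ d := by push_cast; norm_num

/-- Decomposition along dyadic fibers. -/
lemma tsum_le_dyadic (g : (Fin d → ℤ) → ℝ≥0∞) (w : ℕ → ℝ≥0∞)
    (h : ∀ y, g y ≤ w (kap y)) :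
    ∑' y : Fin d → ℤ, g y ≤ ∑' k : ℕ, ((2 : ℝ≥0∞) ^ (k + 3)) ^ d * w k := by
  calc ∑' y : Fin d → ℤ, g y ≤ ∑' y : Fin d → ℤ, w (kap y) := ENNReal.tsum_le_tsum h
    _ = ∑' (σ : Σ k : ℕ, {y : Fin d → ℤ // kap y = k}), w (kap ((Equiv.sigmaFiberEquiv kap) σ)) :=
        ((Equiv.sigmaFiberEquiv kap).tsum_eq (fun y => w (kap y))).symm
    _ = ∑' (k : ℕ) (y : {y : Fin d → ℤ // kap y = k}), w (kap y.1) := ENNReal.tsum_sigma' _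
    _ ≤ ∑' k : ℕ, ((2 : ℝ≥0∞) ^ (k + 3)) ^ d * w k := by
        apply ENNReal.tsum_le_tsum
        intro k
        have : ∀ y : {y : Fin d → ℤ // kap y = k}, w (kap y.1) = w k := by
          intro y; rw [y.2]
        calc ∑' (y : {y : Fin d → ℤ // kap y = k}), w (kap y.1)
            = ∑' (y : {y : Fin d → ℤ // kap y = k}), w k := by
              exact tsum_congr this
          _ = ∑' y : Fin d → ℤ, Set.indicator {y | kap y = k} (fun _ => w k) y := by
              exact tsum_subtype {y | kap y = k} (fun _ => w k)
          _ ≤ ((2 : ℝ≥0∞) ^ (k + 3)) ^ d * w k := by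
              apply tsum_fiber_le
              · intro y _
                by_cases hy : kap y = k
                · simp [Set.indicator, hy]
                · simp [Set.indicator, hy]
              · intro y hy
                simp [Set.indicator, hy]

/-- shifted geometric series -/
lemma tsum_ite_ge (r : ℝ≥0∞) (m : ℕ) :
    ∑' k : ℕ, (if m ≤ k then r ^ k else 0) = r ^ m * ∑' k : ℕ, r ^ k := by
  induction m with
  | zero => simp
  | succ m ih =>
    have hz := tsum_eq_zero_add' (f := fun k : ℕ => if m + 1 ≤ k then r ^ k else 0)
      ENNReal.summable
    rw [hz, if_neg (by omega), zero_add]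
    have hstep : ∀ k : ℕ, (if m + 1 ≤ k + 1 then r ^ (k+1) else 0)
        = r * (if m ≤ k then r ^ k else 0) := by
      intro k
      by_cases h : m ≤ k
      · simp [h, Nat.succ_le_succ h, pow_succ, mul_comm]
      · simp [h, fun hh => h (Nat.succ_le_succ_iff.mp hh)]
    calc ∑' k : ℕ, (if m + 1 ≤ k + 1 then r ^ (k+1) else 0)
        = ∑' k : ℕ, r * (if m ≤ k then r ^ k else 0) := tsum_congr hstep
      _ = r * (r ^ m * ∑' k : ℕ, r ^ k) := by rw [ENNReal.tsum_mul_left, ih]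
      _ = r ^ (m+1) * ∑' k : ℕ, r ^ k := by rw [pow_succ, mul_comm (r^m) r, mul_assoc]

lemma rpow_anti {x y : ℝ≥0∞} (h : x ≤ y) {e : ℝ} (he : e ≤ 0) : y ^ e ≤ x ^ e := by
  have h1 : y ^ e = (y ^ (-e))⁻¹ := by rw [← ENNReal.rpow_neg, neg_neg]
  have h2 : x ^ e = (x ^ (-e))⁻¹ := by rw [← ENNReal.rpow_neg, neg_neg]
  rw [h1, h2]
  exact ENNReal.inv_le_inv.mpr (ENNReal.rpow_le_rpow h (neg_nonneg.mpr he))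

lemma two_rpow_ne_top {e : ℝ} : (2 : ℝ≥0∞) ^ e ≠ ⊤ := by
  rcases le_or_gt 0 e with h | h
  · exact (ENNReal.rpow_lt_top_of_nonneg h (by norm_num)).ne
  · rw [show e = -(-e) by ring, ENNReal.rpow_neg]
    simp only [ne_eq, ENNReal.inv_eq_top]
    intro hc
    have : (0:ℝ≥0∞) < 2 ^ (-e) := by
      apply ENNReal.rpow_pos <;> norm_num
    rw [hc] at this; exact lt_irrefl 0 this

lemma two_rpow_ne_zero {e : ℝ} : (2 : ℝ≥0∞) ^ e ≠ 0 :=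
  (ENNReal.rpow_pos (by norm_num) (by norm_num)).ne'

lemma geom_ratio_lt_one {b : ℝ} (hb : 0 < b) : (2 : ℝ≥0∞) ^ (-b) < 1 := by
  rw [ENNReal.rpow_neg, ENNReal.inv_lt_one]
  calc (1 : ℝ≥0∞) = 1 ^ b := (ENNReal.one_rpow b).symm
    _ < 2 ^ b := by
      apply ENNReal.rpow_lt_rpow (by norm_num) hb

lemma two_rpow_mul_two_rpow (e f : ℝ) :
    (2:ℝ≥0∞) ^ e * (2:ℝ≥0∞) ^ f = (2:ℝ≥0∞) ^ (e + f) :=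
  (ENNReal.rpow_add e f (by norm_num) (by norm_num)).symm

lemma pow_as_rpow (m : ℕ) : (2:ℝ≥0∞) ^ m = (2:ℝ≥0∞) ^ ((m:ℕ):ℝ) := by
  rw [ENNReal.rpow_natCast]

/-- Near sum: `∑_{⟨y⟩ ≤ R} ⟨y⟩^{a-d} ≤ c R^a`. -/
lemma sum_near (d : ℕ) {a : ℝ} (ha : 0 < a) (had : a ≤ d) :
    ∃ c : ℝ≥0∞, c ≠ ⊤ ∧ ∀ R : ℝ, 1 ≤ R →
      ∑' y : Fin d → ℤ, (if (jn y : ℝ) ≤ R then ((jn y : ℕ) : ℝ≥0∞) ^ (a - d) else 0)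
        ≤ c * ENNReal.ofReal R ^ a := by
  set q : ℝ≥0∞ := (2:ℝ≥0∞) ^ (-a) with hqdef
  have hq1 : q < 1 := geom_ratio_lt_one ha
  refine ⟨(2:ℝ≥0∞) ^ (3 * (d:ℝ)) * (1 - q)⁻¹, ?_, ?_⟩
  · apply ENNReal.mul_ne_top two_rpow_ne_top
    exact ENNReal.inv_ne_top.mpr (tsub_pos_of_lt hq1).ne'
  intro R hR
  have hRpos : (0:ℝ) < R := by linarith
  have hfl : (1:ℕ) ≤ ⌊R⌋₊ := Nat.le_floor (by exact_mod_cast hR)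
  set K : ℕ := Nat.log 2 ⌊R⌋₊ with hKdef
  -- step 1: dyadic decomposition
  have step1 : ∑' y : Fin d → ℤ, (if (jn y : ℝ) ≤ R then ((jn y : ℕ) : ℝ≥0∞) ^ (a - d) else 0)
      ≤ ∑' k : ℕ, ((2:ℝ≥0∞) ^ (k + 3)) ^ d *
          (if ((2:ℝ)^k ≤ R) then ((2:ℝ≥0∞) ^ ((k:ℕ):ℝ)) ^ (a - (d:ℝ)) else 0) := by
    apply tsum_le_dyadic
    intro y
    by_cases hy : (jn y : ℝ) ≤ R
    · rw [if_pos hy]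
      have hpk : ((2:ℝ)^(kap y) ≤ R) := by
        refine le_trans ?_ hy
        exact_mod_cast Nat.cast_le.mpr (pow_kap_le y)
      rw [if_pos hpk]
      apply rpow_anti
      · rw [← pow_as_rpow]
        exact_mod_cast Nat.cast_le.mpr (pow_kap_le y)
      · linarith
    · rw [if_neg hy]
      exact zero_le
  -- step 2: simplify each summand
  have step2 : ∀ k : ℕ, ((2:ℝ≥0∞) ^ (k + 3)) ^ d *
        (if ((2:ℝ)^k ≤ R) then ((2:ℝ≥0∞) ^ ((k:ℕ):ℝ)) ^ (a - (d:ℝ)) else 0)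
      ≤ (2:ℝ≥0∞) ^ (3 * (d:ℝ)) * (if k ≤ K then (2:ℝ≥0∞) ^ ((K:ℝ) * a) * q ^ (K - k) else 0) := by
    intro k
    by_cases hk : ((2:ℝ)^k ≤ R)
    · rw [if_pos hk]
      have hkK : k ≤ K := by
        rw [hKdef]
        rw [Nat.le_log_iff_pow_le (by norm_num) (by omega)]
        apply Nat.le_floor
        push_cast
        exact hk
      rw [if_pos hkK]
      have e1 : ((2:ℝ≥0∞) ^ (k + 3)) ^ d = (2:ℝ≥0∞) ^ ((((k+3)*d : ℕ):ℕ):ℝ) := by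
        rw [ENNReal.rpow_natCast, pow_mul]
      have e2 : ((2:ℝ≥0∞) ^ ((k:ℕ):ℝ)) ^ (a - (d:ℝ)) = (2:ℝ≥0∞) ^ ((k:ℝ) * (a - d)) := by
        rw [← ENNReal.rpow_mul]
      have e3 : q ^ (K - k) = (2:ℝ≥0∞) ^ ((-a) * ((K - k : ℕ):ℝ)) := by
        rw [hqdef, ← ENNReal.rpow_natCast ((2:ℝ≥0∞)^(-a)) (K - k), ← ENNReal.rpow_mul]
      rw [e1, e2, e3, two_rpow_mul_two_rpow, two_rpow_mul_two_rpow, two_rpow_mul_two_rpow]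
      apply le_of_eq
      congr 1
      have hc : ((K - k : ℕ):ℝ) = (K:ℝ) - (k:ℝ) := Nat.cast_sub hkK
      push_cast [hc]
      ring
    · rw [if_neg hk, mul_zero]
      exact zero_le
  -- step 3: evaluate the geometric sum
  have step3 : ∑' k : ℕ, (if k ≤ K then (2:ℝ≥0∞) ^ ((K:ℝ) * a) * q ^ (K - k) else 0)
      ≤ (2:ℝ≥0∞) ^ ((K:ℝ) * a) * (1 - q)⁻¹ := by
    rw [tsum_eq_sum (s := Finset.range (K + 1)) (by
      intro k hk
      rw [if_neg]
      simp only [Finset.mem_range] at hk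
      omega)]
    have : ∀ k ∈ Finset.range (K + 1),
        (if k ≤ K then (2:ℝ≥0∞) ^ ((K:ℝ) * a) * q ^ (K - k) else 0)
          = (2:ℝ≥0∞) ^ ((K:ℝ) * a) * q ^ (K - k) := by
      intro k hk
      simp only [Finset.mem_range] at hk
      rw [if_pos (by omega)]
    rw [Finset.sum_congr rfl this, ← Finset.mul_sum]
    apply mul_le_mul_right
    have hrefl : ∑ k ∈ Finset.range (K + 1), q ^ (K - k)
        = ∑ k ∈ Finset.range (K + 1), q ^ k := by
      have := Finset.sum_range_reflect (fun j => q ^ j) (K + 1)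
      simpa using this
    rw [hrefl]
    calc ∑ k ∈ Finset.range (K + 1), q ^ k ≤ ∑' k : ℕ, q ^ k := ENNReal.sum_le_tsum _
      _ = (1 - q)⁻¹ := ENNReal.tsum_geometric q
  -- step 4: 2^{Ka} ≤ (ofReal R)^a
  have step4 : (2:ℝ≥0∞) ^ ((K:ℝ) * a) ≤ ENNReal.ofReal R ^ a := by
    rw [ENNReal.rpow_mul]
    apply ENNReal.rpow_le_rpow _ (le_of_lt ha)
    rw [← pow_as_rpow]
    calc ((2:ℝ≥0∞)) ^ K = (((2^K : ℕ):ℕ) : ℝ≥0∞) := by push_cast; ring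
      _ ≤ ENNReal.ofReal R := by
        rw [← ENNReal.ofReal_natCast]
        apply ENNReal.ofReal_le_ofReal
        calc ((2^K : ℕ) : ℝ) ≤ (⌊R⌋₊ : ℝ) := by
              exact_mod_cast Nat.cast_le.mpr (Nat.pow_log_le_self 2 (by omega))
          _ ≤ R := Nat.floor_le (le_of_lt hRpos)
  calc ∑' y : Fin d → ℤ, (if (jn y : ℝ) ≤ R then ((jn y : ℕ) : ℝ≥0∞) ^ (a - d) else 0)
      ≤ ∑' k : ℕ, ((2:ℝ≥0∞) ^ (k + 3)) ^ d *
          (if ((2:ℝ)^k ≤ R) then ((2:ℝ≥0∞) ^ ((k:ℕ):ℝ)) ^ (a - (d:ℝ)) else 0) := step1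
    _ ≤ ∑' k : ℕ, (2:ℝ≥0∞) ^ (3 * (d:ℝ)) *
          (if k ≤ K then (2:ℝ≥0∞) ^ ((K:ℝ) * a) * q ^ (K - k) else 0) :=
        ENNReal.tsum_le_tsum step2
    _ = (2:ℝ≥0∞) ^ (3 * (d:ℝ)) *
          ∑' k : ℕ, (if k ≤ K then (2:ℝ≥0∞) ^ ((K:ℝ) * a) * q ^ (K - k) else 0) :=
        ENNReal.tsum_mul_left
    _ ≤ (2:ℝ≥0∞) ^ (3 * (d:ℝ)) * ((2:ℝ≥0∞) ^ ((K:ℝ) * a) * (1 - q)⁻¹) :=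
        mul_le_mul_right step3 _
    _ ≤ (2:ℝ≥0∞) ^ (3 * (d:ℝ)) * (ENNReal.ofReal R ^ a * (1 - q)⁻¹) := by
        exact mul_le_mul_right (mul_le_mul_left step4 _) _
    _ = (2:ℝ≥0∞) ^ (3 * (d:ℝ)) * (1 - q)⁻¹ * ENNReal.ofReal R ^ a := by ring

/-- Far sum: `∑_{⟨y⟩ ≥ R} ⟨y⟩^{-d-b} ≤ c R^{-b}`. -/
lemma sum_far (d : ℕ) {b : ℝ} (hb : 0 < b) :
    ∃ c : ℝ≥0∞, c ≠ ⊤ ∧ ∀ R : ℝ, 1 ≤ R →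
      ∑' y : Fin d → ℤ, (if R ≤ (jn y : ℝ) then ((jn y : ℕ) : ℝ≥0∞) ^ (-(d:ℝ) - b) else 0)
        ≤ c * ENNReal.ofReal R ^ (-b) := by
  set q : ℝ≥0∞ := (2:ℝ≥0∞) ^ (-b) with hqdef
  have hq1 : q < 1 := geom_ratio_lt_one hb
  refine ⟨(2:ℝ≥0∞) ^ (3 * (d:ℝ) + 2 * b) * (1 - q)⁻¹, ?_, ?_⟩
  · exact ENNReal.mul_ne_top two_rpow_ne_top (ENNReal.inv_ne_top.mpr (tsub_pos_of_lt hq1).ne')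
  intro R hR
  have hRpos : (0:ℝ) < R := by linarith
  have hfl : (1:ℕ) ≤ ⌊R⌋₊ := Nat.le_floor (by exact_mod_cast hR)
  set K : ℕ := Nat.log 2 ⌊R⌋₊ with hKdef
  have step1 : ∑' y : Fin d → ℤ, (if R ≤ (jn y : ℝ) then ((jn y : ℕ) : ℝ≥0∞) ^ (-(d:ℝ) - b) else 0)
      ≤ ∑' k : ℕ, ((2:ℝ≥0∞) ^ (k + 3)) ^ d *
          (if R ≤ (2:ℝ)^(k+1) then ((2:ℝ≥0∞) ^ ((k:ℕ):ℝ)) ^ (-(d:ℝ) - b) else 0) := by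
    apply tsum_le_dyadic
    intro y
    by_cases hy : R ≤ (jn y : ℝ)
    · rw [if_pos hy]
      have hpk : R ≤ (2:ℝ)^(kap y + 1) := by
        refine le_trans hy ?_
        exact_mod_cast Nat.cast_le.mpr (le_of_lt (jn_lt_pow y))
      rw [if_pos hpk]
      apply rpow_anti
      · rw [← pow_as_rpow]
        exact_mod_cast Nat.cast_le.mpr (pow_kap_le y)
      · have : (0:ℝ) ≤ (d:ℝ) := Nat.cast_nonneg d
        linarith
    · rw [if_neg hy]
      exact zero_le
  have step2 : ∀ k : ℕ, ((2:ℝ≥0∞) ^ (k + 3)) ^ d *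
        (if R ≤ (2:ℝ)^(k+1) then ((2:ℝ≥0∞) ^ ((k:ℕ):ℝ)) ^ (-(d:ℝ) - b) else 0)
      ≤ (2:ℝ≥0∞) ^ (3 * (d:ℝ)) * (if K - 1 ≤ k then q ^ k else 0) := by
    intro k
    by_cases hk : R ≤ (2:ℝ)^(k+1)
    · rw [if_pos hk]
      have hKk : K - 1 ≤ k := by
        have h1 : (2:ℕ)^K ≤ ⌊R⌋₊ := Nat.pow_log_le_self 2 (by omega)
        have h2 : (⌊R⌋₊ : ℝ) ≤ R := Nat.floor_le (le_of_lt hRpos)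
        have h3 : ((2:ℕ)^K : ℝ) ≤ (2:ℝ)^(k+1) := by
          calc ((2:ℕ)^K : ℝ) ≤ (⌊R⌋₊ : ℝ) := by exact_mod_cast h1
            _ ≤ R := h2
            _ ≤ (2:ℝ)^(k+1) := hk
        have h4 : (2:ℕ)^K ≤ (2:ℕ)^(k+1) := by exact_mod_cast h3
        have h5 : K ≤ k + 1 := (Nat.pow_le_pow_iff_right (by norm_num)).mp h4
        omega
      rw [if_pos hKk]
      have e1 : ((2:ℝ≥0∞) ^ (k + 3)) ^ d = (2:ℝ≥0∞) ^ ((((k+3)*d : ℕ):ℕ):ℝ) := by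
        rw [ENNReal.rpow_natCast, pow_mul]
      have e2 : ((2:ℝ≥0∞) ^ ((k:ℕ):ℝ)) ^ (-(d:ℝ) - b) = (2:ℝ≥0∞) ^ ((k:ℝ) * (-(d:ℝ) - b)) := by
        rw [← ENNReal.rpow_mul]
      have e3 : q ^ k = (2:ℝ≥0∞) ^ ((-b) * (k:ℝ)) := by
        rw [hqdef, ← ENNReal.rpow_natCast ((2:ℝ≥0∞)^(-b)) k, ← ENNReal.rpow_mul]
      rw [e1, e2, e3, two_rpow_mul_two_rpow, two_rpow_mul_two_rpow]
      apply ENNReal.rpow_le_rpow_of_exponent_le (by norm_num)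
      push_cast
      ring_nf
      nlinarith [Nat.cast_nonneg (α := ℝ) k, Nat.cast_nonneg (α := ℝ) d]
    · rw [if_neg hk, mul_zero]
      exact zero_le
  have step3 : ∑' k : ℕ, (if K - 1 ≤ k then q ^ k else 0) = q ^ (K - 1) * (1 - q)⁻¹ := by
    rw [tsum_ite_ge q (K - 1), ENNReal.tsum_geometric]
  have step4 : q ^ (K - 1) ≤ (2:ℝ≥0∞) ^ (2 * b) * ENNReal.ofReal R ^ (-b) := by
    have hR2 : ENNReal.ofReal R ≤ (2:ℝ≥0∞) ^ (K + 1) := by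
      have h1 : R < ((2:ℕ)^(K+1) : ℝ) := by
        calc R < (⌊R⌋₊ : ℝ) + 1 := Nat.lt_floor_add_one R
          _ ≤ ((2:ℕ)^(K+1) : ℝ) := by
            exact_mod_cast Nat.cast_le.mpr (Nat.lt_pow_succ_log_self (by norm_num) ⌊R⌋₊)
      calc ENNReal.ofReal R ≤ ENNReal.ofReal ((2:ℕ)^(K+1) : ℝ) :=
            ENNReal.ofReal_le_ofReal (le_of_lt h1)
        _ = (2:ℝ≥0∞) ^ (K + 1) := by
            rw [show ((2:ℕ)^(K+1) : ℝ) = (((2^(K+1) : ℕ)):ℝ) by push_cast; ring,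
              ENNReal.ofReal_natCast]
            push_cast
            ring
    have h2 : ENNReal.ofReal R ^ (-b) ≥ ((2:ℝ≥0∞) ^ (K + 1)) ^ (-b) :=
      rpow_anti hR2 (by linarith)
    have h3 : ((2:ℝ≥0∞) ^ (K + 1)) ^ (-b) = (2:ℝ≥0∞) ^ (((K:ℝ) + 1) * (-b)) := by
      rw [← ENNReal.rpow_natCast (2:ℝ≥0∞) (K+1), ← ENNReal.rpow_mul]
      congr 1
      push_cast
      ring
    have h4 : q ^ (K - 1) = (2:ℝ≥0∞) ^ ((-b) * ((K - 1 : ℕ):ℝ)) := by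
      rw [hqdef, ← ENNReal.rpow_natCast ((2:ℝ≥0∞)^(-b)) (K - 1), ← ENNReal.rpow_mul]
    have h5 : (-b) * ((K - 1 : ℕ):ℝ) ≤ 2 * b + ((K:ℝ) + 1) * (-b) := by
      have h6 : (K:ℝ) - 1 ≤ ((K - 1 : ℕ):ℝ) := by
        rcases Nat.eq_zero_or_pos K with h | h
        · simp [h]
        · rw [Nat.cast_sub h]; push_cast; linarith
      nlinarith
    calc q ^ (K - 1) = (2:ℝ≥0∞) ^ ((-b) * ((K - 1 : ℕ):ℝ)) := h4
      _ ≤ (2:ℝ≥0∞) ^ (2 * b + ((K:ℝ) + 1) * (-b)) :=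
          ENNReal.rpow_le_rpow_of_exponent_le (by norm_num) h5
      _ = (2:ℝ≥0∞) ^ (2 * b) * (2:ℝ≥0∞) ^ (((K:ℝ) + 1) * (-b)) :=
          (two_rpow_mul_two_rpow _ _).symm
      _ = (2:ℝ≥0∞) ^ (2 * b) * ((2:ℝ≥0∞) ^ (K + 1)) ^ (-b) := by rw [h3]
      _ ≤ (2:ℝ≥0∞) ^ (2 * b) * ENNReal.ofReal R ^ (-b) := mul_le_mul_right h2 _
  calc ∑' y : Fin d → ℤ, (if R ≤ (jn y : ℝ) then ((jn y : ℕ) : ℝ≥0∞) ^ (-(d:ℝ) - b) else 0)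
      ≤ ∑' k : ℕ, ((2:ℝ≥0∞) ^ (k + 3)) ^ d *
          (if R ≤ (2:ℝ)^(k+1) then ((2:ℝ≥0∞) ^ ((k:ℕ):ℝ)) ^ (-(d:ℝ) - b) else 0) := step1
    _ ≤ ∑' k : ℕ, (2:ℝ≥0∞) ^ (3 * (d:ℝ)) * (if K - 1 ≤ k then q ^ k else 0) :=
        ENNReal.tsum_le_tsum step2
    _ = (2:ℝ≥0∞) ^ (3 * (d:ℝ)) * ∑' k : ℕ, (if K - 1 ≤ k then q ^ k else 0) :=
        ENNReal.tsum_mul_left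
    _ = (2:ℝ≥0∞) ^ (3 * (d:ℝ)) * (q ^ (K - 1) * (1 - q)⁻¹) := by rw [step3]
    _ ≤ (2:ℝ≥0∞) ^ (3 * (d:ℝ)) * (((2:ℝ≥0∞) ^ (2 * b) * ENNReal.ofReal R ^ (-b)) * (1 - q)⁻¹) :=
        mul_le_mul_right (mul_le_mul_left step4 _) _
    _ = (2:ℝ≥0∞) ^ (3 * (d:ℝ) + 2 * b) * (1 - q)⁻¹ * ENNReal.ofReal R ^ (-b) := by
        rw [← two_rpow_mul_two_rpow]
        ring

noncomputable def Jf {d : ℕ} (y : Fin d → ℤ) : ℝ≥0∞ := ((jn y : ℕ) : ℝ≥0∞)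
noncomputable def Uf {d : ℕ} (ξ : ℝ) (y : Fin d → ℤ) : ℝ≥0∞ := ENNReal.ofReal (1 + linf y / ξ)
noncomputable def Hf {d : ℕ} (α ξ : ℝ) (z : Fin d → ℤ) : ℝ≥0∞ :=
  Jf z ^ (α - (d:ℝ)) * Uf ξ z ^ (-(2*α))

lemma one_le_Jf (y : Fin d → ℤ) : 1 ≤ Jf y := by
  have := one_le_jn y
  unfold Jf
  exact_mod_cast Nat.one_le_cast.mpr this

lemma Jf_ne_zero (y : Fin d → ℤ) : Jf y ≠ 0 := by
  have := one_le_Jf y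
  intro h; rw [h] at this; simp at this

lemma Jf_ne_top (y : Fin d → ℤ) : Jf y ≠ ⊤ := by
  unfold Jf; exact ENNReal.natCast_ne_top _

lemma linf_nonneg (y : Fin d → ℤ) : 0 ≤ linf y := Nat.cast_nonneg _

lemma one_le_Uf {ξ : ℝ} (hξ : 1 ≤ ξ) (y : Fin d → ℤ) : 1 ≤ Uf ξ y := by
  unfold Uf
  rw [show (1:ℝ≥0∞) = ENNReal.ofReal 1 by simp]
  apply ENNReal.ofReal_le_ofReal
  have h1 : 0 ≤ linf y / ξ := div_nonneg (linf_nonneg y) (by linarith)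
  linarith

lemma Uf_ne_zero {ξ : ℝ} (hξ : 1 ≤ ξ) (y : Fin d → ℤ) : Uf ξ y ≠ 0 := by
  have := one_le_Uf hξ y
  intro h; rw [h] at this; simp at this

lemma Uf_ne_top {ξ : ℝ} (y : Fin d → ℤ) : Uf ξ y ≠ ⊤ := ENNReal.ofReal_ne_top

lemma jap_pos (y : Fin d → ℤ) : 0 < jap y := lt_of_lt_of_le one_pos (le_max_right _ _)

lemma ofReal_jap (y : Fin d → ℤ) : ENNReal.ofReal (jap y) = Jf y := by
  rw [jap_eq, ENNReal.ofReal_natCast]; rfl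

/-- conversion of the real product form into `ℝ≥0∞`. -/
lemma ofReal_form {ξ : ℝ} (hξ : 1 ≤ ξ) (A s t : ℝ) (hA : 0 ≤ A) (x : Fin d → ℤ) :
    ENNReal.ofReal (A * jap x ^ s * (1 + linf x / ξ) ^ t)
      = ENNReal.ofReal A * Jf x ^ s * Uf ξ x ^ t := by
  have hu : (0:ℝ) < 1 + linf x / ξ := by
    have h1 : 0 ≤ linf x / ξ := div_nonneg (linf_nonneg x) (by linarith)
    linarith
  rw [ENNReal.ofReal_mul (mul_nonneg hA (Real.rpow_nonneg (jap_pos x).le s)),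
    ENNReal.ofReal_mul hA, ← ENNReal.ofReal_rpow_of_pos (jap_pos x),
    ← ENNReal.ofReal_rpow_of_pos hu, ofReal_jap]
  rfl

/-- `u ≤ v/c` (as `v ≤ c u`) implies `u^e ≤ c^{-e} v^e` for `e ≤ 0`. -/
lemma scale_rpow {c u v : ℝ≥0∞} (hc0 : c ≠ 0) (hct : c ≠ ⊤) (hu0 : u ≠ 0)
    (h : v ≤ c * u) {e : ℝ} (he : e ≤ 0) : u ^ e ≤ c ^ (-e) * v ^ e := by
  have h1 : (c * u) ^ e ≤ v ^ e := rpow_anti h he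
  rw [ENNReal.mul_rpow_of_ne_zero hc0 hu0] at h1
  calc u ^ e = c ^ (-e) * (c ^ e * u ^ e) := by
        rw [← mul_assoc, ← ENNReal.rpow_add _ _ hc0 hct]
        simp
    _ ≤ c ^ (-e) * v ^ e := mul_le_mul_right h1 _

lemma tsum_sub_left (x : Fin d → ℤ) (f : (Fin d → ℤ) → ℝ≥0∞) :
    ∑' y, f (x - y) = ∑' y, f y := (Equiv.subLeft x).tsum_eq f

lemma ofReal_two : ENNReal.ofReal (2:ℝ) = 2 := by
  rw [show (2:ℝ) = ((2:ℕ):ℝ) by norm_num, ENNReal.ofReal_natCast]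
  norm_num

lemma ofReal_four : ENNReal.ofReal (4:ℝ) = 4 := by
  rw [show (4:ℝ) = ((4:ℕ):ℝ) by norm_num, ENNReal.ofReal_natCast]
  norm_num

lemma Uf_scale {ξ : ℝ} (hξ : 1 ≤ ξ) {x z : Fin d → ℤ} (h : linf x ≤ 2 * linf z + 2) :
    Uf ξ x ≤ 4 * Uf ξ z := by
  unfold Uf
  rw [← ofReal_four, ← ENNReal.ofReal_mul (by norm_num)]
  apply ENNReal.ofReal_le_ofReal
  have hξ0 : (0:ℝ) < ξ := by linarith
  have h1 : linf x / ξ ≤ (2 * linf z + 2) / ξ := by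
    apply div_le_div_of_nonneg_right h hξ0.le
  have h2 : (2 * linf z + 2) / ξ = 2 * (linf z / ξ) + 2 / ξ := by ring
  have h3 : 2 / ξ ≤ 2 := by
    rw [div_le_iff₀ hξ0]; nlinarith
  have h4 : 0 ≤ linf z / ξ := div_nonneg (linf_nonneg z) (le_of_lt hξ0)
  rw [h2] at h1
  linarith

/-- Region A pointwise bound on the far factor. -/
lemma Hf_shift_bound {α ξ : ℝ} (hα : 0 < α) (hαd : α ≤ (d:ℝ)) (hξ : 1 ≤ ξ)
    (x y : Fin d → ℤ) (h : 2 * jn y ≤ jn x) :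
    Hf α ξ (x - y) ≤ (2:ℝ≥0∞) ^ ((d:ℝ) + α) * (Jf x ^ (α - (d:ℝ)) * Uf ξ x ^ (-(2*α))) := by
  have hJ : Jf x ≤ 2 * Jf (x - y) := by
    have h0 := jn_half x y h
    unfold Jf
    calc ((jn x : ℕ) : ℝ≥0∞) ≤ ((2 * jn (x-y) : ℕ) : ℝ≥0∞) := by
          exact_mod_cast Nat.cast_le.mpr h0
      _ = 2 * ((jn (x-y) : ℕ) : ℝ≥0∞) := by push_cast; ring
  have hU : Uf ξ x ≤ 2 * Uf ξ (x - y) := by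
    unfold Uf
    rw [← ofReal_two, ← ENNReal.ofReal_mul (by norm_num)]
    apply ENNReal.ofReal_le_ofReal
    have hξ0 : (0:ℝ) < ξ := by linarith
    have hnn : linf x ≤ 2 * linf (x - y) := by
      rw [linf_eq, linf_eq]
      have := nn_half x y h
      push_cast
      exact_mod_cast Nat.cast_le.mpr this
    have h1 : linf x / ξ ≤ (2 * linf (x-y)) / ξ := div_le_div_of_nonneg_right hnn hξ0.le
    have h2 : (2 * linf (x-y)) / ξ = 2 * (linf (x-y) / ξ) := by ring
    rw [h2] at h1
    have h4 : 0 ≤ linf (x-y) / ξ := div_nonneg (linf_nonneg (x-y)) (le_of_lt hξ0)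
    linarith
  have h1 : Jf (x-y) ^ (α - (d:ℝ)) ≤ 2 ^ ((d:ℝ) - α) * Jf x ^ (α - (d:ℝ)) := by
    have := scale_rpow (c := 2) (by norm_num) (by norm_num) (Jf_ne_zero (x-y)) hJ
      (e := α - (d:ℝ)) (by linarith)
    rw [neg_sub] at this
    exact this
  have h2 : Uf ξ (x-y) ^ (-(2*α)) ≤ 2 ^ (2*α) * Uf ξ x ^ (-(2*α)) := by
    have := scale_rpow (c := 2) (by norm_num) (by norm_num) (Uf_ne_zero hξ (x-y)) hU
      (e := -(2*α)) (by linarith)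
    rw [neg_neg] at this
    exact this
  calc Hf α ξ (x-y) = Jf (x-y) ^ (α - (d:ℝ)) * Uf ξ (x-y) ^ (-(2*α)) := rfl
    _ ≤ (2 ^ ((d:ℝ) - α) * Jf x ^ (α - (d:ℝ))) * (2 ^ (2*α) * Uf ξ x ^ (-(2*α))) :=
        mul_le_mul' h1 h2
    _ = (2 ^ ((d:ℝ) - α) * 2 ^ (2*α)) * (Jf x ^ (α - (d:ℝ)) * Uf ξ x ^ (-(2*α))) := by ring
    _ = (2:ℝ≥0∞) ^ ((d:ℝ) + α) * (Jf x ^ (α - (d:ℝ)) * Uf ξ x ^ (-(2*α))) := by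
        rw [two_rpow_mul_two_rpow, show (d:ℝ) - α + 2*α = (d:ℝ) + α by ring]

/-- `min(⟨x⟩, ξ)^α ≤ 2^α ⟨x⟩^α (1+|x|/ξ)^{-α}`. -/
lemma min_bound {α ξ : ℝ} (hα : 0 < α) (hξ : 1 ≤ ξ) (x : Fin d → ℤ) :
    ENNReal.ofReal (min (jap x) ξ) ^ α ≤ (2:ℝ≥0∞) ^ α * (Jf x ^ α * Uf ξ x ^ (-α)) := by
  have hξ0 : (0:ℝ) < ξ := by linarith
  have hreal : min (jap x) ξ * (1 + linf x / ξ) ≤ 2 * jap x := by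
    rcases le_total (linf x) ξ with h | h
    · have h1 : 1 + linf x / ξ ≤ 2 := by
        have : linf x / ξ ≤ 1 := (div_le_one hξ0).mpr h
        linarith
      have h2 : min (jap x) ξ ≤ jap x := min_le_left _ _
      have h3 : 0 ≤ min (jap x) ξ := le_min (jap_pos x).le (by linarith)
      nlinarith [jap_pos x]
    · have hj : jap x = linf x := by
        rw [jap]
        exact max_eq_left (by linarith)
      have h2 : min (jap x) ξ ≤ ξ := min_le_right _ _
      have h3 : ξ * (1 + linf x / ξ) = ξ + linf x := by field_simp
      have h4 : 0 ≤ 1 + linf x / ξ := by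
        have := div_nonneg (linf_nonneg x) hξ0.le
        linarith
      calc min (jap x) ξ * (1 + linf x / ξ) ≤ ξ * (1 + linf x / ξ) :=
            mul_le_mul_of_nonneg_right h2 h4
        _ = ξ + linf x := h3
        _ ≤ 2 * jap x := by rw [hj]; linarith
  have henn : ENNReal.ofReal (min (jap x) ξ) * Uf ξ x ≤ 2 * Jf x := by
    unfold Uf
    rw [← ENNReal.ofReal_mul (le_min (jap_pos x).le (by linarith)), ← ofReal_jap,
      ← ofReal_two, ← ENNReal.ofReal_mul (by norm_num)]
    exact ENNReal.ofReal_le_ofReal hreal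
  have hrp : (ENNReal.ofReal (min (jap x) ξ) * Uf ξ x) ^ α ≤ ((2:ℝ≥0∞) * Jf x) ^ α :=
    ENNReal.rpow_le_rpow henn hα.le
  rw [ENNReal.mul_rpow_of_ne_zero (by
      simp only [ne_eq, ENNReal.ofReal_eq_zero, not_le]
      exact lt_min (jap_pos x) hξ0) (Uf_ne_zero hξ x),
    ENNReal.mul_rpow_of_ne_zero (by norm_num) (Jf_ne_zero x)] at hrp
  have hfin : ENNReal.ofReal (min (jap x) ξ) ^ α
      = (ENNReal.ofReal (min (jap x) ξ) ^ α * Uf ξ x ^ α) * Uf ξ x ^ (-α) := by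
    rw [mul_assoc, ← ENNReal.rpow_add _ _ (Uf_ne_zero hξ x) (Uf_ne_top x)]
    simp
  rw [hfin]
  calc (ENNReal.ofReal (min (jap x) ξ) ^ α * Uf ξ x ^ α) * Uf ξ x ^ (-α)
      ≤ ((2:ℝ≥0∞) ^ α * Jf x ^ α) * Uf ξ x ^ (-α) := mul_le_mul_left hrp _
    _ = (2:ℝ≥0∞) ^ α * (Jf x ^ α * Uf ξ x ^ (-α)) := by ring

lemma one_le_jap (x : Fin d → ℤ) : 1 ≤ jap x := le_max_right _ _

lemma near_region (d : ℕ) {α : ℝ} (hα : 0 < α) (hd : 2*α < (d:ℝ)) :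
    ∃ c : ℝ≥0∞, c ≠ ⊤ ∧ ∀ ξ : ℝ, 1 ≤ ξ → ∀ x : Fin d → ℤ,
      ∑' y : Fin d → ℤ, (if 2 * jn y ≤ jn x then Hf α ξ y else 0)
        ≤ c * (Jf x ^ α * Uf ξ x ^ (-α)) := by
  have hαd : α ≤ (d:ℝ) := by linarith
  obtain ⟨c₁, hc₁t, hc₁⟩ := sum_near d hα hαd
  obtain ⟨c₂, hc₂t, hc₂⟩ := sum_far d hα
  refine ⟨(c₁ + c₂) * 2 ^ α, ?_, ?_⟩
  · exact ENNReal.mul_ne_top (by simp [hc₁t, hc₂t]) two_rpow_ne_top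
  intro ξ hξ x
  set m := min (jap x) ξ with hm
  have hm1 : (1:ℝ) ≤ m := le_min (one_le_jap x) hξ
  have hξ0 : (0:ℝ) < ξ := by linarith
  -- pointwise split
  set f1 : (Fin d → ℤ) → ℝ≥0∞ :=
    fun y => if (jn y : ℝ) ≤ m then ((jn y:ℕ):ℝ≥0∞) ^ (α - (d:ℝ)) else 0 with hf1
  set f2 : (Fin d → ℤ) → ℝ≥0∞ :=
    fun y => if 2 * jn y ≤ jn x ∧ ξ ≤ (jn y:ℝ) then
      ENNReal.ofReal ξ ^ (2*α) * ((jn y:ℕ):ℝ≥0∞) ^ (-(d:ℝ) - α) else 0 with hf2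
  have hpt : ∀ y : Fin d → ℤ, (if 2 * jn y ≤ jn x then Hf α ξ y else 0)
      ≤ f1 y + f2 y := by
    intro y
    simp only [hf1, hf2]
    by_cases hc : 2 * jn y ≤ jn x
    · rw [if_pos hc]
      rcases le_or_gt (jn y : ℝ) ξ with hyξ | hyξ
      · -- near part
        have hyx : (jn y : ℝ) ≤ jap x := by
          rw [jap_eq]
          exact_mod_cast Nat.cast_le.mpr (by omega : jn y ≤ jn x)
        rw [if_pos (le_min hyx hyξ)]
        have hU1 : Uf ξ y ^ (-(2*α)) ≤ 1 := by
          have := rpow_anti (one_le_Uf hξ y) (by linarith : -(2*α) ≤ 0)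
          rwa [ENNReal.one_rpow] at this
        have : Hf α ξ y ≤ ((jn y:ℕ):ℝ≥0∞) ^ (α - (d:ℝ)) := by
          unfold Hf Jf
          exact mul_le_of_le_one_right' hU1
        exact le_trans this le_self_add
      · -- far part
        have hmlt : m < (jn y:ℝ) := lt_of_le_of_lt (min_le_right _ _) hyξ
        rw [if_neg (not_le.mpr hmlt), if_pos (show 2 * jn y ≤ jn x ∧ ξ ≤ (jn y:ℝ) from ⟨hc, hyξ.le⟩), zero_add]
        have hnn : linf y = jap y := by
          have h2 : 2 ≤ jn y := by
            by_contra hcon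
            push_neg at hcon
            interval_cases h : jn y <;> simp_all <;> linarith
          rw [jap_eq, linf_eq]
          congr 1
          simp only [jn] at h2 ⊢
          omega
        have hJU : Jf y ≤ ENNReal.ofReal ξ * Uf ξ y := by
          rw [← ofReal_jap]
          unfold Uf
          rw [← ENNReal.ofReal_mul (by linarith)]
          apply ENNReal.ofReal_le_ofReal
          have : ξ * (1 + linf y / ξ) = ξ + linf y := by field_simp
          rw [this, ← hnn]
          have := linf_nonneg y
          have := one_le_jap y
          rw [hnn]
          linarith
        have hUb : Uf ξ y ^ (-(2*α)) ≤ ENNReal.ofReal ξ ^ (2*α) * Jf y ^ (-(2*α)) := by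
          have := scale_rpow (c := ENNReal.ofReal ξ)
            (by simp only [ne_eq, ENNReal.ofReal_eq_zero, not_le]; linarith)
            ENNReal.ofReal_ne_top (Uf_ne_zero hξ y) hJU (e := -(2*α)) (by linarith)
          rwa [neg_neg] at this
        have : Hf α ξ y ≤ ENNReal.ofReal ξ ^ (2*α) * ((jn y:ℕ):ℝ≥0∞) ^ (-(d:ℝ) - α) := by
          unfold Hf
          calc Jf y ^ (α - (d:ℝ)) * Uf ξ y ^ (-(2*α))
              ≤ Jf y ^ (α - (d:ℝ)) * (ENNReal.ofReal ξ ^ (2*α) * Jf y ^ (-(2*α))) :=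
                mul_le_mul_right hUb _
            _ = ENNReal.ofReal ξ ^ (2*α) * (Jf y ^ (α - (d:ℝ)) * Jf y ^ (-(2*α))) := by ring
            _ = ENNReal.ofReal ξ ^ (2*α) * ((jn y:ℕ):ℝ≥0∞) ^ (-(d:ℝ) - α) := by
                rw [← ENNReal.rpow_add _ _ (Jf_ne_zero y) (Jf_ne_top y),
                  show α - (d:ℝ) + -(2*α) = -(d:ℝ) - α by ring]
                rfl
        exact this
    · rw [if_neg hc]
      exact zero_le
  -- sum the two parts
  have hsum2 : ∑' y : Fin d → ℤ, (if 2 * jn y ≤ jn x then Hf α ξ y else 0)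
      ≤ c₁ * ENNReal.ofReal m ^ α + ∑' y : Fin d → ℤ, f2 y := by
    calc ∑' y : Fin d → ℤ, (if 2 * jn y ≤ jn x then Hf α ξ y else 0)
        ≤ ∑' y : Fin d → ℤ, (f1 y + f2 y) := ENNReal.tsum_le_tsum hpt
      _ = (∑' y : Fin d → ℤ, f1 y) + ∑' y : Fin d → ℤ, f2 y := ENNReal.tsum_add
      _ ≤ c₁ * ENNReal.ofReal m ^ α + ∑' y : Fin d → ℤ, f2 y := by
          apply add_le_add_left
          rw [hf1]
          exact hc₁ m hm1
  have hsecond : ∑' y : Fin d → ℤ, f2 y ≤ c₂ * ENNReal.ofReal m ^ α := by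
    rw [hf2]
    by_cases hcase : ξ ≤ jap x
    · have hmin : m = ξ := min_eq_right hcase
      calc ∑' y : Fin d → ℤ, (if 2 * jn y ≤ jn x ∧ ξ ≤ (jn y:ℝ) then
              ENNReal.ofReal ξ ^ (2*α) * ((jn y:ℕ):ℝ≥0∞) ^ (-(d:ℝ) - α) else 0)
          ≤ ∑' y : Fin d → ℤ, ENNReal.ofReal ξ ^ (2*α) *
              (if ξ ≤ (jn y:ℝ) then ((jn y:ℕ):ℝ≥0∞) ^ (-(d:ℝ) - α) else 0) := by
            apply ENNReal.tsum_le_tsum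
            intro y
            by_cases hcc : 2 * jn y ≤ jn x ∧ ξ ≤ (jn y:ℝ)
            · rw [if_pos hcc, if_pos hcc.2]
            · rw [if_neg hcc]; exact zero_le
        _ = ENNReal.ofReal ξ ^ (2*α) *
            ∑' y : Fin d → ℤ, (if ξ ≤ (jn y:ℝ) then ((jn y:ℕ):ℝ≥0∞) ^ (-(d:ℝ) - α) else 0) :=
            ENNReal.tsum_mul_left
        _ ≤ ENNReal.ofReal ξ ^ (2*α) * (c₂ * ENNReal.ofReal ξ ^ (-α)) :=
            mul_le_mul_right (hc₂ ξ hξ) _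
        _ = c₂ * (ENNReal.ofReal ξ ^ (2*α) * ENNReal.ofReal ξ ^ (-α)) := by ring
        _ = c₂ * ENNReal.ofReal m ^ α := by
            rw [← ENNReal.rpow_add _ _
              (by simp only [ne_eq, ENNReal.ofReal_eq_zero, not_le]; linarith)
              ENNReal.ofReal_ne_top, show 2*α + -α = α by ring, hmin]
    · have hzero : ∀ y : Fin d → ℤ, (if 2 * jn y ≤ jn x ∧ ξ ≤ (jn y:ℝ) then
          ENNReal.ofReal ξ ^ (2*α) * ((jn y:ℕ):ℝ≥0∞) ^ (-(d:ℝ) - α) else 0) = 0 := by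
        intro y
        rw [if_neg]
        rintro ⟨h1, h2⟩
        apply hcase
        calc ξ ≤ (jn y : ℝ) := h2
          _ ≤ (jn x : ℝ) := by exact_mod_cast Nat.cast_le.mpr (by omega : jn y ≤ jn x)
          _ = jap x := (jap_eq x).symm
      rw [tsum_congr hzero]
      simp
  calc ∑' y : Fin d → ℤ, (if 2 * jn y ≤ jn x then Hf α ξ y else 0)
      ≤ c₁ * ENNReal.ofReal m ^ α + c₂ * ENNReal.ofReal m ^ α :=
        le_trans hsum2 (add_le_add_right hsecond _)

    _ = (c₁ + c₂) * ENNReal.ofReal m ^ α := by ring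
    _ ≤ (c₁ + c₂) * ((2:ℝ≥0∞) ^ α * (Jf x ^ α * Uf ξ x ^ (-α))) :=
        mul_le_mul_right (min_bound hα hξ x) _
    _ = (c₁ + c₂) * 2 ^ α * (Jf x ^ α * Uf ξ x ^ (-α)) := by ring

/-- Region C pointwise U-factor bound. -/
lemma Uf_regC {α ξ : ℝ} (hα : 0 < α) (hξ : 1 ≤ ξ) {x z : Fin d → ℤ}
    (h : jn x ≤ 2 * jn z) :
    Uf ξ z ^ (-(2*α)) ≤ (4:ℝ≥0∞) ^ (2*α) * Uf ξ x ^ (-(2*α)) := by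
  have hlin : linf x ≤ 2 * linf z + 2 := by
    have h1 : nn x ≤ 2 * nn z + 2 := by
      have h2 : nn x ≤ jn x := nn_le_jn x
      have h3 : jn z ≤ nn z + 1 := by simp only [jn]; omega
      omega
    rw [linf_eq, linf_eq]
    exact_mod_cast Nat.cast_le.mpr h1
  have hU : Uf ξ x ≤ 4 * Uf ξ z := Uf_scale hξ hlin
  have := scale_rpow (c := 4) (by norm_num) (by norm_num) (Uf_ne_zero hξ z) hU
    (e := -(2*α)) (by linarith)
  rwa [neg_neg] at this

/-- Region C pointwise J-factor bound. -/
lemma Jf_regC {α : ℝ} (hαd : α ≤ (d:ℝ)) (x y : Fin d → ℤ) :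
    Jf (x - y) ^ (α - (d:ℝ)) * Jf y ^ (α - (d:ℝ))
      ≤ Jf y ^ (2*(α - (d:ℝ))) + Jf (x - y) ^ (2*(α - (d:ℝ))) := by
  have he : α - (d:ℝ) ≤ 0 := by linarith
  rcases le_total (Jf y) (Jf (x - y)) with h | h
  · have h1 : Jf (x - y) ^ (α - (d:ℝ)) ≤ Jf y ^ (α - (d:ℝ)) := rpow_anti h he
    calc Jf (x - y) ^ (α - (d:ℝ)) * Jf y ^ (α - (d:ℝ))
        ≤ Jf y ^ (α - (d:ℝ)) * Jf y ^ (α - (d:ℝ)) := mul_le_mul_left h1 _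
      _ = Jf y ^ (2*(α - (d:ℝ))) := by
          rw [← ENNReal.rpow_add _ _ (Jf_ne_zero y) (Jf_ne_top y)]
          congr 1; ring
      _ ≤ _ := le_self_add
  · have h1 : Jf y ^ (α - (d:ℝ)) ≤ Jf (x - y) ^ (α - (d:ℝ)) := rpow_anti h he
    calc Jf (x - y) ^ (α - (d:ℝ)) * Jf y ^ (α - (d:ℝ))
        ≤ Jf (x - y) ^ (α - (d:ℝ)) * Jf (x - y) ^ (α - (d:ℝ)) := mul_le_mul_right h1 _
      _ = Jf (x - y) ^ (2*(α - (d:ℝ))) := by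
          rw [← ENNReal.rpow_add _ _ (Jf_ne_zero (x-y)) (Jf_ne_top (x-y))]
          congr 1; ring
      _ ≤ _ := le_add_self

/-- tail sum for region C. -/
lemma tail_region (d : ℕ) {α : ℝ} (hα : 0 < α) (hd : 2*α < (d:ℝ)) :
    ∃ c : ℝ≥0∞, c ≠ ⊤ ∧ ∀ x : Fin d → ℤ,
      ∑' y : Fin d → ℤ, (if jn x ≤ 2 * jn y then ((jn y:ℕ):ℝ≥0∞) ^ (2*(α - (d:ℝ))) else 0)
        ≤ c * Jf x ^ (2*α - (d:ℝ)) := by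
  have hb : (0:ℝ) < (d:ℝ) - 2*α := by linarith
  obtain ⟨c₃, hc₃t, hc₃⟩ := sum_far d hb
  refine ⟨c₃ * 2 ^ ((d:ℝ) - 2*α), ?_, ?_⟩
  · exact ENNReal.mul_ne_top hc₃t two_rpow_ne_top
  intro x
  set R : ℝ := max (jap x / 2) 1 with hR
  have hR1 : (1:ℝ) ≤ R := le_max_right _ _
  have hexp : -(d:ℝ) - ((d:ℝ) - 2*α) = 2*(α - (d:ℝ)) + (d:ℝ) - (d:ℝ) := by ring
  have hpt : ∀ y : Fin d → ℤ,
      (if jn x ≤ 2 * jn y then ((jn y:ℕ):ℝ≥0∞) ^ (2*(α - (d:ℝ))) else 0)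
        ≤ (if R ≤ (jn y:ℝ) then ((jn y:ℕ):ℝ≥0∞) ^ (-(d:ℝ) - ((d:ℝ) - 2*α)) else 0) := by
    intro y
    by_cases hc : jn x ≤ 2 * jn y
    · rw [if_pos hc, if_pos]
      · apply le_of_eq
        congr 1
        ring
      · apply max_le
        · rw [jap_eq]
          rw [div_le_iff₀ (by norm_num : (0:ℝ) < 2)]
          have : ((jn x : ℕ) : ℝ) ≤ ((2 * jn y : ℕ) : ℝ) := Nat.cast_le.mpr hc
          push_cast at this
          linarith
        · exact_mod_cast Nat.one_le_cast.mpr (one_le_jn y)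
    · rw [if_neg hc]
      exact zero_le
  have hRJ : (ENNReal.ofReal R) ^ (2*α - (d:ℝ)) ≤ 2 ^ ((d:ℝ) - 2*α) * Jf x ^ (2*α - (d:ℝ)) := by
    have hJle : Jf x ≤ 2 * ENNReal.ofReal R := by
      rw [← ofReal_jap, ← ofReal_two, ← ENNReal.ofReal_mul (by norm_num)]
      apply ENNReal.ofReal_le_ofReal
      have : jap x / 2 ≤ R := le_max_left _ _
      linarith
    have := scale_rpow (c := 2) (by norm_num) (by norm_num)
      (by simp only [ne_eq, ENNReal.ofReal_eq_zero, not_le]; linarith : ENNReal.ofReal R ≠ 0)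
      hJle (e := 2*α - (d:ℝ)) (by linarith)
    rwa [neg_sub] at this
  calc ∑' y : Fin d → ℤ, (if jn x ≤ 2 * jn y then ((jn y:ℕ):ℝ≥0∞) ^ (2*(α - (d:ℝ))) else 0)
      ≤ ∑' y : Fin d → ℤ,
          (if R ≤ (jn y:ℝ) then ((jn y:ℕ):ℝ≥0∞) ^ (-(d:ℝ) - ((d:ℝ) - 2*α)) else 0) :=
        ENNReal.tsum_le_tsum hpt
    _ ≤ c₃ * ENNReal.ofReal R ^ (-((d:ℝ) - 2*α)) := hc₃ R hR1
    _ = c₃ * ENNReal.ofReal R ^ (2*α - (d:ℝ)) := by rw [show -((d:ℝ) - 2*α) = 2*α - (d:ℝ) by ring]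
    _ ≤ c₃ * (2 ^ ((d:ℝ) - 2*α) * Jf x ^ (2*α - (d:ℝ))) := mul_le_mul_right hRJ _
    _ = c₃ * 2 ^ ((d:ℝ) - 2*α) * Jf x ^ (2*α - (d:ℝ)) := by ring

lemma four_rpow_ne_top {e : ℝ} : (4:ℝ≥0∞) ^ e ≠ ⊤ := by
  rcases le_or_gt 0 e with h | h
  · exact (ENNReal.rpow_lt_top_of_nonneg h (by norm_num)).ne
  · rw [show e = -(-e) by ring, ENNReal.rpow_neg]
    simp only [ne_eq, ENNReal.inv_eq_top]
    exact (ENNReal.rpow_pos (by norm_num) (by norm_num)).ne'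

lemma main_est (d : ℕ) {α : ℝ} (hα : 0 < α) (hd : 2*α < (d:ℝ)) :
    ∃ c : ℝ≥0∞, c ≠ ⊤ ∧ ∀ ξ : ℝ, 1 ≤ ξ → ∀ x : Fin d → ℤ,
      ∑' y : Fin d → ℤ, Hf α ξ (x - y) * Hf α ξ y
        ≤ c * (Jf x ^ (2*α - (d:ℝ)) * Uf ξ x ^ (-(3*α))) := by
  have hαd : α ≤ (d:ℝ) := by linarith
  obtain ⟨cN, hcNt, hcN⟩ := near_region d hα hd
  obtain ⟨cT, hcTt, hcT⟩ := tail_region d hα hd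
  set cA : ℝ≥0∞ := 2 ^ ((d:ℝ) + α) * cN with hcA
  set cC : ℝ≥0∞ := (4 ^ (2*α) * 4 ^ (2*α)) * (2 * cT) with hcC
  have hcAt : cA ≠ ⊤ := ENNReal.mul_ne_top two_rpow_ne_top hcNt
  have hcCt : cC ≠ ⊤ := by
    apply ENNReal.mul_ne_top (ENNReal.mul_ne_top four_rpow_ne_top four_rpow_ne_top)
    exact ENNReal.mul_ne_top (by norm_num) hcTt
  refine ⟨cA + cA + cC, by simp [hcAt, hcCt], ?_⟩
  intro ξ hξ x
  set M : ℝ≥0∞ := Jf x ^ (2*α - (d:ℝ)) * Uf ξ x ^ (-(3*α)) with hM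
  set FA : (Fin d → ℤ) → ℝ≥0∞ :=
    fun y => if 2 * jn y ≤ jn x then Hf α ξ (x - y) * Hf α ξ y else 0 with hFA
  set FB : (Fin d → ℤ) → ℝ≥0∞ :=
    fun y => if 2 * jn (x - y) ≤ jn x then Hf α ξ (x - y) * Hf α ξ y else 0 with hFB
  set FC : (Fin d → ℤ) → ℝ≥0∞ :=
    fun y => if jn x ≤ 2 * jn y ∧ jn x ≤ 2 * jn (x - y)
      then Hf α ξ (x - y) * Hf α ξ y else 0 with hFC
  -- pointwise cover
  have hsplit : ∀ y : Fin d → ℤ, Hf α ξ (x - y) * Hf α ξ y ≤ FA y + FB y + FC y := by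
    intro y
    by_cases hA : 2 * jn y ≤ jn x
    · have : FA y = Hf α ξ (x - y) * Hf α ξ y := by rw [hFA]; exact if_pos hA
      calc Hf α ξ (x - y) * Hf α ξ y = FA y := this.symm
        _ ≤ FA y + FB y + FC y := le_add_right le_self_add
    · by_cases hB : 2 * jn (x - y) ≤ jn x
      · have : FB y = Hf α ξ (x - y) * Hf α ξ y := by rw [hFB]; exact if_pos hB
        calc Hf α ξ (x - y) * Hf α ξ y = FB y := this.symm
          _ ≤ FA y + FB y + FC y := le_add_right le_add_self
      · have : FC y = Hf α ξ (x - y) * Hf α ξ y := by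
          rw [hFC]; exact if_pos ⟨by omega, by omega⟩
        calc Hf α ξ (x - y) * Hf α ξ y = FC y := this.symm
          _ ≤ FA y + FB y + FC y := le_add_self
  -- region A
  have hregA : ∑' y : Fin d → ℤ, FA y ≤ cA * M := by
    have hpt : ∀ y : Fin d → ℤ, FA y
        ≤ (2 ^ ((d:ℝ) + α) * (Jf x ^ (α - (d:ℝ)) * Uf ξ x ^ (-(2*α))))
          * (if 2 * jn y ≤ jn x then Hf α ξ y else 0) := by
      intro y
      by_cases hc : 2 * jn y ≤ jn x
      · simp only [hFA, if_pos hc]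
        exact mul_le_mul_left (Hf_shift_bound hα hαd hξ x y hc) _
      · simp only [hFA, if_neg hc, mul_zero, le_refl]
    calc ∑' y : Fin d → ℤ, FA y
        ≤ ∑' y : Fin d → ℤ, (2 ^ ((d:ℝ) + α) * (Jf x ^ (α - (d:ℝ)) * Uf ξ x ^ (-(2*α))))
            * (if 2 * jn y ≤ jn x then Hf α ξ y else 0) := ENNReal.tsum_le_tsum hpt
      _ = (2 ^ ((d:ℝ) + α) * (Jf x ^ (α - (d:ℝ)) * Uf ξ x ^ (-(2*α))))
            * ∑' y : Fin d → ℤ, (if 2 * jn y ≤ jn x then Hf α ξ y else 0) :=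
          ENNReal.tsum_mul_left
      _ ≤ (2 ^ ((d:ℝ) + α) * (Jf x ^ (α - (d:ℝ)) * Uf ξ x ^ (-(2*α))))
            * (cN * (Jf x ^ α * Uf ξ x ^ (-α))) := mul_le_mul_right (hcN ξ hξ x) _
      _ = cA * ((Jf x ^ (α - (d:ℝ)) * Jf x ^ α) * (Uf ξ x ^ (-(2*α)) * Uf ξ x ^ (-α))) := by
          rw [hcA]; ring
      _ = cA * M := by
          rw [hM, ← ENNReal.rpow_add _ _ (Jf_ne_zero x) (Jf_ne_top x),
            ← ENNReal.rpow_add _ _ (Uf_ne_zero hξ x) (Uf_ne_top x),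
            show α - (d:ℝ) + α = 2*α - (d:ℝ) by ring,
            show -(2*α) + -α = -(3*α) by ring]
  -- region B = region A by reflection
  have hregB : ∑' y : Fin d → ℤ, FB y = ∑' y : Fin d → ℤ, FA y := by
    calc ∑' y : Fin d → ℤ, FB y = ∑' y : Fin d → ℤ, FB (x - y) := (tsum_sub_left x FB).symm
      _ = ∑' y : Fin d → ℤ, FA y := by
          apply tsum_congr
          intro y
          rw [hFA, hFB]
          simp only [sub_sub_cancel]
          by_cases hc : 2 * jn y ≤ jn x
          · rw [if_pos hc, if_pos hc, mul_comm]
          · rw [if_neg hc, if_neg hc]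
  -- region C
  have hregC : ∑' y : Fin d → ℤ, FC y ≤ cC * M := by
    set g : (Fin d → ℤ) → ℝ≥0∞ :=
      fun z => if jn x ≤ 2 * jn z then ((jn z:ℕ):ℝ≥0∞) ^ (2*(α - (d:ℝ))) else 0 with hg
    have hpt : ∀ y : Fin d → ℤ, FC y
        ≤ ((4 ^ (2*α) * 4 ^ (2*α)) * Uf ξ x ^ (-(3*α))) * (g y + g (x - y)) := by
      intro y
      by_cases hc : jn x ≤ 2 * jn y ∧ jn x ≤ 2 * jn (x - y)
      · simp only [hFC, if_pos hc]
        obtain ⟨h1, h2⟩ := hc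
        have hUU : Uf ξ (x - y) ^ (-(2*α)) * Uf ξ y ^ (-(2*α))
            ≤ (4 ^ (2*α) * 4 ^ (2*α)) * Uf ξ x ^ (-(3*α)) := by
          calc Uf ξ (x - y) ^ (-(2*α)) * Uf ξ y ^ (-(2*α))
              ≤ (4 ^ (2*α) * Uf ξ x ^ (-(2*α))) * (4 ^ (2*α) * Uf ξ x ^ (-(2*α))) :=
                mul_le_mul' (Uf_regC hα hξ h2) (Uf_regC hα hξ h1)
            _ = (4 ^ (2*α) * 4 ^ (2*α)) * (Uf ξ x ^ (-(2*α)) * Uf ξ x ^ (-(2*α))) := by ring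
            _ = (4 ^ (2*α) * 4 ^ (2*α)) * Uf ξ x ^ (-(4*α)) := by
                rw [← ENNReal.rpow_add _ _ (Uf_ne_zero hξ x) (Uf_ne_top x)]
                congr 1; ring
            _ ≤ (4 ^ (2*α) * 4 ^ (2*α)) * Uf ξ x ^ (-(3*α)) := by
                apply mul_le_mul_right
                apply ENNReal.rpow_le_rpow_of_exponent_le (one_le_Uf hξ x)
                linarith
        have hJJ : Jf (x - y) ^ (α - (d:ℝ)) * Jf y ^ (α - (d:ℝ)) ≤ g y + g (x - y) := by
          simp only [hg, if_pos h1, if_pos h2]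
          exact Jf_regC hαd x y
        calc Hf α ξ (x - y) * Hf α ξ y
            = (Jf (x - y) ^ (α - (d:ℝ)) * Jf y ^ (α - (d:ℝ)))
              * (Uf ξ (x - y) ^ (-(2*α)) * Uf ξ y ^ (-(2*α))) := by unfold Hf; ring
          _ ≤ (g y + g (x - y)) * ((4 ^ (2*α) * 4 ^ (2*α)) * Uf ξ x ^ (-(3*α))) :=
              mul_le_mul' hJJ hUU
          _ = ((4 ^ (2*α) * 4 ^ (2*α)) * Uf ξ x ^ (-(3*α))) * (g y + g (x - y)) := by ring
      · simp only [hFC, if_neg hc]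
        exact zero_le
    have hgsum : ∑' y : Fin d → ℤ, g y ≤ cT * Jf x ^ (2*α - (d:ℝ)) := hcT x
    have hgsum2 : ∑' y : Fin d → ℤ, g (x - y) = ∑' y : Fin d → ℤ, g y := tsum_sub_left x g
    calc ∑' y : Fin d → ℤ, FC y
        ≤ ∑' y : Fin d → ℤ, ((4 ^ (2*α) * 4 ^ (2*α)) * Uf ξ x ^ (-(3*α))) * (g y + g (x - y)) :=
          ENNReal.tsum_le_tsum hpt
      _ = ((4 ^ (2*α) * 4 ^ (2*α)) * Uf ξ x ^ (-(3*α)))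
            * ∑' y : Fin d → ℤ, (g y + g (x - y)) := ENNReal.tsum_mul_left
      _ = ((4 ^ (2*α) * 4 ^ (2*α)) * Uf ξ x ^ (-(3*α)))
            * ((∑' y : Fin d → ℤ, g y) + ∑' y : Fin d → ℤ, g (x - y)) := by
          rw [ENNReal.tsum_add]
      _ ≤ ((4 ^ (2*α) * 4 ^ (2*α)) * Uf ξ x ^ (-(3*α)))
            * (cT * Jf x ^ (2*α - (d:ℝ)) + cT * Jf x ^ (2*α - (d:ℝ))) := by
          apply mul_le_mul_right
          rw [hgsum2]
          exact add_le_add hgsum hgsum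
      _ = cC * M := by
          rw [hcC, hM]; ring
  calc ∑' y : Fin d → ℤ, Hf α ξ (x - y) * Hf α ξ y
      ≤ ∑' y : Fin d → ℤ, (FA y + FB y + FC y) := ENNReal.tsum_le_tsum hsplit
    _ = ((∑' y : Fin d → ℤ, FA y) + ∑' y : Fin d → ℤ, FB y) + ∑' y : Fin d → ℤ, FC y := by
        rw [ENNReal.tsum_add, ENNReal.tsum_add]
    _ ≤ (cA * M + cA * M) + cC * M := by
        apply add_le_add
        · apply add_le_add hregA
          rw [hregB]
          exact hregA
        · exact hregC
    _ = (cA + cA + cC) * M := by ring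

end ConvAux

open ConvAux

/-- Convolution estimate: if `G(x) ≤ K ⟨x⟩^{-(d-α)} (1+|x|/ξ)^{-2α}` with `d > 2α`
and `ξ ≥ 1`, then `(G∗G)(x) ≤ C ⟨x⟩^{-(d-2α)} (1+|x|/ξ)^{-3α}`, with
`C = C(d,α,K)` independent of `ξ`. -/
theorem convolution_estimate (d : ℕ) (α K : ℝ) (hα : 0 < α) (hd : 2 * α < (d : ℝ))
    (hK : 0 < K) :
    ∃ C : ℝ, 0 < C ∧
      ∀ (ξ : ℝ), 1 ≤ ξ →
        ∀ G : (Fin d → ℤ) → ℝ≥0,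
          (∀ x : Fin d → ℤ,
            (G x : ℝ) ≤ K * jap x ^ (-((d : ℝ) - α)) * (1 + linf x / ξ) ^ (-(2 * α))) →
          ∀ x : Fin d → ℤ,
            (∑' y : Fin d → ℤ, (G (x - y) : ℝ≥0∞) * (G y : ℝ≥0∞)) ≤
              ENNReal.ofReal
                (C * jap x ^ (-((d : ℝ) - 2 * α)) * (1 + linf x / ξ) ^ (-(3 * α))) := by
  obtain ⟨c, hct, hc⟩ := main_est d hα hd
  set ctot : ℝ≥0∞ := (ENNReal.ofReal K * ENNReal.ofReal K) * c with hctot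
  have hctot_t : ctot ≠ ⊤ :=
    ENNReal.mul_ne_top (ENNReal.mul_ne_top ENNReal.ofReal_ne_top ENNReal.ofReal_ne_top) hct
  refine ⟨ctot.toReal + 1, by positivity, ?_⟩
  intro ξ hξ G hG x
  have hGb : ∀ z : Fin d → ℤ, (G z : ℝ≥0∞) ≤ ENNReal.ofReal K * Hf α ξ z := by
    intro z
    have h1 : (G z : ℝ≥0∞) = ENNReal.ofReal ((G z : ℝ)) := ENNReal.ofReal_coe_nnreal.symm
    rw [h1]
    calc ENNReal.ofReal (G z : ℝ)
        ≤ ENNReal.ofReal (K * jap z ^ (-((d:ℝ) - α)) * (1 + linf z / ξ) ^ (-(2 * α))) :=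
          ENNReal.ofReal_le_ofReal (hG z)
      _ = ENNReal.ofReal K * Jf z ^ (-((d:ℝ) - α)) * Uf ξ z ^ (-(2 * α)) :=
          ofReal_form hξ K _ _ hK.le z
      _ = ENNReal.ofReal K * Hf α ξ z := by
          unfold Hf
          rw [show -((d:ℝ) - α) = α - (d:ℝ) by ring, mul_assoc]
  have hsum : ∑' y : Fin d → ℤ, (G (x - y) : ℝ≥0∞) * (G y : ℝ≥0∞)
      ≤ (ENNReal.ofReal K * ENNReal.ofReal K)
        * ∑' y : Fin d → ℤ, Hf α ξ (x - y) * Hf α ξ y := by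
    calc ∑' y : Fin d → ℤ, (G (x - y) : ℝ≥0∞) * (G y : ℝ≥0∞)
        ≤ ∑' y : Fin d → ℤ,
            (ENNReal.ofReal K * Hf α ξ (x - y)) * (ENNReal.ofReal K * Hf α ξ y) :=
          ENNReal.tsum_le_tsum (fun y => mul_le_mul' (hGb (x - y)) (hGb y))
      _ = ∑' y : Fin d → ℤ,
            (ENNReal.ofReal K * ENNReal.ofReal K) * (Hf α ξ (x - y) * Hf α ξ y) :=
          tsum_congr (fun y => by ring)
      _ = (ENNReal.ofReal K * ENNReal.ofReal K)
            * ∑' y : Fin d → ℤ, Hf α ξ (x - y) * Hf α ξ y := ENNReal.tsum_mul_left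
  have hle : ctot ≤ ENNReal.ofReal (ctot.toReal + 1) := by
    conv_lhs => rw [← ENNReal.ofReal_toReal hctot_t]
    exact ENNReal.ofReal_le_ofReal (by linarith)
  calc ∑' y : Fin d → ℤ, (G (x - y) : ℝ≥0∞) * (G y : ℝ≥0∞)
      ≤ (ENNReal.ofReal K * ENNReal.ofReal K)
          * (c * (Jf x ^ (2*α - (d:ℝ)) * Uf ξ x ^ (-(3*α)))) :=
        le_trans hsum (mul_le_mul_right (hc ξ hξ x) _)
    _ = ctot * (Jf x ^ (2*α - (d:ℝ)) * Uf ξ x ^ (-(3*α))) := by rw [hctot]; ring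
    _ ≤ ENNReal.ofReal (ctot.toReal + 1) * (Jf x ^ (2*α - (d:ℝ)) * Uf ξ x ^ (-(3*α))) :=
        mul_le_mul_left hle _
    _ = ENNReal.ofReal ((ctot.toReal + 1) * jap x ^ (-((d : ℝ) - 2 * α))
          * (1 + linf x / ξ) ^ (-(3 * α))) := by
        rw [ofReal_form hξ (ctot.toReal + 1) (-((d:ℝ) - 2*α)) (-(3*α)) (by positivity) x,
          show -((d:ℝ) - 2*α) = 2*α - (d:ℝ) by ring, mul_assoc]
end

section
/- Let d ≥ 1, α > 0, ξ ∈ [1,∞), and K > 0. Suppose G : ℤ^d → [0,∞) satisfies G(x) ≤ K⟨x⟩^{-(d-α)}(1 + |x|/ξ)^{-2α} for all x ∈ ℤ^d. Then there is a constant C = C(d,α,K) > 0, independent of ξ, such that ∑_{y∈ℤ^d} G(y) ≤ C ξ^α. -/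
open scoped ENNReal NNReal BigOperators

open Real Finset


private lemma nat_pow_sub_le (q a b : ℕ) (h : b ≤ a) :
    a ^ q ≤ b ^ q + q * (a - b) * a ^ (q - 1) := by
  induction q with
  | zero => simp
  | succ q ih =>
    have h1 : a ^ (q + 1) ≤ a * (b ^ q + q * (a - b) * a ^ (q - 1)) := by
      rw [pow_succ]
      calc a ^ q * a ≤ (b ^ q + q * (a - b) * a ^ (q - 1)) * a := Nat.mul_le_mul_right a ih
        _ = a * (b ^ q + q * (a - b) * a ^ (q - 1)) := mul_comm _ _
    have h2 : q * (a - b) * (a * a ^ (q - 1)) ≤ q * (a - b) * a ^ q := by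
      cases q with
      | zero => simp
      | succ q =>
        have : a * a ^ (q + 1 - 1) = a ^ (q + 1) := by
          rw [Nat.succ_sub_one, ← pow_succ']
        rw [this]
    have h3 : a * b ^ q ≤ b ^ (q + 1) + (a - b) * a ^ q := by
      have : a * b ^ q = b * b ^ q + (a - b) * b ^ q := by
        rw [← Nat.add_mul]; congr 1; omega
      rw [this, ← pow_succ']
      exact Nat.add_le_add_left (Nat.mul_le_mul_left _ (Nat.pow_le_pow_left h q)) _
    calc a ^ (q+1) ≤ a * (b ^ q + q * (a - b) * a ^ (q - 1)) := h1
      _ = a * b ^ q + q * (a - b) * (a * a ^ (q - 1)) := by ring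
      _ ≤ b ^ (q + 1) + (a - b) * a ^ q + q * (a - b) * a ^ q := by
          exact Nat.add_le_add h3 h2
      _ = b ^ (q + 1) + (q + 1) * (a - b) * a ^ (q + 1 - 1) := by
          simp only [Nat.add_sub_cancel]; ring

private lemma shell_card_le (d m : ℕ) (hm : 1 ≤ m) :
    (2 * m + 1) ^ d ≤ (2 * m - 1) ^ d + 2 * d * 3 ^ (d - 1) * m ^ (d - 1) := by
  have h1 := nat_pow_sub_le d (2 * m + 1) (2 * m - 1) (by omega)
  have h2 : (2 * m + 1) - (2 * m - 1) = 2 := by omega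
  have h3 : (2 * m + 1) ^ (d - 1) ≤ 3 ^ (d - 1) * m ^ (d - 1) := by
    rw [← Nat.mul_pow]
    exact Nat.pow_le_pow_left (by omega) _
  calc (2 * m + 1) ^ d ≤ (2 * m - 1) ^ d + d * 2 * (2 * m + 1) ^ (d - 1) := by
        rw [h2] at h1; linarith [h1]
    _ ≤ (2 * m - 1) ^ d + 2 * d * 3 ^ (d - 1) * m ^ (d - 1) := by
        have := Nat.mul_le_mul_left (d * 2) h3
        calc (2*m-1)^d + d * 2 * (2*m+1)^(d-1) ≤ (2*m-1)^d + d * 2 * (3^(d-1)*m^(d-1)) := by omega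
          _ = (2*m-1)^d + 2*d*3^(d-1)*m^(d-1) := by ring


private lemma two_rpow_ge (α : ℝ) (hα : 0 < α) : α ≤ (2:ℝ) ^ α := by
  rcases le_or_gt α 1 with h | h
  · calc α ≤ 1 := h
      _ ≤ (2:ℝ) ^ α := Real.one_le_rpow one_le_two hα.le
  · have := one_add_mul_self_le_rpow_one_add (s := 1) (by norm_num) h.le
    norm_num at this
    calc α ≤ 1 + α := by linarith
      _ ≤ (2:ℝ) ^ α := by linarith [this]

private lemma one_le_two_rpow (α : ℝ) (hα : 0 ≤ α) : (1:ℝ) ≤ 2 ^ α :=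
  Real.one_le_rpow one_le_two hα

-- Lemma B : x^(α-1) ≤ (2^α/α) (x^α - (x-1)^α) for real x ≥ 1
private lemma telescope_low (α : ℝ) (hα : 0 < α) (x : ℝ) (hx : 1 ≤ x) (hx_aux : x = 1 ∨ 2 ≤ x) :
    x ^ (α - 1) ≤ 2 ^ α / α * (x ^ α - (x - 1) ^ α) := by
  have hx' : x = 1 ∨ 2 ≤ x := hx_aux
  have hx0 : 0 < x := lt_of_lt_of_le one_pos hx
  have hx1 : 0 ≤ x - 1 := by linarith
  have key : α * x ^ (α - 1) ≤ 2 ^ α * (x ^ α - (x - 1) ^ α) := by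
    rcases le_or_gt α 1 with hle | hgt
    · -- Bernoulli : (1 - 1/x)^α ≤ 1 - α/x
      have hs : -1 ≤ -(1/x) := by
        rw [neg_le_neg_iff]
        exact div_le_one_of_le₀ hx (by positivity)
      have hb := rpow_one_add_le_one_add_mul_self hs hα.le hle
      have hxm : (1 + -(1/x)) = (x-1)/x := by field_simp; ring
      rw [hxm, div_rpow hx1 hx0.le] at hb
      have hxa : (0:ℝ) < x ^ α := rpow_pos_of_pos hx0 _
      have hb2 : (x-1)^α ≤ x^α * (1 - α/x) := by
        have := mul_le_mul_of_nonneg_left hb hxa.le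
        rw [mul_div_cancel₀ _ (ne_of_gt hxa)] at this
        calc (x-1)^α ≤ x^α * (1 + α * -(1/x)) := this
          _ = x^α * (1 - α/x) := by ring
      have hxam : x ^ α * (α / x) = α * x ^ (α - 1) := by
        rw [Real.rpow_sub hx0, Real.rpow_one]
        field_simp
      have key1 : α * x ^ (α - 1) ≤ x ^ α - (x-1)^α := by nlinarith [hb2, hxam]
      have h2 : x ^ α - (x-1)^α ≤ 2 ^ α * (x ^ α - (x-1)^α) := by
        nlinarith [one_le_two_rpow α hα.le, key1, mul_pos hα (rpow_pos_of_pos hx0 (α-1))]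
      linarith
    · rcases hx' with heq | hx2
      · -- x = 1
        rw [heq]
        norm_num
        rw [Real.zero_rpow hα.ne']
        nlinarith [two_rpow_ge α hα]
      · -- x > 1 : Bernoulli for exponent ≥ 1
        have hxm1 : 0 < x - 1 := by linarith
        have hs : -1 ≤ 1/(x-1) := by
          have : (0:ℝ) ≤ 1/(x-1) := by positivity
          linarith
        have hb := one_add_mul_self_le_rpow_one_add hs hgt.le
        have hxm : (1 + 1/(x-1)) = x/(x-1) := by field_simp; ring
        rw [hxm, div_rpow hx0.le hxm1.le] at hb
        -- hb : 1 + α/(x-1) ≤ x^α/(x-1)^α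
        have hxa : (0:ℝ) < (x-1) ^ α := rpow_pos_of_pos hxm1 _
        have hb2 : (x-1)^α + α * (x-1)^(α-1) ≤ x^α := by
          have := mul_le_mul_of_nonneg_left hb hxa.le
          rw [mul_div_cancel₀ _ (ne_of_gt hxa)] at this
          have e : (x-1)^α * (α * (1/(x-1))) = α * (x-1)^(α-1) := by
            rw [Real.rpow_sub hxm1, Real.rpow_one]
            field_simp
          nlinarith [this, e]
        -- x^(α-1) ≤ 2^(α-1) (x-1)^(α-1)
        have hx2' : x ≤ 2 * (x - 1) := by nlinarith
        have hmono : x ^ (α-1) ≤ (2*(x-1)) ^ (α-1) :=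
          Real.rpow_le_rpow hx0.le hx2' (by linarith)
        rw [Real.mul_rpow (by norm_num) hxm1.le] at hmono
        have h2a : (2:ℝ)^(α-1) ≤ 2^α := by
          apply Real.rpow_le_rpow_of_exponent_le one_le_two
          linarith
        have hpow : (0:ℝ) ≤ (x-1)^(α-1) := rpow_nonneg hxm1.le _
        calc α * x ^ (α-1) ≤ α * (2^(α-1) * (x-1)^(α-1)) := by
              apply mul_le_mul_of_nonneg_left hmono hα.le
          _ ≤ 2^α * (α * (x-1)^(α-1)) := by
              nlinarith [mul_nonneg (mul_nonneg hα.le (sub_nonneg.mpr h2a)) hpow]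
          _ ≤ 2^α * (x^α - (x-1)^α) := by
              apply mul_le_mul_of_nonneg_left _ (rpow_nonneg (by norm_num) α)
              linarith
  calc x ^ (α-1) = (1/α) * (α * x ^ (α-1)) := by field_simp
    _ ≤ (1/α) * (2^α * (x^α - (x-1)^α)) := by
        apply mul_le_mul_of_nonneg_left key (by positivity)
    _ = 2 ^ α / α * (x ^ α - (x-1)^α) := by ring


-- Lemma C : x^(-α-1) ≤ (1/α)((x-1)^(-α) - x^(-α)) for x ≥ 2
private lemma telescope_high (α : ℝ) (hα : 0 < α) (x : ℝ) (hx : 2 ≤ x) :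
    x ^ (-α - 1) ≤ 1 / α * ((x - 1) ^ (-α) - x ^ (-α)) := by
  have hx0 : (0:ℝ) < x := by linarith
  have hxm1 : (0:ℝ) < x - 1 := by linarith
  -- key : x^(-α) + α * x^(-α-1) ≤ (x-1)^(-α)
  have key : x ^ (-α) + α * x ^ (-α - 1) ≤ (x - 1) ^ (-α) := by
    have hxa : (0:ℝ) < x ^ α := rpow_pos_of_pos hx0 _
    have hxma : (0:ℝ) < (x-1) ^ α := rpow_pos_of_pos hxm1 _
    -- suffices : (1 + α/x) * (x-1)^α ≤ x^α
    have main : (1 + α / x) * (x - 1) ^ α ≤ x ^ α := by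
      rcases le_or_gt α 1 with hle | hgt
      · -- (1-1/x)^α ≤ 1 - α/x, then (1+α/x)(1-α/x) ≤ 1
        have hs : -1 ≤ -(1/x) := by
          have : 1/x ≤ 1 := by
            apply div_le_one_of_le₀ <;> linarith
          linarith
        have hb := rpow_one_add_le_one_add_mul_self hs hα.le hle
        have hxm : (1 + -(1/x)) = (x-1)/x := by field_simp; ring
        rw [hxm, div_rpow hxm1.le hx0.le] at hb
        -- hb : (x-1)^α / x^α ≤ 1 - α/x
        have hb2 : (x-1)^α ≤ x^α * (1 - α/x) := by
          have := mul_le_mul_of_nonneg_left hb hxa.le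
          rw [mul_div_cancel₀ _ (ne_of_gt hxa)] at this
          calc (x-1)^α ≤ x^α * (1 + α * -(1/x)) := this
            _ = x^α * (1 - α/x) := by ring
        have hq : (1 + α/x) * (1 - α/x) ≤ 1 := by
          have : (0:ℝ) ≤ (α/x)^2 := sq_nonneg _
          nlinarith
        have h1 : 0 ≤ 1 + α/x := by positivity
        calc (1 + α/x) * (x-1)^α ≤ (1 + α/x) * (x^α * (1 - α/x)) :=
              mul_le_mul_of_nonneg_left hb2 h1
          _ = x^α * ((1 + α/x) * (1 - α/x)) := by ring
          _ ≤ x^α * 1 := mul_le_mul_of_nonneg_left hq hxa.le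
          _ = x^α := mul_one _
      · -- (x/(x-1))^α ≥ 1 + α/(x-1) ≥ 1 + α/x
        have hs : -1 ≤ 1/(x-1) := by
          have : (0:ℝ) ≤ 1/(x-1) := by positivity
          linarith
        have hb := one_add_mul_self_le_rpow_one_add hs hgt.le
        have hxm : (1 + 1/(x-1)) = x/(x-1) := by field_simp; ring
        rw [hxm, div_rpow hx0.le hxm1.le] at hb
        -- hb : 1 + α/(x-1) ≤ x^α/(x-1)^α
        have hcmp : α / x ≤ α / (x-1) := by
          apply div_le_div_of_nonneg_left hα.le hxm1 (by linarith)
        have hb2 : (1 + α/x) ≤ x^α / (x-1)^α := by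
          calc 1 + α/x ≤ 1 + α/(x-1) := by linarith
            _ ≤ x^α/(x-1)^α := by
                have : α * (1/(x-1)) = α/(x-1) := by ring
                linarith [hb, this.symm ▸ hb]
        calc (1 + α/x) * (x-1)^α ≤ (x^α/(x-1)^α) * (x-1)^α :=
              mul_le_mul_of_nonneg_right hb2 hxma.le
          _ = x^α := by field_simp
    -- convert main to the -α form
    have e1 : x ^ (-α) = (x^α)⁻¹ := Real.rpow_neg hx0.le α
    have e2 : (x-1) ^ (-α) = ((x-1)^α)⁻¹ := Real.rpow_neg hxm1.le α
    have e3 : x ^ (-α - 1) = (x^α)⁻¹ / x := by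
      rw [Real.rpow_sub hx0, Real.rpow_one, e1]
    rw [e1, e2, e3]
    have eL : (x^α)⁻¹ + α * ((x^α)⁻¹ / x) = (1 + α/x) / x^α := by
      field_simp
    rw [eL, inv_eq_one_div, div_le_div_iff₀ hxa hxma]
    linarith [main]
  have h2 : α * x ^ (-α - 1) ≤ (x-1)^(-α) - x^(-α) := by linarith
  calc x ^ (-α - 1) = (1/α) * (α * x ^ (-α - 1)) := by field_simp
    _ ≤ 1/α * ((x-1)^(-α) - x^(-α)) := mul_le_mul_of_nonneg_left h2 (by positivity)




private lemma core_sum (α : ℝ) (hα : 0 < α) (ξ : ℝ) (hξ : 1 ≤ ξ) (M : ℕ) :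
    ∑ i ∈ Finset.range M, (((i:ℝ) + 1)) ^ (α - 1) * (1 + ((i:ℝ) + 1) / ξ) ^ (-(2 * α))
      ≤ ((4:ℝ) ^ α + 1) / α * ξ ^ α := by
  have hξ0 : (0:ℝ) < ξ := by linarith
  set N : ℕ := ⌈ξ⌉₊ with hN
  have hN1 : 1 ≤ N := Nat.one_le_ceil_iff.mpr hξ0
  have hNξ : ξ ≤ (N:ℝ) := Nat.le_ceil ξ
  have hN2 : (N:ℝ) ≤ 2 * ξ := by
    have := Nat.ceil_lt_add_one (le_of_lt hξ0)
    have h2 : (N:ℝ) < ξ + 1 := this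
    linarith
  set F : ℕ → ℝ := fun j => ((min j N : ℕ) : ℝ) ^ α with hF
  set G : ℕ → ℝ := fun j => ((max j N : ℕ) : ℝ) ^ (-α) with hG
  have hterm : ∀ i ∈ Finset.range M,
      (((i:ℝ) + 1)) ^ (α - 1) * (1 + ((i:ℝ) + 1) / ξ) ^ (-(2 * α))
        ≤ 2 ^ α / α * (F (i+1) - F i) + ξ ^ (2*α) / α * (G i - G (i+1)) := by
    intro i _
    set x : ℝ := (i:ℝ) + 1 with hx
    have hx1 : 1 ≤ x := by
      rw [hx]; have : (0:ℝ) ≤ (i:ℝ) := Nat.cast_nonneg i; linarith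
    have hx0 : 0 < x := by positivity
    rcases le_or_gt (i+1) N with h | h
    · -- low regime
      have hFi1 : F (i+1) = x ^ α := by
        rw [hF]; simp only [min_eq_left h]; push_cast; ring_nf; rw [hx, add_comm]
      have hFi : F i = ((i:ℝ)) ^ α := by
        rw [hF]; simp only [min_eq_left (by omega : i ≤ N)]
      have hGi : G i = G (i+1) := by
        rw [hG]; simp only [max_eq_right (by omega : i ≤ N), max_eq_right h]
      have hbd : (1 + x / ξ) ^ (-(2 * α)) ≤ 1 := by
        apply Real.rpow_le_one_of_one_le_of_nonpos
        · have : 0 ≤ x / ξ := by positivity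
          linarith
        · linarith
      have h1 : x ^ (α - 1) * (1 + x / ξ) ^ (-(2 * α)) ≤ x ^ (α - 1) := by
        have := mul_le_mul_of_nonneg_left hbd (rpow_nonneg hx0.le (α - 1))
        simpa using this
      have h2 := telescope_low α hα x hx1 (by
        rcases Nat.eq_zero_or_pos i with h0 | h0
        · left; rw [hx, h0]; norm_num
        · right; rw [hx]; have : (1:ℝ) ≤ (i:ℝ) := by exact_mod_cast h0
          linarith)
      have hx_sub : x - 1 = (i:ℝ) := by rw [hx]; ring
      rw [hx_sub] at h2
      rw [hGi, hFi1, hFi]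
      have : ξ ^ (2*α) / α * (G (i+1) - G (i+1)) = 0 := by ring
      rw [this]
      linarith
    · -- high regime
      have hiN : N ≤ i := by omega
      have hFi1 : F (i+1) = ((N:ℕ):ℝ) ^ α := by
        rw [hF]; simp only [min_eq_right (by omega : N ≤ i+1)]
      have hFi : F i = ((N:ℕ):ℝ) ^ α := by
        rw [hF]; simp only [min_eq_right hiN]
      have hGi : G i = ((i:ℝ)) ^ (-α) := by
        rw [hG]; simp only [max_eq_left hiN]
      have hGi1 : G (i+1) = x ^ (-α) := by
        rw [hG]; simp only [max_eq_left (by omega : N ≤ i+1)]; push_cast; ring_nf; rw [hx, add_comm]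
      have hx2 : 2 ≤ x := by
        have : (1:ℝ) ≤ (i:ℝ) := by exact_mod_cast (by omega : 1 ≤ i)
        rw [hx]; linarith
      -- bound the decay factor
      have hxξ : 0 < x / ξ := by positivity
      have hbd : (1 + x / ξ) ^ (-(2 * α)) ≤ (x / ξ) ^ (-(2 * α)) := by
        apply Real.rpow_le_rpow_of_nonpos hxξ (by linarith) (by linarith)
      have hdiv : (x / ξ) ^ (-(2 * α)) = ξ ^ (2*α) * x ^ (-(2*α)) := by
        rw [Real.div_rpow hx0.le hξ0.le, Real.rpow_neg hξ0.le, Real.rpow_neg hx0.le]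
        field_simp
      have hcomb : x ^ (α - 1) * x ^ (-(2*α)) = x ^ (-α - 1) := by
        rw [← Real.rpow_add hx0]; ring_nf
      have h1 : x ^ (α - 1) * (1 + x / ξ) ^ (-(2 * α)) ≤ ξ ^ (2*α) * x ^ (-α-1) := by
        calc x ^ (α - 1) * (1 + x / ξ) ^ (-(2 * α))
            ≤ x ^ (α - 1) * (x / ξ) ^ (-(2 * α)) :=
              mul_le_mul_of_nonneg_left hbd (rpow_nonneg hx0.le _)
          _ = ξ ^ (2*α) * (x ^ (α-1) * x ^ (-(2*α))) := by rw [hdiv]; ring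
          _ = ξ ^ (2*α) * x ^ (-α-1) := by rw [hcomb]
      have h2 := telescope_high α hα x hx2
      have hx_sub : x - 1 = (i:ℝ) := by rw [hx]; ring
      rw [hx_sub] at h2
      rw [hFi1, hFi, hGi, hGi1]
      have hz : 2 ^ α / α * (((N:ℕ):ℝ) ^ α - ((N:ℕ):ℝ) ^ α) = 0 := by ring
      rw [hz, zero_add]
      have hξa : 0 ≤ ξ ^ (2*α) := rpow_nonneg hξ0.le _
      calc x ^ (α - 1) * (1 + x / ξ) ^ (-(2 * α)) ≤ ξ ^ (2*α) * x ^ (-α-1) := h1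
        _ ≤ ξ ^ (2*α) * (1/α * ((i:ℝ) ^ (-α) - x ^ (-α))) := mul_le_mul_of_nonneg_left h2 hξa
        _ = ξ ^ (2*α) / α * ((i:ℝ) ^ (-α) - x ^ (-α)) := by ring
  have hsum := Finset.sum_le_sum hterm
  have hF_tel : ∑ i ∈ Finset.range M, (F (i+1) - F i) = F M - F 0 :=
    Finset.sum_range_sub F M
  have hG_tel : ∑ i ∈ Finset.range M, (G i - G (i+1)) = G 0 - G M :=
    Finset.sum_range_sub' G M
  have hsplit : ∑ i ∈ Finset.range M,
      (2 ^ α / α * (F (i+1) - F i) + ξ ^ (2*α) / α * (G i - G (i+1)))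
      = 2 ^ α / α * (F M - F 0) + ξ ^ (2*α) / α * (G 0 - G M) := by
    rw [Finset.sum_add_distrib, ← Finset.mul_sum, ← Finset.mul_sum, hF_tel, hG_tel]
  rw [hsplit] at hsum
  -- endpoint bounds
  have hF0 : F 0 = 0 := by
    rw [hF]; simp only [min_eq_left (Nat.zero_le N)]
    simp [Real.zero_rpow hα.ne']
  have hFM : F M ≤ 2 ^ α * ξ ^ α := by
    rw [hF]
    have h1 : ((min M N : ℕ):ℝ) ≤ (N:ℝ) := by exact_mod_cast min_le_right M N
    have h2 : ((min M N : ℕ):ℝ) ^ α ≤ (N:ℝ) ^ α :=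
      Real.rpow_le_rpow (by positivity) h1 hα.le
    have h3 : (N:ℝ) ^ α ≤ (2*ξ) ^ α := Real.rpow_le_rpow (by positivity) hN2 hα.le
    rw [Real.mul_rpow (by norm_num) hξ0.le] at h3
    linarith
  have hG0 : G 0 ≤ ξ ^ (-α) := by
    rw [hG]; simp only [max_eq_right (Nat.zero_le N)]
    exact Real.rpow_le_rpow_of_nonpos hξ0 hNξ (by linarith)
  have hGM : 0 ≤ G M := by
    rw [hG]
    apply rpow_nonneg
    positivity
  have hend : 2 ^ α / α * (F M - F 0) + ξ ^ (2*α) / α * (G 0 - G M)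
      ≤ ((4:ℝ) ^ α + 1) / α * ξ ^ α := by
    have h4 : (2:ℝ) ^ α * (2 ^ α * ξ ^ α) = 4 ^ α * ξ ^ α := by
      rw [← mul_assoc, ← Real.mul_rpow (by norm_num : (0:ℝ) ≤ 2) (by norm_num : (0:ℝ) ≤ 2)]
      norm_num
    have h5 : ξ ^ (2*α) * ξ ^ (-α) = ξ ^ α := by
      rw [← Real.rpow_add hξ0]; ring_nf
    have h2pos : (0:ℝ) < 2 ^ α := rpow_pos_of_pos (by norm_num) _
    have hξ2pos : (0:ℝ) ≤ ξ ^ (2*α) := rpow_nonneg hξ0.le _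
    have e1 : 2 ^ α / α * (F M - F 0) ≤ 4 ^ α / α * ξ ^ α := by
      rw [hF0, sub_zero]
      calc 2 ^ α / α * F M ≤ 2 ^ α / α * (2 ^ α * ξ ^ α) := by
            apply mul_le_mul_of_nonneg_left hFM (by positivity)
        _ = 4 ^ α / α * ξ ^ α := by rw [div_mul_eq_mul_div, h4]; ring
    have e2 : ξ ^ (2*α) / α * (G 0 - G M) ≤ 1 / α * ξ ^ α := by
      calc ξ ^ (2*α) / α * (G 0 - G M) ≤ ξ ^ (2*α) / α * ξ ^ (-α) := by
            apply mul_le_mul_of_nonneg_left _ (div_nonneg hξ2pos hα.le)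
            linarith
        _ = 1 / α * (ξ ^ (2*α) * ξ ^ (-α)) := by ring
        _ = 1 / α * ξ ^ α := by rw [h5]
    calc 2 ^ α / α * (F M - F 0) + ξ ^ (2*α) / α * (G 0 - G M)
        ≤ 4 ^ α / α * ξ ^ α + 1 / α * ξ ^ α := add_le_add e1 e2
      _ = ((4:ℝ) ^ α + 1) / α * ξ ^ α := by ring
  linarith



private def nvalz {d : ℕ} (y : Fin d → ℤ) : ℕ := Finset.univ.sup fun i => (y i).natAbs

private noncomputable def boxZ (d M : ℕ) : Finset (Fin d → ℤ) :=
  Fintype.piFinset fun _ => Finset.Icc (-(M:ℤ)) (M:ℤ)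

private lemma mem_boxZ {d M : ℕ} {y : Fin d → ℤ} : y ∈ boxZ d M ↔ nvalz y ≤ M := by
  simp only [boxZ, Fintype.mem_piFinset, Finset.mem_Icc, nvalz, Finset.sup_le_iff,
    Finset.mem_univ, true_implies]
  constructor
  · intro h i
    have := h i
    omega
  · intro h i
    have := h i
    omega

private lemma card_boxZ (d M : ℕ) : (boxZ d M).card = (2 * M + 1) ^ d := by
  simp only [boxZ, Fintype.card_piFinset, Int.card_Icc]
  rw [Finset.prod_const, Finset.card_univ, Fintype.card_fin]
  congr 1
  omega

private lemma box_sum (d : ℕ) (b : ℕ → ℝ) (hb : ∀ m, 0 ≤ b m) (M : ℕ) :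
    ∑ y ∈ boxZ d M, b (nvalz y)
      ≤ b 0 + ∑ i ∈ Finset.range M, ((2 * d * 3 ^ (d-1) * (i+1) ^ (d-1) : ℕ) : ℝ) * b (i+1) := by
  induction M with
  | zero =>
    have he : ∀ y ∈ boxZ d 0, b (nvalz y) = b 0 := fun y hy => by
      rw [Nat.le_zero.mp (mem_boxZ.mp hy)]
    rw [Finset.sum_congr rfl he, Finset.sum_const, card_boxZ]
    simp
  | succ M ih =>
    have hsub : boxZ d M ⊆ boxZ d (M+1) := fun y hy =>
      mem_boxZ.mpr (le_trans (mem_boxZ.mp hy) (by omega))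
    rw [← Finset.sum_sdiff hsub]
    have hshell : ∀ y ∈ boxZ d (M+1) \ boxZ d M, b (nvalz y) = b (M+1) := by
      intro y hy
      rw [Finset.mem_sdiff] at hy
      have h1 := mem_boxZ.mp hy.1
      have h2 : ¬ nvalz y ≤ M := fun h => hy.2 (mem_boxZ.mpr h)
      congr 1
      omega
    have hcard : (boxZ d (M+1) \ boxZ d M).card = (2*(M+1)+1)^d - (2*M+1)^d := by
      rw [Finset.card_sdiff_of_subset hsub, card_boxZ, card_boxZ]
    have hcard_le : (boxZ d (M+1) \ boxZ d M).card ≤ 2 * d * 3 ^ (d-1) * (M+1) ^ (d-1) := by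
      rw [hcard]
      have := shell_card_le d (M+1) (by omega)
      have e1 : 2 * (M+1) - 1 = 2 * M + 1 := by omega
      rw [e1] at this
      omega
    have hsd : ∑ y ∈ boxZ d (M+1) \ boxZ d M, b (nvalz y)
        ≤ ((2 * d * 3 ^ (d-1) * (M+1) ^ (d-1) : ℕ) : ℝ) * b (M+1) := by
      rw [Finset.sum_congr rfl hshell, Finset.sum_const, nsmul_eq_mul]
      apply mul_le_mul_of_nonneg_right _ (hb _)
      exact_mod_cast hcard_le
    rw [Finset.sum_range_succ]
    linarith [ih, hsd]


/-- Summation estimate: if `G(x) ≤ K ⟨x⟩^{-(d-α)} (1+|x|/ξ)^{-2α}` with `ξ ≥ 1`, then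
`∑_y G(y) ≤ C ξ^α`, with `C = C(d,α,K)` independent of `ξ`. -/
theorem sum_bound (d : ℕ) (hd : 1 ≤ d) (α K : ℝ) (hα : 0 < α) (hK : 0 < K) :
    ∃ C : ℝ, 0 < C ∧
      ∀ (ξ : ℝ), 1 ≤ ξ →
        ∀ G : (Fin d → ℤ) → ℝ≥0,
          (∀ x : Fin d → ℤ,
            (G x : ℝ) ≤ K * jap x ^ (-((d : ℝ) - α)) * (1 + linf x / ξ) ^ (-(2 * α))) →
          (∑' y : Fin d → ℤ, (G y : ℝ≥0∞)) ≤ ENNReal.ofReal (C * ξ ^ α) := by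
  set cc : ℕ := 2 * d * 3 ^ (d-1) with hcc
  refine ⟨K * (1 + (cc : ℝ) * (((4:ℝ) ^ α + 1) / α)), ?_, ?_⟩
  · have h4 : (0:ℝ) < 4 ^ α := rpow_pos_of_pos (by norm_num) _
    have hcc0 : (0:ℝ) ≤ (cc : ℝ) := Nat.cast_nonneg _
    have h5 : (0:ℝ) < ((4:ℝ) ^ α + 1) / α := by positivity
    have h6 : (0:ℝ) < 1 + (cc : ℝ) * (((4:ℝ) ^ α + 1) / α) := by nlinarith
    exact mul_pos hK h6
  intro ξ hξ G hG
  have hξ0 : (0:ℝ) < ξ := by linarith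
  -- the bound as a function of nvalz
  set b : ℕ → ℝ := fun m =>
    K * (max ((m:ℕ):ℝ) 1) ^ (-((d : ℝ) - α)) * (1 + ((m:ℕ):ℝ) / ξ) ^ (-(2 * α)) with hb
  have hb_nonneg : ∀ m, 0 ≤ b m := by
    intro m
    have h1 : (0:ℝ) ≤ max ((m:ℕ):ℝ) 1 := le_trans zero_le_one (le_max_right _ _)
    have h2 : (0:ℝ) ≤ 1 + ((m:ℕ):ℝ) / ξ := by positivity
    rw [hb]
    positivity
  have hGb : ∀ x : Fin d → ℤ, (G x : ℝ) ≤ b (nvalz x) := by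
    intro x
    have := hG x
    simpa only [hb, linf, jap, nvalz] using this
  -- the master real bound
  have master : ∀ M : ℕ, ∑ y ∈ boxZ d M, b (nvalz y)
      ≤ K * (1 + (cc : ℝ) * (((4:ℝ) ^ α + 1) / α)) * ξ ^ α := by
    intro M
    have hb0 : b 0 = K := by
      rw [hb]
      norm_num
    have hterm : ∀ i : ℕ, ((cc * (i+1) ^ (d-1) : ℕ) : ℝ) * b (i+1)
        = (cc : ℝ) * K * ((((i:ℝ)+1)) ^ (α - 1) * (1 + ((i:ℝ)+1) / ξ) ^ (-(2 * α))) := by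
      intro i
      have hx0 : (0:ℝ) < ((i:ℝ)+1) := by positivity
      have hmax : ((i:ℝ)+1) ⊔ 1 = ((i:ℝ)+1) :=
        max_eq_left (by linarith [Nat.cast_nonneg (α := ℝ) i])
      have hpow : (((i:ℝ)+1)) ^ ((d:ℝ) - 1) * (((i:ℝ)+1)) ^ (-((d : ℝ) - α))
          = (((i:ℝ)+1)) ^ (α - 1) := by
        rw [← Real.rpow_add hx0]
        ring_nf
      have hcast : (((i:ℝ)+1)) ^ ((d-1 : ℕ)) = (((i:ℝ)+1)) ^ ((d:ℝ) - 1) := by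
        rw [← Real.rpow_natCast (((i:ℝ)+1)) (d-1)]
        congr 1
        have : ((d - 1 : ℕ) : ℝ) = (d:ℝ) - 1 := by
          have := Nat.cast_sub hd (R := ℝ)
          simpa using this
        rw [this]
      rw [hb]
      push_cast
      rw [hmax, hcast, ← hpow]
      ring
    have hccK : (0:ℝ) ≤ (cc : ℝ) * K := mul_nonneg (Nat.cast_nonneg _) hK.le
    have hξα : 1 ≤ ξ ^ α := Real.one_le_rpow hξ hα.le
    have hKξ : K * 1 ≤ K * ξ ^ α := mul_le_mul_of_nonneg_left hξα hK.le
    calc ∑ y ∈ boxZ d M, b (nvalz y)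
        ≤ b 0 + ∑ i ∈ Finset.range M, ((cc * (i+1) ^ (d-1) : ℕ) : ℝ) * b (i+1) :=
          box_sum d b hb_nonneg M
      _ = K + (cc:ℝ) * K * ∑ i ∈ Finset.range M,
            (((i:ℝ)+1)) ^ (α - 1) * (1 + ((i:ℝ)+1) / ξ) ^ (-(2 * α)) := by
          rw [hb0, Finset.mul_sum, Finset.sum_congr rfl fun i _ => hterm i]
      _ ≤ K + (cc:ℝ) * K * ((((4:ℝ) ^ α + 1) / α) * ξ ^ α) := by
          have := mul_le_mul_of_nonneg_left (core_sum α hα ξ hξ M) hccK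
          linarith
      _ ≤ K * (1 + (cc : ℝ) * (((4:ℝ) ^ α + 1) / α)) * ξ ^ α := by
          have : K * (1 + (cc : ℝ) * (((4:ℝ) ^ α + 1) / α)) * ξ ^ α
              = K * ξ ^ α + (cc:ℝ) * K * ((((4:ℝ) ^ α + 1) / α) * ξ ^ α) := by ring
          linarith
  -- assemble in ℝ≥0∞
  rw [ENNReal.tsum_eq_iSup_sum]
  apply iSup_le
  intro s
  set M : ℕ := s.sup nvalz with hM
  have hs : s ⊆ boxZ d M := fun y hy => mem_boxZ.mpr (Finset.le_sup hy)
  calc ∑ y ∈ s, (G y : ℝ≥0∞)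
      ≤ ∑ y ∈ s, ENNReal.ofReal (b (nvalz y)) := by
        apply Finset.sum_le_sum
        intro y _
        rw [← ENNReal.ofReal_coe_nnreal]
        exact ENNReal.ofReal_le_ofReal (hGb y)
    _ ≤ ∑ y ∈ boxZ d M, ENNReal.ofReal (b (nvalz y)) :=
        Finset.sum_le_sum_of_subset hs
    _ = ENNReal.ofReal (∑ y ∈ boxZ d M, b (nvalz y)) :=
        (ENNReal.ofReal_sum_of_nonneg fun y _ => hb_nonneg _).symm
    _ ≤ ENNReal.ofReal (K * (1 + (cc : ℝ) * (((4:ℝ) ^ α + 1) / α)) * ξ ^ α) :=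
        ENNReal.ofReal_le_ofReal (master M)
end
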